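/- arXiv:2209.12634 — 11 statements merged into one kernel-verified Lean document; each statement's English description precedes it below -/
import Mathlib

section
/- Let r ≥ 0 and let z be a critical point of the functional F_r. Then z has only finitely many zeros in [0,1), each of them simple (z' does not vanish there). Define t_z : [0,1] → [0,1] by t_z(τ) = ‖z‖^{−2}·∫₀^τ z(σ)² dσ, let τ_z : [0,1] → [0,1] be its inverse, and let q(t) = z(τ_z(t))² be the Levi-Civita transform of z, extended 1-periodically to ℝ. Then the mean value q̄ := ∫₀¹ q(t)dt equals ‖z²‖²/‖z‖², and for every t with q(t) > 0 the function q is twice differentiable at t with q̈(t) = −2/q(t)² − r/q̄². -/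
open Set
open Filter Topology

/-- At a critical point `z` of `F_r`, the zeros of `z` in `[0,1)` are
finitely many and simple; the Levi-Civita transform `q(t) = z(τ_z(t))²` (extended
1-periodically), where `τ_z` inverts `t_z(τ) = ‖z‖⁻²∫₀^τ z²`, has mean `‖z²‖²/‖z‖²`
and satisfies `q̈ = −2/q² − r/q̄²` wherever `q > 0`. -/
theorem stmt2
    (r : ℝ) (hr : 0 ≤ r)
    (z : ℝ → ℝ)
    (hz : ContDiff ℝ (⊤ : ℕ∞) z)
    (hzper : ∀ τ, z (τ + 1) = z τ)
    (Z Zp Z2 a b : ℝ)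
    (hZ : Z = ∫ τ in (0:ℝ)..1, (z τ) ^ 2)
    (hZp : Zp = ∫ τ in (0:ℝ)..1, (deriv z τ) ^ 2)
    (hZ2 : Z2 = ∫ τ in (0:ℝ)..1, (z τ) ^ 4)
    (hZpos : 0 < Z)
    (hb : b = 1 / Z ^ 3 - Zp / Z - r / (2 * Z * Z2))
    (ha : a = r / (2 * Z2 ^ 2))
    (hode : ∀ τ, deriv (deriv z) τ = -b * z τ - 2 * a * (z τ) ^ 3)
    (tz : ℝ → ℝ)
    (htz : ∀ τ, tz τ = (∫ σ in (0:ℝ)..τ, (z σ) ^ 2) / Z) :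
    {τ ∈ Ico (0:ℝ) 1 | z τ = 0}.Finite ∧
    (∀ τ ∈ Ico (0:ℝ) 1, z τ = 0 → deriv z τ ≠ 0) ∧
    ∃ τz : ℝ → ℝ,
      (∀ τ ∈ Icc (0:ℝ) 1, τz (tz τ) = τ) ∧
      (∀ t ∈ Icc (0:ℝ) 1, τz t ∈ Icc (0:ℝ) 1 ∧ tz (τz t) = t) ∧
      ∀ q : ℝ → ℝ,
        (∀ t ∈ Ico (0:ℝ) 1, q t = (z (τz t)) ^ 2) →
        (∀ t, q (t + 1) = q t) →
        (∫ t in (0:ℝ)..1, q t) = Z2 / Z ∧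
        ∀ t, 0 < q t →
          DifferentiableAt ℝ q t ∧ DifferentiableAt ℝ (deriv q) t ∧
          deriv (deriv q) t = -2 / (q t) ^ 2 - r / (Z2 / Z) ^ 2 := by
  -- basic facts about z
  have hzc : Continuous z := hz.continuous
  have hzdiff : Differentiable ℝ z := (contDiff_infty_iff_deriv.mp (hz.of_le (by simp))).1
  have hzd : ∀ x, HasDerivAt z (deriv z x) x := fun x => (hzdiff x).hasDerivAt
  have hz' : ContDiff ℝ (⊤:ℕ∞) (deriv z) := (contDiff_infty_iff_deriv.mp (hz.of_le (by simp))).2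
  have hz'c : Continuous (deriv z) := hz'.continuous
  have hz'd : ∀ x, HasDerivAt (deriv z) (deriv (deriv z) x) x :=
    fun x => ((hz'.differentiable (by simp)) x).hasDerivAt
  have hZne : Z ≠ 0 := ne_of_gt hZpos
  have hzP : Function.Periodic z 1 := hzper
  -- Z2 is positive
  have hZ2pos : 0 < Z2 := by
    have hex : ∃ c ∈ Icc (0:ℝ) 1, z c ≠ 0 := by
      by_contra h
      push_neg at h
      have : Z = 0 := by
        rw [hZ, intervalIntegral.integral_congr (g := fun _ => (0:ℝ))
          (fun x hx => by
            rw [uIcc_of_le (by norm_num : (0:ℝ) ≤ 1)] at hx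
            simp [h x hx])]
        simp
      exact absurd this hZne
    obtain ⟨c, hc, hcne⟩ := hex
    rw [hZ2]
    apply intervalIntegral.integral_pos (by norm_num)
    · exact ((hzc.pow 4).continuousOn)
    · intro x _; positivity
    · exact ⟨c, hc, by positivity⟩
  have hZ2ne : Z2 ≠ 0 := ne_of_gt hZ2pos
  -- energy conservation
  have he : ∀ τ, (deriv z τ) ^ 2 + b * (z τ) ^ 2 + a * (z τ) ^ 4 = 1 / Z ^ 2 := by
    have hed : ∀ τ, HasDerivAt
        (fun x => (deriv z x) ^ 2 + b * (z x) ^ 2 + a * (z x) ^ 4) 0 τ := by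
      intro τ
      have h1 : HasDerivAt (fun x => (deriv z x) ^ 2)
          (2 * deriv z τ * deriv (deriv z) τ) τ := by
        simpa using (hz'd τ).fun_pow 2
      have h2 : HasDerivAt (fun x => b * (z x) ^ 2)
          (b * (2 * z τ * deriv z τ)) τ := by
        have := ((hzd τ).pow 2).const_mul b
        simpa using this
      have h3 : HasDerivAt (fun x => a * (z x) ^ 4)
          (a * (4 * (z τ) ^ 3 * deriv z τ)) τ := by
        have := ((hzd τ).pow 4).const_mul a
        simpa using this
      have h4 := (h1.add h2).add h3
      have h5 : 2 * deriv z τ * deriv (deriv z) τ + b * (2 * z τ * deriv z τ)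
          + a * (4 * (z τ) ^ 3 * deriv z τ) = 0 := by
        rw [hode τ]; ring
      rw [h5] at h4
      exact h4
    have hconst : ∀ τ, (deriv z τ) ^ 2 + b * (z τ) ^ 2 + a * (z τ) ^ 4
        = (deriv z 0) ^ 2 + b * (z 0) ^ 2 + a * (z 0) ^ 4 :=
      fun τ => is_const_of_deriv_eq_zero (fun x => (hed x).differentiableAt)
        (fun x => (hed x).deriv) τ 0
    have i1 : IntervalIntegrable (fun τ => (deriv z τ) ^ 2) MeasureTheory.volume 0 1 :=
      (hz'c.pow 2).intervalIntegrable 0 1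
    have i2 : IntervalIntegrable (fun τ => b * (z τ) ^ 2) MeasureTheory.volume 0 1 :=
      (continuous_const.mul (hzc.pow 2)).intervalIntegrable 0 1
    have i3 : IntervalIntegrable (fun τ => a * (z τ) ^ 4) MeasureTheory.volume 0 1 :=
      (continuous_const.mul (hzc.pow 4)).intervalIntegrable 0 1
    have hint : (∫ τ in (0:ℝ)..1, ((deriv z τ) ^ 2 + b * (z τ) ^ 2 + a * (z τ) ^ 4))
        = Zp + b * Z + a * Z2 := by
      rw [show (fun τ => (deriv z τ) ^ 2 + b * (z τ) ^ 2 + a * (z τ) ^ 4)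
          = fun τ => ((deriv z τ) ^ 2 + b * (z τ) ^ 2) + a * (z τ) ^ 4 from rfl]
      rw [intervalIntegral.integral_add (i1.add i2) i3, intervalIntegral.integral_add i1 i2,
        intervalIntegral.integral_const_mul, intervalIntegral.integral_const_mul]
      rw [hZp, hZ, hZ2]
    have hzero : (deriv z 0) ^ 2 + b * (z 0) ^ 2 + a * (z 0) ^ 4 = Zp + b * Z + a * Z2 := by
      rw [← hint]
      rw [intervalIntegral.integral_congr (g := fun _ =>
        (deriv z 0) ^ 2 + b * (z 0) ^ 2 + a * (z 0) ^ 4) (fun x _ => hconst x)]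
      simp
    have halg : Zp + b * Z + a * Z2 = 1 / Z ^ 2 := by
      rw [hb, ha]
      field_simp
      ring
    intro τ
    rw [hconst τ, hzero, halg]
  -- zeros are simple, globally
  have hsimple : ∀ τ, z τ = 0 → deriv z τ ≠ 0 := by
    intro τ h0 h1
    have h2 := he τ
    rw [h0, h1] at h2
    have : (0:ℝ) < 1 / Z ^ 2 := by positivity
    rw [← h2] at this
    norm_num at this
  -- finiteness of zeros
  have hfin : {τ ∈ Ico (0:ℝ) 1 | z τ = 0}.Finite := by
    by_contra hinf
    have hS : {τ ∈ Ico (0:ℝ) 1 | z τ = 0}.Infinite := hinf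
    obtain ⟨x, hxK, hacc⟩ := hS.exists_accPt_of_subset_isCompact isCompact_Icc
      (fun y hy => ⟨hy.1.1, hy.1.2.le⟩)
    have hne : (𝓝[≠] x ⊓ Filter.principal {τ ∈ Ico (0:ℝ) 1 | z τ = 0}).NeBot := hacc
    have hzx : z x = 0 := by
      have hcp : ClusterPt x (Filter.principal {τ ∈ Ico (0:ℝ) 1 | z τ = 0}) :=
        hne.mono (inf_le_inf_right _ nhdsWithin_le_nhds)
      have hx : x ∈ closure {τ ∈ Ico (0:ℝ) 1 | z τ = 0} :=
        mem_closure_iff_clusterPt.mpr hcp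
      have hsub : {τ ∈ Ico (0:ℝ) 1 | z τ = 0} ⊆ {y : ℝ | z y = 0} := fun y hy => hy.2
      have hcl : IsClosed {y : ℝ | z y = 0} := isClosed_eq hzc continuous_const
      exact (closure_minimal hsub hcl) hx
    have t1 : Filter.Tendsto (slope z x)
        (𝓝[≠] x ⊓ Filter.principal {τ ∈ Ico (0:ℝ) 1 | z τ = 0}) (𝓝 (deriv z x)) :=
      (hasDerivAt_iff_tendsto_slope.mp (hzd x)).mono_left inf_le_left
    have t2 : Filter.Tendsto (slope z x)
        (𝓝[≠] x ⊓ Filter.principal {τ ∈ Ico (0:ℝ) 1 | z τ = 0}) (𝓝 0) := by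
      refine Filter.Tendsto.congr' ?_ tendsto_const_nhds
      have hmem : {τ ∈ Ico (0:ℝ) 1 | z τ = 0}
          ∈ 𝓝[≠] x ⊓ Filter.principal {τ ∈ Ico (0:ℝ) 1 | z τ = 0} :=
        Filter.mem_inf_of_right (Filter.mem_principal_self _)
      filter_upwards [hmem] with y hy
      simp [slope_def_field, hy.2, hzx]
    exact hsimple x hzx (tendsto_nhds_unique t1 t2)
  -- tz facts
  have htzd : ∀ τ, HasDerivAt tz ((z τ) ^ 2 / Z) τ := by
    intro τ
    have h1 : HasDerivAt (fun u => ∫ σ in (0:ℝ)..u, (z σ) ^ 2) ((z τ) ^ 2) τ :=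
      ((hzc.pow 2).integral_hasStrictDerivAt 0 τ).hasDerivAt
    have h2 := h1.div_const Z
    have : tz = fun u => (∫ σ in (0:ℝ)..u, (z σ) ^ 2) / Z := funext htz
    rw [this]
    exact h2
  have htzc : Continuous tz := by
    rw [continuous_iff_continuousAt]; exact fun τ => (htzd τ).continuousAt
  have htz0 : tz 0 = 0 := by rw [htz]; simp
  have htz1 : tz 1 = 1 := by rw [htz, ← hZ, div_self hZne]
  have hP2 : Function.Periodic (fun σ => (z σ) ^ 2) 1 := fun σ => by simp [hzper σ]
  have hshift : ∀ τ, tz (τ + 1) = tz τ + 1 := by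
    intro τ
    have hadj : (∫ σ in (0:ℝ)..τ, (z σ) ^ 2) + (∫ σ in τ..(τ+1), (z σ) ^ 2)
        = ∫ σ in (0:ℝ)..(τ+1), (z σ) ^ 2 :=
      intervalIntegral.integral_add_adjacent_intervals
        ((hzc.pow 2).intervalIntegrable _ _) ((hzc.pow 2).intervalIntegrable _ _)
    have hper : (∫ σ in τ..(τ+1), (z σ) ^ 2) = ∫ σ in (0:ℝ)..(0+1:ℝ), (z σ) ^ 2 :=
      hP2.intervalIntegral_add_eq τ 0
    have h01 : ((0:ℝ) + 1) = 1 := by norm_num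
    rw [h01] at hper
    rw [htz, htz, ← hadj, hper, ← hZ, add_div, div_self hZne]
  have hintshift : ∀ (x : ℝ) (n : ℤ), tz (x - n) = tz x - n := by
    have hP : Function.Periodic (fun τ => tz τ - τ) 1 := fun τ => by
      simp only []
      rw [hshift τ]; ring
    intro x n
    have := hP.sub_int_mul_eq (x := x) n
    simp at this
    linarith
  have hmono : StrictMono tz := by
    intro τ₁ τ₂ hlt
    have hex : ∃ c ∈ Icc τ₁ τ₂, (0:ℝ) < (z c) ^ 2 := by
      by_contra h
      push_neg at h
      have hzero : ∀ c ∈ Icc τ₁ τ₂, z c = 0 := by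
        intro c hc
        have h1 := h c hc
        nlinarith [sq_nonneg (z c)]
      set m := (τ₁ + τ₂) / 2 with hm
      have hmm : m ∈ Ioo τ₁ τ₂ := ⟨by rw [hm]; linarith, by rw [hm]; linarith⟩
      have hev : z =ᶠ[𝓝 m] (fun _ => 0) := by
        filter_upwards [isOpen_Ioo.mem_nhds hmm] with y hy
        exact hzero y (Ioo_subset_Icc_self hy)
      have hd0 : deriv z m = 0 := by
        rw [hev.deriv_eq]; simp
      exact hsimple m (hzero m (Ioo_subset_Icc_self hmm)) hd0
    obtain ⟨c, hc, hcpos⟩ := hex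
    have hpos : 0 < ∫ σ in τ₁..τ₂, (z σ) ^ 2 :=
      intervalIntegral.integral_pos hlt ((hzc.pow 2).continuousOn)
        (fun x _ => sq_nonneg _) ⟨c, hc, hcpos⟩
    have hsub : tz τ₂ - tz τ₁ = (∫ σ in τ₁..τ₂, (z σ) ^ 2) / Z := by
      rw [htz, htz, div_sub_div_same]
      congr 1
      exact intervalIntegral.integral_interval_sub_left
        ((hzc.pow 2).intervalIntegrable 0 τ₂) ((hzc.pow 2).intervalIntegrable 0 τ₁)
    have : 0 < tz τ₂ - tz τ₁ := by rw [hsub]; positivity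
    linarith
  have htzint : ∀ n : ℤ, tz n = n := by
    intro n
    have h1 := hintshift 0 (-n)
    push_cast at h1
    rw [htz0] at h1
    simpa using h1
  have hsurj : Function.Surjective tz := by
    have hlb : ∀ x : ℝ, x - 1 ≤ tz x := by
      intro x
      have h1 : tz (⌊x⌋ : ℝ) ≤ tz x := hmono.monotone (Int.floor_le x)
      rw [htzint ⌊x⌋] at h1
      have h2 := Int.sub_one_lt_floor x
      linarith
    have hub : ∀ x : ℝ, tz x ≤ x + 1 := by
      intro x
      have h1 : tz x ≤ tz (⌈x⌉ : ℝ) := hmono.monotone (Int.le_ceil x)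
      rw [htzint ⌈x⌉] at h1
      have h2 := Int.ceil_lt_add_one x
      linarith
    exact htzc.surjective
      (tendsto_atTop_mono hlb (tendsto_atTop_add_const_right _ _ tendsto_id))
      (tendsto_atBot_mono hub (tendsto_atBot_add_const_right _ _ tendsto_id))
  -- the global inverse
  set iso := StrictMono.orderIsoOfSurjective tz hmono hsurj with hiso
  set τZ : ℝ → ℝ := fun t => iso.symm t with hτZ
  have hleft : ∀ τ, τZ (tz τ) = τ := fun τ => iso.symm_apply_apply τ
  have hright : ∀ t, tz (τZ t) = t := fun t => iso.apply_symm_apply t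
  have hτZc : Continuous τZ := by
    have := iso.toHomeomorph.symm.continuous
    exact this
  have hτZmono : Monotone τZ := fun s t hst => (iso.symm.le_iff_le).mpr hst
  have hτZ0 : τZ 0 = 0 := by have := hleft 0; rwa [htz0] at this
  have hτZ1 : τZ 1 = 1 := by have := hleft 1; rwa [htz1] at this
  have hτZshift : ∀ (t : ℝ) (n : ℤ), τZ (t - n) = τZ t - n := by
    intro t n
    apply hmono.injective
    rw [hright, hintshift, hright]
  refine ⟨hfin, fun τ _ => hsimple τ, τZ, fun τ _ => hleft τ, ?_, ?_⟩
  · intro t ht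
    refine ⟨⟨?_, ?_⟩, hright t⟩
    · rw [← hτZ0]; exact hτZmono ht.1
    · rw [← hτZ1]; exact hτZmono ht.2
  intro q hq hqper
  -- q is globally the Levi-Civita transform
  have hqQ : q = fun t => (z (τZ t)) ^ 2 := by
    funext t
    have hqP : Function.Periodic q 1 := hqper
    have h1 : q (t - (⌊t⌋ : ℤ)) = q t := by
      have := hqP.sub_int_mul_eq (x := t) ⌊t⌋
      simpa using this
    have hmem : t - (⌊t⌋ : ℝ) ∈ Ico (0:ℝ) 1 :=
      ⟨by linarith [Int.floor_le t], by linarith [Int.lt_floor_add_one t]⟩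
    have h2 : q (t - (⌊t⌋ : ℝ)) = (z (τZ (t - (⌊t⌋ : ℝ)))) ^ 2 := hq _ hmem
    have h3 : τZ (t - (⌊t⌋ : ℤ)) = τZ t - (⌊t⌋ : ℤ) := hτZshift t ⌊t⌋
    have h4 : z (τZ t - (⌊t⌋ : ℤ)) = z (τZ t) := by
      have := hzP.sub_int_mul_eq (x := τZ t) ⌊t⌋
      simpa using this
    rw [← h1, h2, h3, h4]
  subst hqQ
  constructor
  · -- the mean value
    have hg : Continuous (fun t => (z (τZ t)) ^ 2) := (hzc.comp hτZc).pow 2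
    have hsubst := intervalIntegral.integral_comp_smul_deriv (a := (0:ℝ)) (b := 1)
      (f := tz) (f' := fun τ => (z τ) ^ 2 / Z) (g := fun t => (z (τZ t)) ^ 2)
      (fun x _ => htzd x) ((hzc.pow 2).div_const Z).continuousOn hg
    rw [htz0, htz1] at hsubst
    rw [← hsubst]
    have hcongr : EqOn (fun x => ((z x) ^ 2 / Z) • ((fun t => (z (τZ t)) ^ 2) ∘ tz) x)
        (fun x => (z x) ^ 4 / Z) (uIcc (0:ℝ) 1) := by
      intro x _
      simp only [Function.comp, smul_eq_mul, hleft x]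
      field_simp
    rw [intervalIntegral.integral_congr hcongr, intervalIntegral.integral_div, ← hZ2]
  · -- second derivative formula
    intro t ht
    have ht' : 0 < (z (τZ t)) ^ 2 := ht
    have hcne : z (τZ t) ≠ 0 := by
      intro h; rw [h] at ht'; norm_num at ht'
    have keyInv : ∀ s, z (τZ s) ≠ 0 →
        HasDerivAt τZ (((z (τZ s)) ^ 2 / Z)⁻¹) s := by
      intro s hs
      have hne : (z (τZ s)) ^ 2 / Z ≠ 0 :=
        div_ne_zero (pow_ne_zero 2 hs) hZne
      exact (htzd (τZ s)).of_local_left_inverse hτZc.continuousAt hne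
        (Filter.Eventually.of_forall hright)
    have key : ∀ s, z (τZ s) ≠ 0 →
        HasDerivAt (fun u => (z (τZ u)) ^ 2) (2 * Z * deriv z (τZ s) / z (τZ s)) s := by
      intro s hs
      have h3 : HasDerivAt (fun y => (z y) ^ 2) (2 * z (τZ s) * deriv z (τZ s)) (τZ s) := by
        simpa using (hzd (τZ s)).fun_pow 2
      have h4 := HasDerivAt.comp s h3 (keyInv s hs)
      have h5 : (2 * z (τZ s) * deriv z (τZ s)) * (((z (τZ s)) ^ 2 / Z)⁻¹)
          = 2 * Z * deriv z (τZ s) / z (τZ s) := by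
        field_simp
      rw [← h5]
      exact h4
    have hU : ∀ᶠ s in 𝓝 t, z (τZ s) ≠ 0 :=
      (hzc.comp hτZc).continuousAt.eventually_ne hcne
    have hdq : deriv (fun u => (z (τZ u)) ^ 2) =ᶠ[𝓝 t]
        (fun s => 2 * Z * deriv z (τZ s) / z (τZ s)) := by
      filter_upwards [hU] with s hs
      exact (key s hs).deriv
    have num : HasDerivAt (fun s => 2 * Z * deriv z (τZ s))
        (2 * Z * (deriv (deriv z) (τZ t) * (((z (τZ t)) ^ 2 / Z)⁻¹))) t :=
      HasDerivAt.const_mul (2 * Z) (HasDerivAt.comp t (hz'd (τZ t)) (keyInv t hcne))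
    have den : HasDerivAt (fun s => z (τZ s))
        (deriv z (τZ t) * (((z (τZ t)) ^ 2 / Z)⁻¹)) t :=
      HasDerivAt.comp t (hzd (τZ t)) (keyInv t hcne)
    have hgd : HasDerivAt (fun s => 2 * Z * deriv z (τZ s) / z (τZ s))
        ((2 * Z * (deriv (deriv z) (τZ t) * (((z (τZ t)) ^ 2 / Z)⁻¹)) * z (τZ t)
          - 2 * Z * deriv z (τZ t) * (deriv z (τZ t) * (((z (τZ t)) ^ 2 / Z)⁻¹)))
          / (z (τZ t)) ^ 2) t :=
      num.div den hcne
    refine ⟨(key t hcne).differentiableAt, ?_, ?_⟩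
    · rw [hdq.differentiableAt_iff]
      exact hgd.differentiableAt
    · rw [hdq.deriv_eq, hgd.deriv]
      have hen := he (τZ t)
      have hz2 : (deriv z (τZ t)) ^ 2
          = 1 / Z ^ 2 - b * (z (τZ t)) ^ 2 - a * (z (τZ t)) ^ 4 := by linarith
      rw [hode (τZ t)]
      have h4 : (deriv z (τZ t)) * ((deriv z (τZ t)) * (((z (τZ t)) ^ 2 / Z)⁻¹))
          = (1 / Z ^ 2 - b * (z (τZ t)) ^ 2 - a * (z (τZ t)) ^ 4)
            * (((z (τZ t)) ^ 2 / Z)⁻¹) := by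
        rw [← hz2]; ring
      rw [mul_assoc (2 * Z) (deriv z (τZ t)), h4, ha]
      field_simp
      ring
end

section
/- Let z : ℝ → ℝ be a smooth 1-periodic function with ‖z‖ > 0, and set ρ = (√2−1)² and c = 2^(1/4)·‖z²‖/(√(√2−1)·‖z‖). Then c⁴‖z‖² − c²‖z²‖² > 0 and 2/c² + 2‖z‖²‖z'‖² + 2/‖z‖² − c²‖z‖²/(c⁴‖z‖² − c²‖z²‖²) = 2‖z‖²‖z'‖² + 2/‖z‖² + ρ·‖z‖²/‖z²‖²; that is, F_ρ(z) = B_av(c, z), where the first argument of B_av is the constant function c. -/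
/-- With `ρ = (√2−1)²` and `c = 2^(1/4)‖z²‖/(√(√2−1)‖z‖)` one has
`c⁴‖z‖² − c²‖z²‖² > 0` and `F_ρ(z) = B_av(c,z)`.  Here `Z = ‖z‖²`, `Zp = ‖z'‖²`,
`Z2 = ‖z²‖²`. -/
theorem stmt8
    (z : ℝ → ℝ)
    (hz : ContDiff ℝ (⊤ : ℕ∞) z)
    (hper : ∀ τ, z (τ + 1) = z τ)
    (Z Zp Z2 ρ c : ℝ)
    (hZ : Z = ∫ τ in (0:ℝ)..1, (z τ) ^ 2)
    (hZp : Zp = ∫ τ in (0:ℝ)..1, (deriv z τ) ^ 2)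
    (hZ2 : Z2 = ∫ τ in (0:ℝ)..1, (z τ) ^ 4)
    (hZpos : 0 < Z)
    (hρ : ρ = (Real.sqrt 2 - 1) ^ 2)
    (hc : c = (2:ℝ) ^ ((1:ℝ) / 4) * Real.sqrt Z2 / (Real.sqrt (Real.sqrt 2 - 1) * Real.sqrt Z)) :
    0 < c ^ 4 * Z - c ^ 2 * Z2 ∧
    2 / c ^ 2 + 2 * Z * Zp + 2 / Z - c ^ 2 * Z / (c ^ 4 * Z - c ^ 2 * Z2)
      = 2 * Z * Zp + 2 / Z + ρ * Z / Z2 := by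
  have hcont : Continuous z := hz.continuous
  have h2i : IntervalIntegrable (fun τ => (z τ) ^ 2) MeasureTheory.volume 0 1 :=
    (hcont.pow 2).intervalIntegrable _ _
  have h4i : IntervalIntegrable (fun τ => (z τ) ^ 4) MeasureTheory.volume 0 1 :=
    (hcont.pow 4).intervalIntegrable _ _
  -- Z2 ≥ Z² > 0
  have hZ2pos : 0 < Z2 := by
    have hnn : (0:ℝ) ≤ ∫ τ in (0:ℝ)..1, ((z τ) ^ 2 - Z) ^ 2 :=
      intervalIntegral.integral_nonneg (by norm_num) (fun τ _ => sq_nonneg _)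
    have hexp : (∫ τ in (0:ℝ)..1, ((z τ) ^ 2 - Z) ^ 2)
        = (∫ τ in (0:ℝ)..1, (z τ) ^ 4) - 2 * Z * (∫ τ in (0:ℝ)..1, (z τ) ^ 2) + Z ^ 2 := by
      have : (fun τ => ((z τ) ^ 2 - Z) ^ 2)
          = fun τ => (z τ) ^ 4 - (2 * Z) * (z τ) ^ 2 + Z ^ 2 := by
        funext τ; ring
      rw [this]
      rw [intervalIntegral.integral_add ((h4i.sub (h2i.const_mul _)))
        (intervalIntegrable_const),
        intervalIntegral.integral_sub h4i (h2i.const_mul _),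
        intervalIntegral.integral_const_mul, intervalIntegral.integral_const]
      simp
    rw [hexp, ← hZ, ← hZ2] at hnn
    nlinarith [hZpos]
  -- algebraic facts about √2
  set s := Real.sqrt 2 with hsdef
  have hs2 : s ^ 2 = 2 := Real.sq_sqrt (by norm_num)
  have hs1 : 1 < s := by nlinarith [Real.sqrt_nonneg 2]
  have hs1' : (0:ℝ) < s - 1 := by linarith
  -- compute c²
  have h14 : ((2:ℝ) ^ ((1:ℝ) / 4)) ^ 2 = s := by
    rw [← Real.rpow_natCast ((2:ℝ) ^ ((1:ℝ)/4)) 2, ← Real.rpow_mul (by norm_num)]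
    rw [hsdef, Real.sqrt_eq_rpow]
    norm_num
  have hc2 : c ^ 2 = s * Z2 / ((s - 1) * Z) := by
    rw [hc]
    rw [div_pow, mul_pow, mul_pow, h14, Real.sq_sqrt hZ2pos.le,
      Real.sq_sqrt hs1'.le, Real.sq_sqrt hZpos.le]
  have hZne : Z ≠ 0 := ne_of_gt hZpos
  have hZ2ne : Z2 ≠ 0 := ne_of_gt hZ2pos
  have hs1ne : s - 1 ≠ 0 := ne_of_gt hs1'
  have hspos : 0 < s := by linarith
  have hkey : c ^ 4 * Z - c ^ 2 * Z2 = s * Z2 ^ 2 / ((s - 1) ^ 2 * Z) := by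
    have h4 : c ^ 4 = (c ^ 2) ^ 2 := by ring
    rw [h4, hc2]
    field_simp
    ring
  have hpos : 0 < c ^ 4 * Z - c ^ 2 * Z2 := by
    rw [hkey]
    positivity
  refine ⟨hpos, ?_⟩
  have hc2pos : 0 < c ^ 2 := by
    rw [hc2]; positivity
  have hc2ne : c ^ 2 ≠ 0 := ne_of_gt hc2pos
  have hdne : c ^ 4 * Z - c ^ 2 * Z2 ≠ 0 := ne_of_gt hpos
  have e1 : 2 / c ^ 2 = 2 * (s - 1) * Z / (s * Z2) := by
    rw [hc2]; field_simp
  have e2 : c ^ 2 * Z / (c ^ 4 * Z - c ^ 2 * Z2) = (s - 1) * Z / Z2 := by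
    rw [hkey, hc2]; field_simp
  have e3 : 2 * (s - 1) * Z / (s * Z2) - (s - 1) * Z / Z2 = (s - 1) ^ 2 * Z / Z2 := by
    field_simp
    linear_combination (-1 : ℝ) * hs2
  rw [hρ, e1, e2]
  linarith [e3]
end

section
/- Let z₂ : ℝ → ℝ be a continuous 1-periodic function with ‖z₂‖ > 0, and let z₁ be a real constant with z₁² > ‖z₂²‖²/‖z₂‖². Define a₁ = −1/z₁⁶ − ‖z₂‖⁴z₁²/(2(‖z₂‖²z₁⁴ − ‖z₂²‖²z₁²)²) and b₁ = ‖z₂‖⁴/(‖z₂‖²z₁⁴ − ‖z₂²‖²z₁²)². Then a₁z₁ + b₁z₁³ = 0 if and only if z₁ = ±c(z₂), where c(z₂) = 2^(1/4)·‖z₂²‖/(√(√2−1)·‖z₂‖); and in that case a₁ = −2/z₁⁶ and b₁ = 2/z₁⁸. -/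
set_option maxHeartbeats 1000000


/-- For a constant `z₁` with `z₁² > ‖z₂²‖²/‖z₂‖²`, the equation
`a₁z₁ + b₁z₁³ = 0` holds iff `z₁ = ±c(z₂)`, and in that case `a₁ = −2/z₁⁶`,
`b₁ = 2/z₁⁸`.  Here `N = ‖z₂‖²` and `N2 = ‖z₂²‖²`. -/
theorem stmt9
    (z₂ : ℝ → ℝ)
    (hz2 : Continuous z₂)
    (hper : ∀ τ, z₂ (τ + 1) = z₂ τ)
    (N N2 : ℝ)
    (hN : N = ∫ τ in (0:ℝ)..1, (z₂ τ) ^ 2)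
    (hN2 : N2 = ∫ τ in (0:ℝ)..1, (z₂ τ) ^ 4)
    (hNpos : 0 < N)
    (z₁ : ℝ)
    (hz1 : N2 / N < z₁ ^ 2)
    (a₁ b₁ c : ℝ)
    (ha1 : a₁ = -1 / z₁ ^ 6 - N ^ 2 * z₁ ^ 2 / (2 * (N * z₁ ^ 4 - N2 * z₁ ^ 2) ^ 2))
    (hb1 : b₁ = N ^ 2 / (N * z₁ ^ 4 - N2 * z₁ ^ 2) ^ 2)
    (hcc : c = (2:ℝ) ^ ((1:ℝ) / 4) * Real.sqrt N2 / (Real.sqrt (Real.sqrt 2 - 1) * Real.sqrt N)) :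
    (a₁ * z₁ + b₁ * z₁ ^ 3 = 0 ↔ (z₁ = c ∨ z₁ = -c)) ∧
    (a₁ * z₁ + b₁ * z₁ ^ 3 = 0 → a₁ = -2 / z₁ ^ 6 ∧ b₁ = 2 / z₁ ^ 8) := by
  -- integrability
  have hi2 : IntervalIntegrable (fun τ => (z₂ τ)^2) MeasureTheory.volume 0 1 :=
    (hz2.pow 2).intervalIntegrable 0 1
  have hi4 : IntervalIntegrable (fun τ => (z₂ τ)^4) MeasureTheory.volume 0 1 :=
    (hz2.pow 4).intervalIntegrable 0 1
  -- Cauchy–Schwarz: N² ≤ N2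
  have key : (∫ τ in (0:ℝ)..1, ((z₂ τ)^2 - N)^2) = N2 - N^2 := by
    have h : ∀ τ : ℝ, ((z₂ τ)^2 - N)^2 = (z₂ τ)^4 - 2*N*(z₂ τ)^2 + N^2 := fun τ => by ring
    simp_rw [h]
    rw [intervalIntegral.integral_add (hi4.sub (hi2.const_mul _)) intervalIntegrable_const,
        intervalIntegral.integral_sub hi4 (hi2.const_mul _),
        intervalIntegral.integral_const_mul, ← hN, ← hN2]
    simp
    ring
  have hnonneg : (0:ℝ) ≤ ∫ τ in (0:ℝ)..1, ((z₂ τ)^2 - N)^2 :=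
    intervalIntegral.integral_nonneg (by norm_num) (fun u _ => sq_nonneg _)
  have hle : N^2 ≤ N2 := by nlinarith [key, hnonneg]
  have hN2pos : 0 < N2 := lt_of_lt_of_le (pow_pos hNpos 2) hle
  have hz1sq : 0 < z₁^2 := lt_trans (div_pos hN2pos hNpos) hz1
  have hz0 : z₁ ≠ 0 := by
    intro h; rw [h] at hz1sq; simp at hz1sq
  have hD : 0 < N * z₁^2 - N2 := by
    have := (div_lt_iff₀ hNpos).mp hz1
    nlinarith
  have hDen : 0 < N * z₁^4 - N2 * z₁^2 := by nlinarith
  have hDne : N * z₁^4 - N2 * z₁^2 ≠ 0 := ne_of_gt hDen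
  set s := Real.sqrt 2 with hs_def
  have hs : s^2 = 2 := Real.sq_sqrt (by norm_num)
  have hs0 : 0 ≤ s := Real.sqrt_nonneg 2
  have hs1 : 1 < s := by nlinarith
  -- c² = s*N2/((s-1)*N)
  have hq : ((2:ℝ) ^ ((1:ℝ)/4))^2 = s := by
    rw [← Real.rpow_natCast ((2:ℝ)^((1:ℝ)/4)) 2, ← Real.rpow_mul (by norm_num),
        hs_def, Real.sqrt_eq_rpow]
    norm_num
  have hc2 : c^2 = s * N2 / ((s - 1) * N) := by
    rw [hcc]
    rw [div_pow, mul_pow, mul_pow, hq, Real.sq_sqrt hN2pos.le,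
        Real.sq_sqrt (by linarith : (0:ℝ) ≤ s - 1), Real.sq_sqrt hNpos.le]
  have hcpos : 0 < c := by
    rw [hcc]
    apply div_pos
    · exact mul_pos (Real.rpow_pos_of_pos (by norm_num) _) (Real.sqrt_pos.mpr hN2pos)
    · exact mul_pos (Real.sqrt_pos.mpr (by linarith)) (Real.sqrt_pos.mpr hNpos)
  -- rewrite the expression as a single fraction
  have hEfrac : a₁ * z₁ + b₁ * z₁ ^ 3
      = (N^2*z₁^8 - 2*(N * z₁^4 - N2 * z₁^2)^2) / (2 * (N * z₁^4 - N2 * z₁^2)^2 * z₁^5) := by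
    rw [ha1, hb1]
    generalize N * z₁^4 - N2 * z₁^2 = D at hDne ⊢
    field_simp
    ring
  have hden_ne : (2 * (N * z₁^4 - N2 * z₁^2)^2 * z₁^5) ≠ 0 := by
    apply mul_ne_zero (mul_ne_zero (by norm_num) (pow_ne_zero _ hDne)) (pow_ne_zero _ hz0)
  -- factorization of the numerator
  have hP : 0 < N*z₁^2 + s*(N*z₁^2 - N2) := by nlinarith
  have hfac : N^2*z₁^8 - 2*(N * z₁^4 - N2 * z₁^2)^2
      = z₁^4 * ((s*N2 - (s-1)*N*z₁^2) * (N*z₁^2 + s*(N*z₁^2 - N2))) := by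
    linear_combination (z₁^4*(N*z₁^2 - N2)^2) * hs
  -- equation ⇔ (s-1) N z₁² = s N2
  have hiff1 : a₁ * z₁ + b₁ * z₁ ^ 3 = 0 ↔ (s-1)*N*z₁^2 = s*N2 := by
    rw [hEfrac, div_eq_zero_iff]
    constructor
    · rintro (h | h)
      · rw [hfac] at h
        rcases mul_eq_zero.mp h with h1 | h1
        · exact absurd h1 (pow_ne_zero _ hz0)
        · rcases mul_eq_zero.mp h1 with h2 | h2
          · linarith
          · exact absurd h2 (ne_of_gt hP)
      · exact absurd h hden_ne
    · intro h
      left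
      rw [hfac]
      have : s*N2 - (s-1)*N*z₁^2 = 0 := by linarith
      rw [this]
      ring
  -- (s-1) N z₁² = s N2 ⇔ z₁² = c²
  have hiff2 : (s-1)*N*z₁^2 = s*N2 ↔ z₁^2 = c^2 := by
    rw [hc2, eq_div_iff (ne_of_gt (mul_pos (by linarith) hNpos))]
    constructor <;> intro h <;> linarith [h]
  have hiff3 : z₁^2 = c^2 ↔ (z₁ = c ∨ z₁ = -c) := by
    constructor
    · intro h
      have : (z₁ - c) * (z₁ + c) = 0 := by linear_combination h
      rcases mul_eq_zero.mp this with h1 | h1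
      · left; linarith
      · right; linarith
    · rintro (h | h) <;> rw [h] <;> ring
  refine ⟨hiff1.trans (hiff2.trans hiff3), ?_⟩
  intro hE
  have hnum : N^2*z₁^8 = 2*(N * z₁^4 - N2 * z₁^2)^2 := by
    rw [hEfrac, div_eq_zero_iff] at hE
    rcases hE with h | h
    · linarith
    · exact absurd h hden_ne
  constructor
  · rw [ha1, ← hnum]
    have hNne : N ≠ 0 := ne_of_gt hNpos
    field_simp
    ring
  · rw [hb1, div_eq_div_iff (pow_ne_zero 2 hDne) (pow_ne_zero 8 hz0)]
    linear_combination hnum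
end

section
/- Let z₂ : ℝ → ℝ be a smooth 1-periodic function with ‖z₂‖ > 0, and let z₁ = c(z₂) = 2^(1/4)·‖z₂²‖/(√(√2−1)·‖z₂‖) be the corresponding positive constant (so that P = ‖z₁²‖²‖z₂‖² − ‖z₂²‖²‖z₁‖² > 0). Suppose the C² 1-periodic pair (ξ₁,ξ₂) satisfies the first linearized equation −ξ₁'' + a₁ξ₁ + 3b₁z₁²ξ₁ + da₁(ξ)z₁ + db₁(ξ)z₁³ = 0. Then ξ₁ is constant. -/
set_option maxHeartbeats 1000000

lemma ode_aux (w : ℝ → ℝ) (A : ℝ) (hA : 0 < A)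
    (hw : Differentiable ℝ w) (hw' : Differentiable ℝ (deriv w))
    (hper : ∀ τ, w (τ + 1) = w τ)
    (hode : ∀ τ, deriv (deriv w) τ = A * w τ) : ∀ τ, w τ = 0 := by
  set r := Real.sqrt A with hrdef
  have hr : 0 < r := Real.sqrt_pos.mpr hA
  have hr2 : r * r = A := Real.mul_self_sqrt hA.le
  have hper' : ∀ τ, deriv w (τ + 1) = deriv w τ := by
    intro τ
    have hfun : (fun t => w (t + 1)) = w := funext hper
    have : deriv w τ = deriv (fun t => w (t + 1)) τ := by rw [hfun]
    rw [this, deriv_comp_add_const]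
  set g : ℝ → ℝ := fun τ => deriv w τ + r * w τ with hgdef
  have hg : ∀ τ, HasDerivAt g (r * g τ) τ := by
    intro τ
    have h1 : HasDerivAt (deriv w) (A * w τ) τ := by
      have := (hw' τ).hasDerivAt; rwa [hode τ] at this
    have h2 : HasDerivAt (fun t => r * w t) (r * deriv w τ) τ :=
      (hw τ).hasDerivAt.const_mul r
    have h3 := h1.add h2
    convert h3 using 1
    · rfl
    · rfl
    · rfl
    simp only [hgdef]; rw [← hr2]; ring
  have hgform : ∀ τ, g τ = g 0 * Real.exp (r * τ) := by
    have hh : ∀ τ, HasDerivAt (fun t => g t * Real.exp (-(r * t))) 0 τ := by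
      intro τ
      have he : HasDerivAt (fun t : ℝ => -(r * t)) (-r) τ := by
        have := ((hasDerivAt_id' τ).const_mul r).neg; rw [mul_one] at this; exact this
      have he2 := he.exp
      have h4 := (hg τ).mul he2
      convert h4 using 1
      · rfl
      · rfl
      · rfl
      ring
    have hconst : ∀ τ, g τ * Real.exp (-(r * τ)) = g 0 * Real.exp (-(r * 0)) :=
      fun τ => is_const_of_deriv_eq_zero (fun x => (hh x).differentiableAt)
        (fun x => (hh x).deriv) τ 0
    intro τ
    have h5 := hconst τ
    rw [mul_zero, neg_zero, Real.exp_zero, mul_one, Real.exp_neg] at h5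
    field_simp at h5
    linarith [h5]
  have hgper : g 1 = g 0 := by
    have := hper' 0
    have h2 := hper 0
    simp only [hgdef, zero_add] at *
    rw [this, h2]
  have hexp1 : 1 < Real.exp r := by nlinarith [Real.add_one_le_exp r]
  have hg0 : g 0 = 0 := by
    have h2 := hgform 1
    rw [mul_one] at h2
    have key : g 0 * (Real.exp r - 1) = 0 := by linear_combination hgper - h2
    rcases mul_eq_zero.mp key with h | h
    · exact h
    · nlinarith
  have hwderiv : ∀ τ, deriv w τ = -r * w τ := by
    intro τ
    have h6 : g τ = 0 := by rw [hgform τ, hg0, zero_mul]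
    simp only [hgdef] at h6
    linarith
  have hk : ∀ τ, HasDerivAt (fun t => w t * Real.exp (r * t)) 0 τ := by
    intro τ
    have he : HasDerivAt (fun t : ℝ => r * t) r τ := by
      simpa using (hasDerivAt_id τ).const_mul r
    have he2 := he.exp
    have h1 : HasDerivAt w (-r * w τ) τ := by
      have := (hw τ).hasDerivAt; rwa [hwderiv τ] at this
    have h7 := h1.mul he2
    convert h7 using 1
    · rfl
    · rfl
    · rfl
    ring
  have hkconst : ∀ τ, w τ * Real.exp (r * τ) = w 0 * Real.exp (r * 0) :=
    fun τ => is_const_of_deriv_eq_zero (fun x => (hk x).differentiableAt)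
      (fun x => (hk x).deriv) τ 0
  have hw0 : w 0 = 0 := by
    have h1 := hkconst 1
    have hp1 : w 1 = w 0 := by simpa using hper 0
    rw [mul_one] at h1
    rw [hp1, mul_zero, Real.exp_zero, mul_one] at h1
    have key : w 0 * (Real.exp r - 1) = 0 := by linear_combination h1
    rcases mul_eq_zero.mp key with h | h
    · exact h
    · nlinarith
  intro τ
  have h8 := hkconst τ
  rw [hw0, zero_mul] at h8
  exact (mul_eq_zero.mp h8).resolve_right (Real.exp_ne_zero _)



/-- The `L²`-pairing `⟨u,v⟩ = ∫₀¹ uv`. -/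
noncomputable def ipq (u v : ℝ → ℝ) : ℝ := ∫ τ in (0:ℝ)..1, u τ * v τ
/-- `‖u‖²`. -/
noncomputable def Nq (u : ℝ → ℝ) : ℝ := ∫ τ in (0:ℝ)..1, (u τ) ^ 2
/-- `‖u'‖²`. -/
noncomputable def Npq (u : ℝ → ℝ) : ℝ := ∫ τ in (0:ℝ)..1, (deriv u τ) ^ 2
/-- `‖u²‖²`. -/
noncomputable def N2q (u : ℝ → ℝ) : ℝ := ∫ τ in (0:ℝ)..1, (u τ) ^ 4

/-- `P = ‖z₁²‖²‖z₂‖² − ‖z₂²‖²‖z₁‖²`. -/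
noncomputable def Pq (z₁ z₂ : ℝ → ℝ) : ℝ := N2q z₁ * Nq z₂ - N2q z₂ * Nq z₁

/-- `a₁ = ‖z₁'‖²/‖z₁‖² − 1/‖z₁‖⁶ − ‖z₂‖⁴‖z₁²‖²/(2‖z₁‖²P²)`. -/
noncomputable def a1 (z₁ z₂ : ℝ → ℝ) : ℝ :=
  Npq z₁ / Nq z₁ - 1 / (Nq z₁) ^ 3 - (Nq z₂) ^ 2 * N2q z₁ / (2 * Nq z₁ * (Pq z₁ z₂) ^ 2)
/-- `b₁ = ‖z₂‖⁴/P²`. -/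
noncomputable def b1 (z₁ z₂ : ℝ → ℝ) : ℝ := (Nq z₂) ^ 2 / (Pq z₁ z₂) ^ 2

/-- Directional derivative of `‖u‖²` in direction `ξ`: `2⟨u,ξ⟩`. -/
noncomputable def vN (u ξ : ℝ → ℝ) : ℝ := 2 * ipq u ξ
/-- Directional derivative of `‖u'‖²` in direction `ξ`: `2⟨u',ξ'⟩`. -/
noncomputable def vNp (u ξ : ℝ → ℝ) : ℝ := 2 * ∫ τ in (0:ℝ)..1, deriv u τ * deriv ξ τ
/-- Directional derivative of `‖u²‖²` in direction `ξ`: `4⟨u³,ξ⟩`. -/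
noncomputable def vN2 (u ξ : ℝ → ℝ) : ℝ := 4 * ∫ τ in (0:ℝ)..1, (u τ) ^ 3 * ξ τ
/-- Directional derivative of `P` in direction `(ξ₁,ξ₂)` (chain rule). -/
noncomputable def vP (z₁ z₂ ξ₁ ξ₂ : ℝ → ℝ) : ℝ :=
  vN2 z₁ ξ₁ * Nq z₂ + N2q z₁ * vN z₂ ξ₂ - vN2 z₂ ξ₂ * Nq z₁ - N2q z₂ * vN z₁ ξ₁

/-- `da₁(ξ)`, obtained from the formula for `a₁` by the chain rule. -/
noncomputable def da1 (z₁ z₂ ξ₁ ξ₂ : ℝ → ℝ) : ℝ :=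
  vNp z₁ ξ₁ / Nq z₁ - Npq z₁ * vN z₁ ξ₁ / (Nq z₁) ^ 2 + 3 * vN z₁ ξ₁ / (Nq z₁) ^ 4
  - ((2 * Nq z₂ * vN z₂ ξ₂ * N2q z₁ + (Nq z₂) ^ 2 * vN2 z₁ ξ₁) / (2 * Nq z₁ * (Pq z₁ z₂) ^ 2)
     - (Nq z₂) ^ 2 * N2q z₁ *
        (2 * vN z₁ ξ₁ * (Pq z₁ z₂) ^ 2 + 4 * Nq z₁ * Pq z₁ z₂ * vP z₁ z₂ ξ₁ ξ₂)
        / (2 * Nq z₁ * (Pq z₁ z₂) ^ 2) ^ 2)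
/-- `db₁(ξ)`, obtained from the formula for `b₁` by the chain rule. -/
noncomputable def db1 (z₁ z₂ ξ₁ ξ₂ : ℝ → ℝ) : ℝ :=
  2 * Nq z₂ * vN z₂ ξ₂ / (Pq z₁ z₂) ^ 2 - 2 * (Nq z₂) ^ 2 * vP z₁ z₂ ξ₁ ξ₂ / (Pq z₁ z₂) ^ 3

/-- If `z₁ = c(z₂)` is the distinguished constant and `(ξ₁,ξ₂)`
satisfies the first linearized equation, then `ξ₁` is constant (and `P > 0`). -/
theorem stmt10
    (z₂ ξ₁ ξ₂ : ℝ → ℝ)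
    (hz2 : ContDiff ℝ (⊤ : ℕ∞) z₂)
    (hper2 : ∀ τ, z₂ (τ + 1) = z₂ τ)
    (hN2 : 0 < Nq z₂)
    (c : ℝ)
    (hcc : c = (2:ℝ) ^ ((1:ℝ) / 4) * Real.sqrt (N2q z₂)
      / (Real.sqrt (Real.sqrt 2 - 1) * Real.sqrt (Nq z₂)))
    (z₁ : ℝ → ℝ)
    (hz1 : z₁ = fun _ => c)
    (hξ1 : ContDiff ℝ 2 ξ₁) (hξ2 : ContDiff ℝ 2 ξ₂)
    (hξper1 : ∀ τ, ξ₁ (τ + 1) = ξ₁ τ) (hξper2 : ∀ τ, ξ₂ (τ + 1) = ξ₂ τ)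
    (hlin1 : ∀ τ, -deriv (deriv ξ₁) τ + a1 z₁ z₂ * ξ₁ τ + 3 * b1 z₁ z₂ * (z₁ τ) ^ 2 * ξ₁ τ
        + da1 z₁ z₂ ξ₁ ξ₂ * z₁ τ + db1 z₁ z₂ ξ₁ ξ₂ * (z₁ τ) ^ 3 = 0) :
    0 < Pq z₁ z₂ ∧ ∃ k : ℝ, ∀ τ, ξ₁ τ = k := by

  -- abbreviations
  have hcont2 : Continuous z₂ := hz2.continuous
  set N := Nq z₂ with hNdef
  set N2 := N2q z₂ with hN2def
  -- N2 > 0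
  have hi2 : IntervalIntegrable (fun τ => (z₂ τ) ^ 2) MeasureTheory.volume 0 1 :=
    ((hcont2.pow 2).intervalIntegrable 0 1)
  have hi4 : IntervalIntegrable (fun τ => (z₂ τ) ^ 4) MeasureTheory.volume 0 1 :=
    ((hcont2.pow 4).intervalIntegrable 0 1)
  have hN2pos : 0 < N2 := by
    have hmono : Nq z₂ ≤ N2q z₂ / (2 * N) + N / 2 := by
      have hle : ∀ x ∈ Set.Icc (0:ℝ) 1,
          (z₂ x) ^ 2 ≤ (z₂ x) ^ 4 / (2 * N) + N / 2 := by
        intro x _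
        rw [div_add_div _ _ (by positivity) (by norm_num), le_div_iff₀ (by positivity)]
        nlinarith [sq_nonneg ((z₂ x) ^ 2 - N), hN2]
      have hint : IntervalIntegrable (fun τ => (z₂ τ) ^ 4 / (2 * N) + N / 2)
          MeasureTheory.volume 0 1 := (hi4.div_const _).add (intervalIntegrable_const)
      have := intervalIntegral.integral_mono_on (by norm_num : (0:ℝ) ≤ 1) hi2 hint hle
      calc Nq z₂ = ∫ τ in (0:ℝ)..1, (z₂ τ) ^ 2 := rfl
        _ ≤ ∫ τ in (0:ℝ)..1, ((z₂ τ) ^ 4 / (2 * N) + N / 2) := this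
        _ = (∫ τ in (0:ℝ)..1, (z₂ τ) ^ 4) / (2 * N) + N / 2 := by
            rw [intervalIntegral.integral_add (hi4.div_const _) intervalIntegrable_const,
              intervalIntegral.integral_div, intervalIntegral.integral_const]
            norm_num
        _ = N2q z₂ / (2 * N) + N / 2 := rfl
    have h3 : N / 2 ≤ N2q z₂ / (2 * N) := by linarith
    rw [div_le_div_iff₀ (by norm_num : (0:ℝ) < 2) (by positivity : (0:ℝ) < 2 * N)] at h3
    nlinarith [hN2]
  -- norms of the constant z₁
  have hNq1 : Nq z₁ = c ^ 2 := by simp [Nq, hz1]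
  have hN2q1 : N2q z₁ = c ^ 4 := by simp [N2q, hz1]
  have hNpq1 : Npq z₁ = 0 := by simp [Npq, hz1]
  -- sqrt 2 facts
  set s := Real.sqrt 2 with hsdef
  have hs2 : s ^ 2 = 2 := Real.sq_sqrt (by norm_num)
  have hs1 : 1 < s := by nlinarith [Real.sqrt_nonneg 2]
  -- value of c²
  have h14 : ((2:ℝ) ^ ((1:ℝ)/4)) ^ 2 = s := by
    rw [hsdef, ← Real.rpow_natCast ((2:ℝ) ^ ((1:ℝ)/4)) 2,
      ← Real.rpow_mul (by norm_num : (0:ℝ) ≤ 2), Real.sqrt_eq_rpow]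
    norm_num
  have hc2 : c ^ 2 = s * N2 / ((s - 1) * N) := by
    rw [hcc, div_pow, mul_pow, mul_pow, h14, Real.sq_sqrt hN2pos.le,
      Real.sq_sqrt (by linarith : (0:ℝ) ≤ s - 1), Real.sq_sqrt hN2.le]
  have hc2pos : 0 < c ^ 2 := by
    rw [hc2]
    have : 0 < s := by linarith
    have : 0 < s - 1 := by linarith
    positivity
  have hcpos : c ≠ 0 := by
    intro h
    rw [h] at hc2pos
    norm_num at hc2pos
  -- value of P
  have hPform : Pq z₁ z₂ = c ^ 2 * (c ^ 2 * N - N2) := by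
    simp only [Pq, hNq1, hN2q1, ← hNdef, ← hN2def]; ring
  have hcN : c ^ 2 * N - N2 = N2 / (s - 1) := by
    rw [hc2]
    have hN0 : N ≠ 0 := ne_of_gt hN2
    have hs0 : s - 1 ≠ 0 := by intro h; nlinarith
    field_simp
    ring
  have hcN2 : c ^ 2 * N = s * (N2 / (s - 1)) := by
    rw [hc2]
    have hN0 : N ≠ 0 := ne_of_gt hN2
    have hs0 : s - 1 ≠ 0 := by intro h; nlinarith
    field_simp
  have hPpos : 0 < Pq z₁ z₂ := by
    rw [hPform, hcN]
    have hs0 : (0:ℝ) < s - 1 := by linarith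
    positivity
  refine ⟨hPpos, ?_⟩
  -- the square of P
  have hP2 : (Pq z₁ z₂) ^ 2 = (c ^ 2) ^ 4 * N ^ 2 / 2 := by
    rw [hPform, mul_pow, hcN]
    have : (c ^ 2 * N) ^ 2 = 2 * (N2 / (s - 1)) ^ 2 := by
      rw [hcN2, mul_pow, hs2]
    nlinarith [this]
  -- the coefficient A equals 4 / c⁶
  set A : ℝ := 4 / (c ^ 2) ^ 3 with hAdef
  have hApos : 0 < A := by positivity
  have hAeq : a1 z₁ z₂ + 3 * b1 z₁ z₂ * c ^ 2 = A := by
    simp only [a1, b1, hNq1, hN2q1, hNpq1, hP2, ← hNdef, hAdef]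
    have hN0 : N ≠ 0 := ne_of_gt hN2
    field_simp
    ring
  set B : ℝ := da1 z₁ z₂ ξ₁ ξ₂ * c + db1 z₁ z₂ ξ₁ ξ₂ * c ^ 3 with hBdef
  have hode : ∀ τ, deriv (deriv ξ₁) τ = A * ξ₁ τ + B := by
    intro τ
    have h := hlin1 τ
    have hz1t : ∀ t, z₁ t = c := fun t => by rw [hz1]
    simp only [hz1t] at h
    linear_combination -h + hAeq * ξ₁ τ - hBdef
  -- differentiability
  have hdiff1 : Differentiable ℝ ξ₁ := hξ1.differentiable (by norm_num)
  have hdiff2 : Differentiable ℝ (deriv ξ₁) := by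
    rw [show (2 : WithTop ℕ∞) = 1 + 1 by norm_num] at hξ1
    obtain ⟨_, _, hd⟩ := contDiff_succ_iff_deriv.mp hξ1
    exact hd.differentiable (by norm_num)
  -- apply the ODE lemma to w = ξ₁ + B/A
  set w : ℝ → ℝ := fun τ => ξ₁ τ + B / A with hwdef
  have hderw : deriv w = deriv ξ₁ := by
    funext τ
    simp only [hwdef]
    exact deriv_add_const _
  have hzero : ∀ τ, w τ = 0 := by
    apply ode_aux w A hApos (hdiff1.add_const _) (hderw ▸ hdiff2)
    · intro τ; simp only [hwdef, hξper1]
    · intro τ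
      rw [hderw, hode τ]
      simp only [hwdef]
      field_simp
  refine ⟨-(B / A), fun τ => ?_⟩
  have := hzero τ
  simp only [hwdef] at this
  linarith
end

section
/- Let z₂ : ℝ → ℝ be a smooth 1-periodic function with ‖z₂‖ > 0, let z₁ = c(z₂) = 2^(1/4)·‖z₂²‖/(√(√2−1)·‖z₂‖), and suppose the pair (ξ₁,ξ₂), with ξ₁ a real constant and ξ₂ a C² 1-periodic function, satisfies the first linearized equation −ξ₁'' + a₁ξ₁ + 3b₁z₁²ξ₁ + da₁(ξ)z₁ + db₁(ξ)z₁³ = 0. Then ξ₁ = Dc(z₂)ξ₂ := α^(−1/2)·( 2⟨z₂³,ξ₂⟩/(‖z₂²‖·‖z₂‖) − ‖z₂²‖·⟨z₂,ξ₂⟩/‖z₂‖³ ), where α = (√2−1)/√2; i.e. (ξ₁,ξ₂) is tangent to the graph of c. -/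
/-- If `z₁ = c(z₂)`, `ξ₁` is a constant `k`, and the pair `(ξ₁,ξ₂)`
satisfies the first linearized equation, then `ξ₁ = Dc(z₂)ξ₂`, i.e.
`k = α^(−1/2)(2⟨z₂³,ξ₂⟩/(‖z₂²‖‖z₂‖) − ‖z₂²‖⟨z₂,ξ₂⟩/‖z₂‖³)` with `α = (√2−1)/√2`. -/
theorem stmt11
    (z₂ ξ₂ : ℝ → ℝ)
    (hz2 : ContDiff ℝ (⊤ : ℕ∞) z₂)
    (hper2 : ∀ τ, z₂ (τ + 1) = z₂ τ)
    (hN2 : 0 < Nq z₂)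
    (c : ℝ)
    (hcc : c = (2:ℝ) ^ ((1:ℝ) / 4) * Real.sqrt (N2q z₂)
      / (Real.sqrt (Real.sqrt 2 - 1) * Real.sqrt (Nq z₂)))
    (z₁ : ℝ → ℝ)
    (hz1 : z₁ = fun _ => c)
    (k : ℝ) (ξ₁ : ℝ → ℝ)
    (hξ1 : ξ₁ = fun _ => k)
    (hξ2 : ContDiff ℝ 2 ξ₂)
    (hξper2 : ∀ τ, ξ₂ (τ + 1) = ξ₂ τ)
    (hlin1 : ∀ τ, -deriv (deriv ξ₁) τ + a1 z₁ z₂ * ξ₁ τ + 3 * b1 z₁ z₂ * (z₁ τ) ^ 2 * ξ₁ τ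
        + da1 z₁ z₂ ξ₁ ξ₂ * z₁ τ + db1 z₁ z₂ ξ₁ ξ₂ * (z₁ τ) ^ 3 = 0)
    (α : ℝ)
    (hα : α = (Real.sqrt 2 - 1) / Real.sqrt 2) :
    k = α ^ (-(1:ℝ) / 2) *
      (2 * ipq (fun τ => (z₂ τ) ^ 3) ξ₂ / (Real.sqrt (N2q z₂) * Real.sqrt (Nq z₂))
        - Real.sqrt (N2q z₂) * ipq z₂ ξ₂ / (Real.sqrt (Nq z₂)) ^ 3) := by
  set A := Nq z₂ with hA
  set B := N2q z₂ with hB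
  set I1 := ipq z₂ ξ₂ with hI1
  set I3 := (∫ τ in (0:ℝ)..1, (z₂ τ)^3 * ξ₂ τ) with hI3
  set s := Real.sqrt 2 with hsdef
  have hs : s^2 = 2 := Real.sq_sqrt (by norm_num)
  have hs1 : 1 < s := by nlinarith [Real.sqrt_nonneg 2]
  have hBpos : 0 < B := by
    have h4 : IntervalIntegrable (fun τ => (z₂ τ)^4) MeasureTheory.volume 0 1 :=
      (hz2.continuous.pow 4).intervalIntegrable 0 1
    have h2 : IntervalIntegrable (fun τ => 2 * A * (z₂ τ)^2) MeasureTheory.volume 0 1 :=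
      ((continuous_const.mul (hz2.continuous.pow 2))).intervalIntegrable 0 1
    have h0 : 0 ≤ ∫ τ in (0:ℝ)..1, ((z₂ τ)^2 - A)^2 :=
      intervalIntegral.integral_nonneg (by norm_num) (fun _ _ => sq_nonneg _)
    have hexp : (∫ τ in (0:ℝ)..1, ((z₂ τ)^2 - A)^2) = B - 2 * A * A + A^2 := by
      have : (fun τ => ((z₂ τ)^2 - A)^2)
          = fun τ => ((z₂ τ)^4 - 2 * A * (z₂ τ)^2) + A^2 := by funext τ; ring
      rw [this, intervalIntegral.integral_add (h4.sub h2) (intervalIntegrable_const),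
        intervalIntegral.integral_sub h4 h2, intervalIntegral.integral_const_mul,
        intervalIntegral.integral_const]
      simp [Nq, N2q, hA, hB]
    nlinarith [h0, hexp, sq_nonneg A]
  have hcpos : 0 < c := by
    rw [hcc]
    have : (0:ℝ) < s - 1 := by linarith
    positivity
  have hc2 : c^2 = s * B / ((s - 1) * A) := by
    rw [hcc]
    rw [div_pow, mul_pow, mul_pow]
    rw [Real.sq_sqrt hBpos.le, Real.sq_sqrt hN2.le, Real.sq_sqrt (by linarith : (0:ℝ) ≤ s - 1)]
    congr 1
    rw [← Real.rpow_natCast ((2:ℝ) ^ ((1:ℝ)/4)) 2, ← Real.rpow_mul (by norm_num)]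
    rw [hsdef, Real.sqrt_eq_rpow]; norm_num
  have hAc : A * c^2 = (2 + s) * B := by
    have hne : ((s - 1) * A) ≠ 0 := by
      have : (0:ℝ) < s - 1 := by linarith
      positivity
    rw [hc2, mul_div_assoc', div_eq_iff hne]
    linear_combination (-(A*B))*hs
  have hQ : (A * c^2)^2 = 2 * (A * c^2 - B)^2 := by
    rw [hAc]; linear_combination (-(B^2))*hs
  -- computed quantities for the constant functions z₁ and ξ₁
  have hN1 : Nq z₁ = c^2 := by simp [Nq, hz1]
  have hN21 : N2q z₁ = c^4 := by simp [N2q, hz1]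
  have hNp1 : Npq z₁ = 0 := by simp [Npq, hz1]
  have hvN1 : vN z₁ ξ₁ = 2*(c*k) := by simp [vN, ipq, hz1, hξ1]
  have hvN21 : vN2 z₁ ξ₁ = 4*(c^3*k) := by simp [vN2, hz1, hξ1]
  have hvNp1 : vNp z₁ ξ₁ = 0 := by simp [vNp, hz1, hξ1]
  have hvN2' : vN z₂ ξ₂ = 2*I1 := rfl
  have hvN22 : vN2 z₂ ξ₂ = 4*I3 := rfl
  have hz10 : z₁ 0 = c := by rw [hz1]
  have hk10 : ξ₁ 0 = k := by rw [hξ1]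
  have hdd : deriv (deriv ξ₁) 0 = 0 := by rw [hξ1]; simp
  have hE := hlin1 0
  simp only [a1, b1, da1, db1, vP, Pq, hN1, hN21, hNp1, hvN1, hvN21, hvNp1, hvN2', hvN22,
    hz10, hk10, hdd, ← hA, ← hB] at hE
  have hPfac : c^4 * A - B * c^2 = c^2 * B * (1 + s) := by linear_combination c^2 * hAc
  have hPpos : 0 < c^4 * A - B * c^2 := by rw [hPfac]; positivity
  have hPne : c^4 * A - B * c^2 ≠ 0 := ne_of_gt hPpos
  have hcne : c ≠ 0 := ne_of_gt hcpos
  have hAne : A ≠ 0 := ne_of_gt hN2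
  have hBne : B ≠ 0 := ne_of_gt hBpos
  field_simp at hE
  have h9 : -(A^13*c^74) * (k*(B*A) - (2*c*A*I3 - c*B*I1)) = 0 := by
    have hDne : c^2*A - B ≠ 0 := by
      rw [show c^2*A - B = (1+s)*B by linear_combination hAc]
      exact mul_ne_zero (by linarith) hBne
    have hL : (2 *
          (-(0 * c ^ 6 * 2) + ((0 * c ^ 4 - 1) * 2 - c ^ 4 * A ^ 2 / (c ^ 2 * A - B) ^ 2) * k +
            c ^ 4 * A ^ 2 * 2 * k * 3 / (c ^ 2 * A - B) ^ 2) +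
        (2 ^ 2 * (0 * c ^ 4 * (c - 2 * k) + 2 * k * 3) -
          c ^ 4 * A *
              (2 * (c ^ 2 * A - B) * (c * 2 ^ 2 * I1 + A * k * 4) -
                A * (2 ^ 2 * (c ^ 2 * A - B) * k + 4 * (c * (c * (A * k * 4 + c * 2 * I1) - 4 * I3) - 2 * B * k))) /
            (c ^ 2 * A - B) ^ 3) +
      c ^ 4 * A * 2 ^ 3 *
          (c * 2 * (c ^ 2 * A - B) * I1 - A * (c * (c * (A * k * 4 + c * 2 * I1) - 4 * I3) - 2 * B * k)) /
        (c ^ 2 * A - B) ^ 3) = (20*k*(c^2*A-B)^3 + 6*c^4*A^2*k*(c^2*A-B) + 8*c^5*A*I1*(c^2*A-B) - 4*c^4*A^2*(4*A*c^2*k + 2*c^3*I1 - 4*c*I3 - 2*B*k)) / (c^2*A-B)^3 := by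
      field_simp
      ring
    have h0 : (20*k*(c^2*A-B)^3 + 6*c^4*A^2*k*(c^2*A-B) + 8*c^5*A*I1*(c^2*A-B) - 4*c^4*A^2*(4*A*c^2*k + 2*c^3*I1 - 4*c*I3 - 2*B*k)) / (c^2*A-B)^3 = 0 := by
      rw [← hL]; linear_combination hE
    have hpoly : (20*k*(c^2*A-B)^3 + 6*c^4*A^2*k*(c^2*A-B) + 8*c^5*A*I1*(c^2*A-B) - 4*c^4*A^2*(4*A*c^2*k + 2*c^3*I1 - 4*c*I3 - 2*B*k)) = 0 := (div_eq_zero_iff.1 h0).resolve_right (pow_ne_zero 3 hDne)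
    linear_combination (A^12*c^70/8) * hpoly + (A^12*c^70/8)*10*k*(A*c^2-B) * hQ
  have h10 : k*(B*A) - (2*c*A*I3 - c*B*I1) = 0 := by
    rcases mul_eq_zero.1 h9 with h | h
    · rw [neg_eq_zero] at h; exact absurd h (by positivity)
    · exact h
  have hkey : k = 2*c*I3/B - c*I1/A := by
    field_simp
    linear_combination h10
  -- now rewrite the right-hand side of the goal
  have hαpos : 0 < α := by
    rw [hα]
    have h0 : (0:ℝ) < s - 1 := by linarith
    have h1 : (0:ℝ) < s := by linarith
    positivity
  have hαv : α = B / (A * c^2) := by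
    rw [hα, hAc]
    rw [div_eq_div_iff (by linarith) (by positivity)]
    linear_combination B*hs
  have hsqrtα : Real.sqrt α = Real.sqrt B / (c * Real.sqrt A) := by
    rw [hαv, Real.sqrt_div hBpos.le, Real.sqrt_mul hN2.le, Real.sqrt_sq hcpos.le]
    ring
  have hX : α ^ (-(1:ℝ) / 2) = c * Real.sqrt A / Real.sqrt B := by
    rw [show (-(1:ℝ)/2) = -(1/2:ℝ) by norm_num, Real.rpow_neg hαpos.le,
      ← Real.sqrt_eq_rpow, hsqrtα, inv_div]
  have hip3 : ipq (fun τ => (z₂ τ)^3) ξ₂ = I3 := rfl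
  rw [hip3, hX, hkey]
  have hsA : Real.sqrt A ≠ 0 := by positivity
  have hsB : Real.sqrt B ≠ 0 := by positivity
  have hA2 : A = Real.sqrt A ^ 2 := (Real.sq_sqrt hN2.le).symm
  have hB2 : B = Real.sqrt B ^ 2 := (Real.sq_sqrt hBpos.le).symm
  conv_lhs => rw [hA2, hB2]
  field_simp
end

section
/- Let F be a real Hilbert space and E ⊆ F a dense linear subspace, and let T : E → F be a linear map that is Fredholm, i.e. ker T is finite-dimensional and the range of T is a closed subspace of F of finite codimension. Then T is self-adjoint if and only if T is symmetric and has index zero (dim ker T equals the codimension of the range of T). Moreover, in this case ker T = (range T)^⊥ and (ker T)^⊥ = range T, with orthogonal complements taken in F. -/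
open scoped RealInnerProductSpace

/-- Riesz representation of a bounded functional on a dense subspace. -/
lemma riesz_dense_ext
    {F : Type*} [NormedAddCommGroup F] [InnerProductSpace ℝ F] [CompleteSpace F]
    (E : Submodule ℝ F) (hE : Dense (E : Set F))
    (φ : E →ₗ[ℝ] ℝ) (C : ℝ) (hC : ∀ x : E, |φ x| ≤ C * ‖(x : F)‖) :
    ∃ z : F, ∀ x : E, φ x = ⟪(x : F), z⟫ := by
  have hb : ∀ x : E, ‖φ x‖ ≤ C * ‖x‖ := fun x => by
    simpa [Real.norm_eq_abs] using hC x
  let φL : E →L[ℝ] ℝ := LinearMap.mkContinuous φ C hb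
  let g : F →L[ℝ] ℝ :=
    φL.extend E.subtypeL
  refine ⟨(InnerProductSpace.toDual ℝ F).symm g, fun x => ?_⟩
  have h1 : g (x : F) = φL x := ContinuousLinearMap.extend_eq _ hE.denseRange_val
    isUniformEmbedding_subtype_val.isUniformInducing _
  have h2 : ⟪((InnerProductSpace.toDual ℝ F).symm g : F), (x : F)⟫ = g (x : F) := by
    simp [InnerProductSpace.toDual_symm_apply]
  rw [real_inner_comm, h2, h1]
  rfl

/-- A Fredholm operator `T : E → F` (dense domain `E` in the real
Hilbert space `F`) is self-adjoint iff it is symmetric of index zero; in that case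
`ker T = (range T)^⊥` and `(ker T)^⊥ = range T`. -/
theorem stmt13
    {F : Type*} [NormedAddCommGroup F] [InnerProductSpace ℝ F] [CompleteSpace F]
    (E : Submodule ℝ F) (hE : Dense (E : Set F))
    (T : E →ₗ[ℝ] F)
    (hker : FiniteDimensional ℝ (LinearMap.ker T))
    (hclosed : IsClosed (LinearMap.range T : Set F))
    (hcoker : FiniteDimensional ℝ (F ⧸ LinearMap.range T)) :
    (((∀ x y : E, ⟪T x, (y : F)⟫ = ⟪(x : F), T y⟫) ∧
        (∀ y : F, (∃ C : ℝ, 0 ≤ C ∧ ∀ x : E, |⟪T x, y⟫| ≤ C * ‖(x : F)‖) → y ∈ E))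
      ↔
      ((∀ x y : E, ⟪T x, (y : F)⟫ = ⟪(x : F), T y⟫) ∧
        Module.finrank ℝ (LinearMap.ker T) = Module.finrank ℝ (F ⧸ LinearMap.range T))) ∧
    (((∀ x y : E, ⟪T x, (y : F)⟫ = ⟪(x : F), T y⟫) ∧
        (∀ y : F, (∃ C : ℝ, 0 ≤ C ∧ ∀ x : E, |⟪T x, y⟫| ≤ C * ‖(x : F)‖) → y ∈ E)) →
      ((LinearMap.ker T).map E.subtype = (LinearMap.range T)ᗮ ∧
        ((LinearMap.ker T).map E.subtype)ᗮ = LinearMap.range T)) := by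
  set K : Submodule ℝ F := LinearMap.range T with hK
  set N : Submodule ℝ F := (LinearMap.ker T).map E.subtype with hN
  haveI : CompleteSpace K := hclosed.completeSpace_coe
  have hcompl : IsCompl K Kᗮ := Submodule.isCompl_orthogonal_of_hasOrthogonalProjection
  have horthorth : Kᗮᗮ = K := Submodule.orthogonal_orthogonal K
  haveI : FiniteDimensional ℝ Kᗮ :=
    (Submodule.quotientEquivOfIsCompl K Kᗮ hcompl).finiteDimensional
  have hdimQ : Module.finrank ℝ (F ⧸ K) = Module.finrank ℝ Kᗮ :=
    (Submodule.quotientEquivOfIsCompl K Kᗮ hcompl).finrank_eq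
  have hdimN : Module.finrank ℝ (LinearMap.ker T) = Module.finrank ℝ N :=
    (Submodule.equivMapOfInjective E.subtype E.injective_subtype
      (LinearMap.ker T)).finrank_eq
  -- Symmetry implies N ≤ Kᗮ
  have hNle : (∀ x y : E, ⟪T x, (y : F)⟫ = ⟪(x : F), T y⟫) → N ≤ Kᗮ := by
    intro hsym n hn
    obtain ⟨x, hx, rfl⟩ := hn
    rw [Submodule.mem_orthogonal]
    rintro u ⟨v, rfl⟩
    have := hsym v x
    rwa [LinearMap.mem_ker.mp hx, inner_zero_right] at this
  -- Self-adjointness implies N = Kᗮ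
  have hsa_eq : (∀ x y : E, ⟪T x, (y : F)⟫ = ⟪(x : F), T y⟫) →
      (∀ y : F, (∃ C : ℝ, 0 ≤ C ∧ ∀ x : E, |⟪T x, y⟫| ≤ C * ‖(x : F)‖) → y ∈ E) →
      N = Kᗮ := by
    intro hsym hdom
    refine le_antisymm (hNle hsym) ?_
    intro y hy
    have hy0 : ∀ x : E, ⟪T x, y⟫ = 0 := fun x =>
      (Submodule.mem_orthogonal K y).mp hy (T x) ⟨x, rfl⟩
    have hyE : y ∈ E := hdom y ⟨0, le_refl 0, fun x => by
      simp [hy0 x]⟩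
    have hTy : T ⟨y, hyE⟩ = 0 := by
      apply hE.eq_zero_of_inner_right ℝ
      intro v hv
      exact (hsym ⟨v, hv⟩ ⟨y, hyE⟩).symm.trans (hy0 ⟨v, hv⟩)
    exact ⟨⟨y, hyE⟩, LinearMap.mem_ker.mpr hTy, rfl⟩
  -- Symmetry plus N = Kᗮ implies self-adjointness (the domain condition)
  have hdom_of : (∀ x y : E, ⟪T x, (y : F)⟫ = ⟪(x : F), T y⟫) → N = Kᗮ →
      (∀ y : F, (∃ C : ℝ, 0 ≤ C ∧ ∀ x : E, |⟪T x, y⟫| ≤ C * ‖(x : F)‖) → y ∈ E) := by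
    intro hsym hNK y ⟨C, _, hC⟩
    -- bounded functional x ↦ ⟪T x, y⟫
    obtain ⟨z, hz⟩ := riesz_dense_ext E hE ((innerₛₗ ℝ y).comp T) C (fun x => by
      simpa [real_inner_comm] using hC x)
    have hz' : ∀ x : E, ⟪T x, y⟫ = ⟪(x : F), z⟫ := fun x => by
      have := hz x
      simpa [real_inner_comm] using this
    -- decompose z = T w + k
    have hzmem : z ∈ K ⊔ Kᗮ := by rw [hcompl.sup_eq_top]; trivial
    obtain ⟨r, hr, k, hk, hrk⟩ := Submodule.mem_sup.mp hzmem
    obtain ⟨w, rfl⟩ := hr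
    -- k lies in N, hence comes from the kernel
    obtain ⟨kE, hkE_ker, hkE⟩ := hNK ▸ hk
    -- main identity
    have key : ∀ x : E, ⟪T x, y - (w : F)⟫ = ⟪(x : F), k⟫ := by
      intro x
      rw [inner_sub_right, hz' x, ← hrk, inner_add_right, hsym x w]
      ring
    -- plug in the kernel element to get k = 0
    have hk0 : k = 0 := by
      have h := key kE
      rw [LinearMap.mem_ker.mp hkE_ker, inner_zero_left] at h
      rw [show ((kE : F)) = k from hkE] at h
      exact (inner_self_eq_zero.mp h.symm)
    -- hence y - w is orthogonal to the range, so lies in N ⊆ E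
    have hyw : y - (w : F) ∈ Kᗮ := by
      rw [Submodule.mem_orthogonal]
      rintro u ⟨v, rfl⟩
      rw [key v, hk0, inner_zero_right]
    have hywN : y - (w : F) ∈ N := by rw [hNK]; exact hyw
    have hywE : y - (w : F) ∈ E := Submodule.map_subtype_le E (LinearMap.ker T) hywN
    have : (y - (w : F)) + (w : F) ∈ E := E.add_mem hywE w.2
    simpa using this
  constructor
  · constructor
    · rintro ⟨hsym, hdom⟩
      refine ⟨hsym, ?_⟩
      have hNK := hsa_eq hsym hdom
      rw [hdimN, hNK, hdimQ]
    · rintro ⟨hsym, hidx⟩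
      refine ⟨hsym, ?_⟩
      have hNK : N = Kᗮ := by
        apply Submodule.eq_of_le_of_finrank_eq (hNle hsym)
        rw [← hdimN, ← hdimQ, hidx]
      exact hdom_of hsym hNK
  · rintro ⟨hsym, hdom⟩
    have hNK := hsa_eq hsym hdom
    exact ⟨hNK, by rw [hNK, horthorth]⟩
end

section
/- There exists a norm-continuous path (U_τ)_{τ∈[1,2]} of unitary (i.e. linear, isometric, surjective) operators of the real Hilbert space ℓ² = ℓ²(ℤ,ℝ) such that: (i) each U_τ maps the subspace h¹ bijectively onto h¹; (ii) U₁ e_n = e_{n−1} for all n ∈ ℤ; (iii) U₂ is the identity; and (iv) for every τ ∈ (1,2) there exist real numbers a, b > 0 (depending on τ) with U_τ^{−1}(e₀) = a·e₀ + b·e₁. -/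
open Set

noncomputable section
namespace Stmt15
open scoped ENNReal RealInnerProductSpace

abbrev H : Type := lp (fun _ : ℤ => ℝ) 2

lemma toReal2 : (2 : ℝ≥0∞).toReal = 2 := by norm_num

lemma sq_conv (x : ℝ) : ‖x‖ ^ (2 : ℝ≥0∞).toReal = x ^ 2 := by
  rw [toReal2, show (2:ℝ) = ((2:ℕ):ℝ) by norm_num, Real.rpow_natCast,
    Real.norm_eq_abs, sq_abs]

lemma memH_iff {f : ℤ → ℝ} : Memℓp f 2 ↔ Summable (fun n => (f n) ^ 2) := by
  rw [memℓp_gen_iff (by rw [toReal2]; norm_num)]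
  exact summable_congr fun n => sq_conv (f n)

lemma normSq (f : H) : ‖f‖ ^ 2 = ∑' n, (f n) ^ 2 := by
  have h := lp.norm_rpow_eq_tsum (p := 2) (by rw [toReal2]; norm_num) f
  rw [show ‖f‖ ^ (2:ℝ≥0∞).toReal = ‖f‖ ^ 2 by
      rw [toReal2, show (2:ℝ) = ((2:ℕ):ℝ) by norm_num, Real.rpow_natCast]] at h
  rw [h]
  exact tsum_congr fun n => sq_conv (f n)

lemma summable_sq (f : H) : Summable fun n => (f n) ^ 2 := memH_iff.1 (lp.memℓp f)

lemma inner_eq (f g : H) : ⟪f, g⟫ = ∑' n, f n * g n := by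
  rw [lp.inner_eq_tsum]; exact tsum_congr fun i => by simp [mul_comm]

lemma inner_single_left' (i : ℤ) (a : ℝ) (f : H) : ⟪lp.single 2 i a, f⟫ = a * f i := by
  rw [lp.inner_single_left]; simp [mul_comm]

lemma norm_eq_of_sq_eq {f g : H} (h : ∑' n, (f n)^2 = ∑' n, (g n)^2) : ‖f‖ = ‖g‖ := by
  have := (normSq f).trans (h.trans (normSq g).symm)
  exact (pow_le_pow_iff_left₀ (norm_nonneg _) (norm_nonneg _) two_ne_zero).1 this.le |>.antisymm
    ((pow_le_pow_iff_left₀ (norm_nonneg _) (norm_nonneg _) two_ne_zero).1 this.ge)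

lemma norm_le_of_sq_le {f g : H} (h : ∑' n, (f n)^2 ≤ ∑' n, (g n)^2) : ‖f‖ ≤ ‖g‖ := by
  have h1 := normSq f; have h2 := normSq g
  exact (pow_le_pow_iff_left₀ (norm_nonneg _) (norm_nonneg _) two_ne_zero).1
    (by rw [h1, h2]; exact h)


structure PairData where
  σ : ℤ → ℤ
  ε : ℤ → ℝ
  hinv : ∀ n, σ (σ n) = n
  hanti : ∀ n, ε (σ n) = - ε n
  hfix : ∀ n, σ n = n → ε n = 0
  hsq : ∀ n, σ n ≠ n → ε n * ε n = 1
  hgrow : ∀ n, |σ n| ≤ |n| + 2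

def PairData.equiv (d : PairData) : ℤ ≃ ℤ :=
  ⟨d.σ, d.σ, fun n => d.hinv n, fun n => d.hinv n⟩

lemma PairData.abs_eps_le (d : PairData) (n : ℤ) : |d.ε n| ≤ 1 := by
  by_cases h : d.σ n = n
  · simp [d.hfix n h]
  · have := d.hsq n h
    nlinarith [abs_nonneg (d.ε n), sq_abs (d.ε n)]

-- summability of reindexed squares
lemma summable_comp_sq (d : PairData) (x : H) :
    Summable fun n => (x (d.σ n)) ^ 2 :=
  (d.equiv.summable_iff (f := fun m => (x m) ^ 2)).2 (summable_sq x)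

lemma tsum_comp_sq (d : PairData) (x : H) :
    ∑' n, (x (d.σ n)) ^ 2 = ∑' n, (x n) ^ 2 :=
  d.equiv.tsum_eq (fun m => (x m) ^ 2)

/-- the building block: `x ↦ fun n => w n * x (e n)` -/
def wcompL (w : ℤ → ℝ) (hw : ∀ n, |w n| ≤ 1) (d : PairData) : H →ₗ[ℝ] H where
  toFun x := ⟨fun n => w n * x (d.σ n), by
    refine memH_iff.2 (Summable.of_nonneg_of_le (fun n => sq_nonneg _) (fun n => ?_)
      (summable_comp_sq d x))
    have hw2 : (w n)^2 ≤ 1 := by rw [sq_le_one_iff_abs_le_one]; exact hw n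
    have h1 : (w n * x (d.σ n))^2 = (w n)^2 * (x (d.σ n))^2 := by ring
    rw [h1]
    nlinarith [sq_nonneg (x (d.σ n))]⟩
  map_add' x y := by
    ext n
    simp only [lp.coeFn_add, Pi.add_apply]
    ring
  map_smul' c x := by
    ext n
    simp only [lp.coeFn_smul, Pi.smul_apply, smul_eq_mul, RingHom.id_apply]
    ring

lemma wcompL_apply (w : ℤ → ℝ) (hw) (d : PairData) (x : H) (n : ℤ) :
    (wcompL w hw d x) n = w n * x (d.σ n) := rfl

lemma wcompL_norm (w : ℤ → ℝ) (hw) (d : PairData) (x : H) :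
    ‖wcompL w hw d x‖ ≤ ‖x‖ := by
  have h1 : ‖wcompL w hw d x‖^2 = ∑' n, (w n * x (d.σ n))^2 := by
    have := lp.norm_rpow_eq_tsum (p := 2) (by rw [toReal2]; norm_num) (wcompL w hw d x)
    rw [show ‖wcompL w hw d x‖ ^ (2:ℝ≥0∞).toReal = ‖wcompL w hw d x‖ ^ 2 by
        rw [toReal2, show (2:ℝ) = ((2:ℕ):ℝ) by norm_num, Real.rpow_natCast]] at this
    rw [this]
    exact tsum_congr fun n => sq_conv _
  have h2 : ‖x‖^2 = ∑' n, (x n)^2 := by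
    have := lp.norm_rpow_eq_tsum (p := 2) (by rw [toReal2]; norm_num) x
    rw [show ‖x‖ ^ (2:ℝ≥0∞).toReal = ‖x‖ ^ 2 by
        rw [toReal2, show (2:ℝ) = ((2:ℕ):ℝ) by norm_num, Real.rpow_natCast]] at this
    rw [this]; exact tsum_congr fun n => sq_conv _
  have h3 : ∑' n, (w n * x (d.σ n))^2 ≤ ∑' n, (x n)^2 := by
    rw [← tsum_comp_sq d x]
    refine Summable.tsum_le_tsum (fun n => ?_) ?_ (summable_comp_sq d x)
    · have hw2 : (w n)^2 ≤ 1 := by rw [sq_le_one_iff_abs_le_one]; exact hw n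
      nlinarith [sq_nonneg (x (d.σ n))]
    · exact memH_iff.1 (lp.memℓp (wcompL w hw d x))
  have := h1.trans_le (h3.trans_eq h2.symm)
  exact (pow_le_pow_iff_left₀ (norm_nonneg _) (norm_nonneg _) two_ne_zero).1 this

def wcomp (w : ℤ → ℝ) (hw : ∀ n, |w n| ≤ 1) (d : PairData) : H →L[ℝ] H :=
  LinearMap.mkContinuous (wcompL w hw d) 1 (fun x => by
    simpa using wcompL_norm w hw d x)

lemma wcomp_apply (w : ℤ → ℝ) (hw) (d : PairData) (x : H) (n : ℤ) :
    (wcomp w hw d x) n = w n * x (d.σ n) := rfl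


def idPD : PairData :=
  ⟨id, fun _ => 0, fun _ => rfl, by simp, fun _ _ => rfl, fun n h => absurd rfl h,
   fun n => by simpa using by linarith [abs_nonneg n]⟩

lemma idPD_σ (n : ℤ) : idPD.σ n = n := rfl

def pairRot (d : PairData) (θ : ℝ) : H →L[ℝ] H :=
  wcomp (fun n => if d.σ n = n then 1 else 0)
    (fun n => by by_cases h : d.σ n = n <;> simp [h]) idPD
  + Real.cos θ • wcomp (fun n => if d.σ n = n then 0 else 1)
      (fun n => by by_cases h : d.σ n = n <;> simp [h]) idPD
  + Real.sin θ • wcomp d.ε d.abs_eps_le d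

lemma pairRot_apply (d : PairData) (θ : ℝ) (x : H) (n : ℤ) :
    (pairRot d θ x) n
      = (if d.σ n = n then 1 else Real.cos θ) * x n + d.ε n * Real.sin θ * x (d.σ n) := by
  simp only [pairRot, ContinuousLinearMap.add_apply, ContinuousLinearMap.smul_apply,
    lp.coeFn_add, lp.coeFn_smul, Pi.add_apply, Pi.smul_apply, smul_eq_mul,
    wcomp_apply, idPD_σ]
  split_ifs <;> ring

lemma tsum_invol (d : PairData) (F : ℤ → ℝ) (h : ∀ n, F (d.σ n) = - F n) :
    ∑' n, F n = 0 := by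
  have h1 : ∑' n, F (d.equiv n) = ∑' n, F n := d.equiv.tsum_eq F
  have h2 : ∑' n, F (d.equiv n) = - ∑' n, F n := by
    rw [show (fun n => F (d.equiv n)) = fun n => - F n from funext fun n => h n, tsum_neg]
  linarith [h1, h2.symm.trans h1]

lemma pairRot_norm (d : PairData) (θ : ℝ) (x : H) : ‖pairRot d θ x‖ = ‖x‖ := by
  apply norm_eq_of_sq_eq
  have hT := summable_sq (pairRot d θ x)
  have hx := summable_sq x
  have key : ∑' n, ((pairRot d θ x n)^2 - (x n)^2) = 0 := by
    apply tsum_invol d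
    intro n
    by_cases h : d.σ n = n
    · have hεn := d.hfix n h
      rw [h]
      simp [pairRot_apply, h, hεn]
    · have h2 : d.σ (d.σ n) ≠ d.σ n := by
        rw [d.hinv n]; exact fun hc => h hc.symm
      have hε := d.hsq n h
      have ha := d.hanti n
      have hs := Real.sin_sq_add_cos_sq θ
      rw [pairRot_apply, pairRot_apply, if_neg h, if_neg h2, d.hinv n, ha]
      linear_combination ((x n)^2 + (x (d.σ n))^2) * hs
        + ((x n)^2 + (x (d.σ n))^2) * Real.sin θ^2 * hε
  have h3 : ∑' n, ((pairRot d θ x) n)^2 - ∑' n, (x n)^2 = 0 := by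
    rw [← Summable.tsum_sub hT hx]; exact key
  linarith [h3]

lemma pairRot_inv_apply (d : PairData) (θ : ℝ) (x : H) :
    pairRot d θ (pairRot d (-θ) x) = x := by
  apply lp.ext; funext n
  by_cases h : d.σ n = n
  · have hεn := d.hfix n h
    simp [pairRot_apply, h, hεn]
  · have h2 : d.σ (d.σ n) ≠ d.σ n := by
      rw [d.hinv n]; exact fun hc => h hc.symm
    have hε := d.hsq n h
    have ha := d.hanti n
    have hs := Real.sin_sq_add_cos_sq θ
    rw [pairRot_apply, pairRot_apply, pairRot_apply, if_neg h, if_neg h2, if_neg h,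
      d.hinv n, ha, Real.cos_neg, Real.sin_neg]
    linear_combination (x n) * hs + (x n) * Real.sin θ^2 * hε

lemma pairRot_zero_apply (d : PairData) (x : H) : pairRot d 0 x = x := by
  apply lp.ext; funext n
  simp [pairRot_apply]


/-- The `h¹` set. -/
def M : Set H := {x : H | Summable fun n : ℤ => (n : ℝ) ^ 2 * (x n) ^ 2}

lemma M_comp_summable (d : PairData) {x : H} (hx : x ∈ M) :
    Summable fun n : ℤ => (n : ℝ) ^ 2 * (x (d.σ n)) ^ 2 := by
  have key : Summable fun m : ℤ => ((d.σ m : ℝ)) ^ 2 * (x m) ^ 2 := by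
    apply Summable.of_nonneg_of_le
      (fun m => by positivity)
      (fun m => ?_)
      (((hx.mul_left 2).add ((summable_sq x).mul_left 8)))
    have hg := d.hgrow m
    have h1 : ((d.σ m : ℝ)) ^ 2 ≤ 2 * (m:ℝ)^2 + 8 := by
      have h2 : |((d.σ m : ℤ) : ℝ)| ≤ |((m : ℤ) : ℝ)| + 2 := by
        rw [← Int.cast_abs, ← Int.cast_abs]
        exact_mod_cast hg
      have h4 : |((d.σ m : ℤ) : ℝ)|^2 ≤ (|((m : ℤ) : ℝ)| + 2)^2 :=
        pow_le_pow_left₀ (abs_nonneg _) h2 2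
      nlinarith [sq_abs ((d.σ m : ℤ) : ℝ), sq_abs ((m : ℤ) : ℝ),
        sq_nonneg (|((m : ℤ) : ℝ)| - 2), abs_nonneg ((m : ℤ) : ℝ)]
    nlinarith [sq_nonneg (x m), sq_nonneg ((m:ℝ))]
  have := (d.equiv.summable_iff
    (f := fun m : ℤ => ((d.σ m : ℝ)) ^ 2 * (x m) ^ 2)).2 key
  convert this using 2 with n
  simp only [PairData.equiv, Equiv.coe_fn_mk, Function.comp]
  rw [d.hinv n]

lemma pairRot_mapsTo_M (d : PairData) (θ : ℝ) {x : H} (hx : x ∈ M) :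
    pairRot d θ x ∈ M := by
  refine Summable.of_nonneg_of_le (fun n => by positivity) (fun n => ?_)
    ((hx.mul_left 2).add ((M_comp_summable d hx).mul_left 2))
  rw [pairRot_apply]
  have h1 : |(if d.σ n = n then (1:ℝ) else Real.cos θ)| ≤ 1 := by
    split_ifs
    · norm_num
    · exact Real.abs_cos_le_one θ
  have h2 : |d.ε n * Real.sin θ| ≤ 1 := by
    rw [abs_mul]
    exact mul_le_one₀ (d.abs_eps_le n) (abs_nonneg _) (Real.abs_sin_le_one θ)
  set a := (if d.σ n = n then (1:ℝ) else Real.cos θ) with ha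
  set b := d.ε n * Real.sin θ with hb
  have ha2 : a^2 ≤ 1 := by rw [sq_le_one_iff_abs_le_one]; exact h1
  have hb2 : b^2 ≤ 1 := by rw [sq_le_one_iff_abs_le_one]; exact h2
  have expand : (a * x n + b * x (d.σ n))^2 ≤ 2 * (x n)^2 + 2 * (x (d.σ n))^2 := by
    nlinarith [sq_nonneg (a * x n - b * x (d.σ n)), sq_nonneg (x n), sq_nonneg (x (d.σ n)),
      mul_le_mul_of_nonneg_right ha2 (sq_nonneg (x n)),
      mul_le_mul_of_nonneg_right hb2 (sq_nonneg (x (d.σ n)))]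
  calc (n:ℝ)^2 * (a * x n + b * x (d.σ n))^2
      ≤ (n:ℝ)^2 * (2 * (x n)^2 + 2 * (x (d.σ n))^2) :=
        mul_le_mul_of_nonneg_left expand (sq_nonneg _)
    _ = 2 * ((n:ℝ)^2 * (x n)^2) + 2 * ((n:ℝ)^2 * (x (d.σ n))^2) := by ring
  

lemma M_add {x y : H} (hx : x ∈ M) (hy : y ∈ M) : x + y ∈ M := by
  refine Summable.of_nonneg_of_le (fun n => by positivity) (fun n => ?_)
    ((hx.mul_left 2).add (hy.mul_left 2))
  have : ((x + y : H) n) = x n + y n := by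
    rw [lp.coeFn_add]; rfl
  rw [this]
  nlinarith [sq_nonneg (x n - y n), sq_nonneg ((n:ℝ)), sq_nonneg (x n + y n),
    mul_le_mul_of_nonneg_left (sq_nonneg (x n - y n)) (sq_nonneg ((n:ℝ)))]

lemma M_smul (c : ℝ) {x : H} (hx : x ∈ M) : c • x ∈ M := by
  refine Summable.of_nonneg_of_le (fun n => by positivity) (fun n => ?_)
    (hx.mul_left (c^2))
  have : ((c • x : H) n) = c * x n := by
    rw [lp.coeFn_smul]; rfl
  rw [this]
  calc (n:ℝ)^2 * (c * x n)^2 = c^2 * ((n:ℝ)^2 * (x n)^2) := by ring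
  _ ≤ c^2 * ((n:ℝ)^2 * (x n)^2) := le_refl _

lemma M_sub {x y : H} (hx : x ∈ M) (hy : y ∈ M) : x - y ∈ M := by
  have := M_add hx (M_smul (-1) hy)
  convert this using 1
  module

lemma M_single (i : ℤ) (a : ℝ) : lp.single 2 i a ∈ M := by
  apply summable_of_ne_finset_zero (s := {i})
  intro n hn
  simp only [Finset.mem_singleton] at hn
  have : (lp.single 2 i a : H) n = 0 := by
    rw [lp.single_apply]; exact dif_neg hn
  rw [this]
  simp

/-- the basis vector `e₀`. -/
def u : H := lp.single 2 (0:ℤ) (1:ℝ)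

lemma inner_uu : ⟪u, u⟫ = 1 := by
  rw [u, inner_single_left', lp.single_apply_self]; norm_num

/-- rank-one operator `x ↦ ⟪a, x⟫ • b`. -/
def rk (a b : H) : H →L[ℝ] H := (innerSL ℝ a).smulRight b

lemma rk_apply (a b x : H) : rk a b x = ⟪a, x⟫ • b := rfl

/-- Rotation sending `v` to `u` in the plane they span (if `1 + ⟪u,v⟫ ≠ 0`). -/
def Wmap (v : H) : H →L[ℝ] H :=
  ContinuousLinearMap.id ℝ H - ((1 + ⟪u, v⟫)⁻¹) • rk (u + v) (u + v) + (2:ℝ) • rk v u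

/-- its inverse, sending `u` to `v`. -/
def Wmap' (v : H) : H →L[ℝ] H :=
  ContinuousLinearMap.id ℝ H - ((1 + ⟪u, v⟫)⁻¹) • rk (u + v) (u + v) + (2:ℝ) • rk u v

lemma Wmap_apply (v x : H) :
    Wmap v x = x - ((1 + ⟪u, v⟫)⁻¹ * ⟪u + v, x⟫) • (u + v) + (2 * ⟪v, x⟫) • u := by
  simp only [Wmap, ContinuousLinearMap.add_apply, ContinuousLinearMap.sub_apply,
    ContinuousLinearMap.smul_apply, ContinuousLinearMap.id_apply, rk_apply,
    smul_smul]

lemma Wmap'_apply (v x : H) :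
    Wmap' v x = x - ((1 + ⟪u, v⟫)⁻¹ * ⟪u + v, x⟫) • (u + v) + (2 * ⟪u, x⟫) • v := by
  simp only [Wmap', ContinuousLinearMap.add_apply, ContinuousLinearMap.sub_apply,
    ContinuousLinearMap.smul_apply, ContinuousLinearMap.id_apply, rk_apply,
    smul_smul]

lemma Wmap_mem_M {v : H} (hv : v ∈ M) (x : H) (hx : x ∈ M) : Wmap v x ∈ M := by
  rw [Wmap_apply]
  exact M_add (M_sub hx (M_smul _ (M_add (M_single 0 1) hv))) (M_smul _ (M_single 0 1))

lemma Wmap'_mem_M {v : H} (hv : v ∈ M) (x : H) (hx : x ∈ M) : Wmap' v x ∈ M := by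
  rw [Wmap'_apply]
  exact M_add (M_sub hx (M_smul _ (M_add (M_single 0 1) hv))) (M_smul _ hv)

lemma Wmap_inner (v : H) (hv : ⟪v, v⟫ = 1) (ht : 1 + ⟪u, v⟫ ≠ 0) (x : H) :
    ⟪Wmap v x, Wmap v x⟫ = ⟪x, x⟫ := by
  have h1 : ⟪x, u⟫ = ⟪u, x⟫ := real_inner_comm u x
  have h2 : ⟪x, v⟫ = ⟪v, x⟫ := real_inner_comm v x
  have h3 : ⟪v, u⟫ = ⟪u, v⟫ := real_inner_comm u v
  simp only [Wmap_apply, inner_sub_left, inner_sub_right, inner_add_left, inner_add_right,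
    real_inner_smul_left, real_inner_smul_right, inner_uu, hv, h1, h2, h3]
  field_simp
  ring

lemma Wmap_norm (v : H) (hv : ⟪v, v⟫ = 1) (ht : 1 + ⟪u, v⟫ ≠ 0) (x : H) :
    ‖Wmap v x‖ = ‖x‖ := by
  have := Wmap_inner v hv ht x
  rw [real_inner_self_eq_norm_sq, real_inner_self_eq_norm_sq] at this
  exact (pow_le_pow_iff_left₀ (norm_nonneg _) (norm_nonneg _) two_ne_zero).1 this.le |>.antisymm
    ((pow_le_pow_iff_left₀ (norm_nonneg _) (norm_nonneg _) two_ne_zero).1 this.ge)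

lemma Wmap_Wmap' (v : H) (hv : ⟪v, v⟫ = 1) (ht : 1 + ⟪u, v⟫ ≠ 0) (x : H) :
    Wmap v (Wmap' v x) = x := by
  have h1 : ⟪x, u⟫ = ⟪u, x⟫ := real_inner_comm u x
  have h2 : ⟪x, v⟫ = ⟪v, x⟫ := real_inner_comm v x
  have h3 : ⟪v, u⟫ = ⟪u, v⟫ := real_inner_comm u v
  simp only [Wmap_apply, Wmap'_apply, inner_sub_left, inner_sub_right, inner_add_left,
    inner_add_right, real_inner_smul_left, real_inner_smul_right, inner_uu, hv, h1, h2, h3,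
    smul_add]
  match_scalars <;> field_simp <;> ring

lemma Wmap'_Wmap (v : H) (hv : ⟪v, v⟫ = 1) (ht : 1 + ⟪u, v⟫ ≠ 0) (x : H) :
    Wmap' v (Wmap v x) = x := by
  have h1 : ⟪x, u⟫ = ⟪u, x⟫ := real_inner_comm u x
  have h2 : ⟪x, v⟫ = ⟪v, x⟫ := real_inner_comm v x
  have h3 : ⟪v, u⟫ = ⟪u, v⟫ := real_inner_comm u v
  simp only [Wmap_apply, Wmap'_apply, inner_sub_left, inner_sub_right, inner_add_left,
    inner_add_right, real_inner_smul_left, real_inner_smul_right, inner_uu, hv, h1, h2, h3,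
    smul_add]
  match_scalars <;> field_simp <;> ring

lemma Wmap_v (v : H) (hv : ⟪v, v⟫ = 1) (ht : 1 + ⟪u, v⟫ ≠ 0) :
    Wmap v v = u := by
  have h3 : ⟪v, u⟫ = ⟪u, v⟫ := real_inner_comm u v
  simp only [Wmap_apply, inner_add_left, hv, h3, smul_add]
  match_scalars <;> field_simp <;> ring

lemma Wmap_u (x : H) : Wmap u x = x := by
  simp only [Wmap_apply, inner_add_left, inner_uu, smul_add]
  match_scalars <;> field_simp <;> ring


lemma single_coord (i j : ℤ) (a : ℝ) : (lp.single 2 i a : H) j = if j = i then a else 0 := by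
  rw [lp.single_apply]
  by_cases h : j = i
  · subst h; simp
  · simp [h]

def sA : ℤ → ℤ := fun n => -n
def eA : ℤ → ℝ := fun n => if 0 < n then 1 else if n < 0 then -1 else 0
def sA' : ℤ → ℤ := fun n => 1 - n
def eA' : ℤ → ℝ := fun n => if 1 ≤ n then 1 else -1
def sB : ℤ → ℤ := fun n => if n ≤ 0 then (if n % 2 = 0 then n - 1 else n + 1) else n
def eB : ℤ → ℝ := fun n => if n ≤ 0 then (if n % 2 = 0 then 1 else -1) else 0

def dA : PairData where
  σ := sA
  ε := eA
  hinv n := by simp [sA]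
  hanti n := by
    rcases lt_trichotomy n 0 with h | rfl | h
    · simp [sA, eA, h, show ¬ (0 < n) by omega]
    · simp [sA, eA]
    · simp [sA, eA, h, show ¬ (n < 0) by omega]
  hfix n h := by
    have : n = 0 := by simp [sA] at h; omega
    subst this; simp [eA]
  hsq n h := by
    have : n ≠ 0 := by simp [sA] at h; omega
    simp only [eA]
    split_ifs <;> first | (exfalso; omega) | norm_num
  hgrow n := by rw [sA, abs_neg]; omega

def dA' : PairData where
  σ := sA'
  ε := eA'
  hinv n := by simp [sA']
  hanti n := by
    by_cases h : 1 ≤ n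
    · simp [sA', eA', h, show ¬ (n ≤ 0) by omega]
    · simp [sA', eA', h, show n ≤ 0 by omega]
  hfix n h := by exfalso; simp [sA'] at h; omega
  hsq n _ := by
    simp only [eA']
    split_ifs <;> norm_num
  hgrow n := by
    simp only [sA', Int.abs_eq_natAbs]
    omega

def dB : PairData where
  σ := sB
  ε := eB
  hinv n := by
    simp only [sB]
    split_ifs <;> omega
  hanti n := by
    simp only [sB, eB]
    split_ifs <;> first | (exfalso; omega) | norm_num
  hfix n h := by
    simp only [sB] at h
    simp only [eB]
    split_ifs at h ⊢ <;> first | (exfalso; omega) | norm_num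
  hsq n h := by
    simp only [sB] at h
    simp only [eB]
    split_ifs at h ⊢ <;> first | (exfalso; omega) | norm_num
  hgrow n := by
    simp only [sB, Int.abs_eq_natAbs]
    split_ifs <;> omega

lemma dA_σ (n : ℤ) : dA.σ n = -n := rfl
lemma dA'_σ (n : ℤ) : dA'.σ n = 1 - n := rfl
lemma dB_σ_pos {n : ℤ} (h : 0 < n) : dB.σ n = n := by
  show sB n = n; simp only [sB]; split_ifs <;> omega
lemma dB_σ_nfix {n : ℤ} (h : n ≤ 0) : dB.σ n ≠ n := by
  show sB n ≠ n; simp only [sB]; split_ifs <;> omega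
lemma dB_ε_pos {n : ℤ} (h : 0 < n) : dB.ε n = 0 := by
  show eB n = 0; simp only [eB]; split_ifs <;> first | (exfalso; omega) | rfl
lemma dA_ε_pos {n : ℤ} (h : 0 < n) : dA.ε n = 1 := by
  show eA n = 1; simp only [eA]; split_ifs <;> first | (exfalso; omega) | rfl
lemma dA_ε_neg {n : ℤ} (h : n < 0) : dA.ε n = -1 := by
  show eA n = -1; simp only [eA]; split_ifs <;> first | (exfalso; omega) | rfl
lemma dA_ε_zero : dA.ε 0 = 0 := by
  show eA 0 = 0; simp [eA]
lemma dA'_ε_ge {n : ℤ} (h : 1 ≤ n) : dA'.ε n = 1 := by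
  show eA' n = 1; simp only [eA']; split_ifs <;> first | (exfalso; omega) | rfl
lemma dA'_ε_le {n : ℤ} (h : n ≤ 0) : dA'.ε n = -1 := by
  show eA' n = -1; simp only [eA']; split_ifs <;> first | (exfalso; omega) | rfl

lemma dB_σ_zero : dB.σ 0 = -1 := by
  show sB 0 = -1; norm_num [sB]
lemma dB_σ_m1 : dB.σ (-1) = 0 := by
  show sB (-1) = 0; norm_num [sB]
lemma dB_ε_zero : dB.ε 0 = 1 := by
  show eB 0 = 1; norm_num [eB]
lemma dB_ε_m1 : dB.ε (-1) = -1 := by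
  show eB (-1) = -1; norm_num [eB]

lemma sqrt2_sq : Real.sqrt 2 ^ 2 = 2 := Real.sq_sqrt (by norm_num)

/-- At `θ = π`, the `dA`-conjugated block rotation is minus the reflection `n ↦ -n`. -/
lemma R1pi (x : H) (n : ℤ) :
    (pairRot dA (Real.pi/4) (pairRot dB Real.pi (pairRot dA (-(Real.pi/4)) x))) n
      = - x (-n) := by
  have h2 := sqrt2_sq
  have c4 := Real.cos_pi_div_four
  have s4 := Real.sin_pi_div_four
  rcases lt_trichotomy n 0 with hn | rfl | hn
  · have hyn : (pairRot dA (-(Real.pi/4)) x) n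
        = Real.sqrt 2/2 * x n + Real.sqrt 2/2 * x (-n) := by
      rw [pairRot_apply, dA_σ, if_neg (by omega), dA_ε_neg hn, Real.cos_neg,
        Real.sin_neg, c4, s4]; ring
    have hymn : (pairRot dA (-(Real.pi/4)) x) (-n)
        = Real.sqrt 2/2 * x (-n) - Real.sqrt 2/2 * x n := by
      rw [pairRot_apply, dA_σ, neg_neg, if_neg (by omega), dA_ε_pos (by omega),
        Real.cos_neg, Real.sin_neg, c4, s4]; ring
    have hbn : (pairRot dB Real.pi (pairRot dA (-(Real.pi/4)) x)) n
        = - (pairRot dA (-(Real.pi/4)) x) n := by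
      rw [pairRot_apply, if_neg (dB_σ_nfix hn.le), Real.cos_pi, Real.sin_pi]; ring
    have hbmn : (pairRot dB Real.pi (pairRot dA (-(Real.pi/4)) x)) (-n)
        = (pairRot dA (-(Real.pi/4)) x) (-n) := by
      rw [pairRot_apply, dB_σ_pos (by omega), if_pos rfl, dB_ε_pos (by omega),
        Real.sin_pi]; ring
    rw [pairRot_apply, dA_σ, if_neg (by omega), dA_ε_neg hn, c4, s4, hbn, hbmn,
      hyn, hymn]
    linear_combination (-(x (-n))/2) * h2
  · have hy0 : (pairRot dA (-(Real.pi/4)) x) (0:ℤ) = x 0 := by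
      rw [pairRot_apply, dA_σ, neg_zero, if_pos rfl, dA_ε_zero]; ring
    have hb0 : (pairRot dB Real.pi (pairRot dA (-(Real.pi/4)) x)) (0:ℤ)
        = - (pairRot dA (-(Real.pi/4)) x) (0:ℤ) := by
      rw [pairRot_apply, if_neg (dB_σ_nfix le_rfl), Real.cos_pi, Real.sin_pi]; ring
    rw [pairRot_apply, dA_σ, neg_zero, if_pos rfl, dA_ε_zero, hb0, hy0]
    ring
  · have hyn : (pairRot dA (-(Real.pi/4)) x) n
        = Real.sqrt 2/2 * x n - Real.sqrt 2/2 * x (-n) := by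
      rw [pairRot_apply, dA_σ, if_neg (by omega), dA_ε_pos hn, Real.cos_neg,
        Real.sin_neg, c4, s4]; ring
    have hymn : (pairRot dA (-(Real.pi/4)) x) (-n)
        = Real.sqrt 2/2 * x (-n) + Real.sqrt 2/2 * x n := by
      rw [pairRot_apply, dA_σ, neg_neg, if_neg (by omega), dA_ε_neg (by omega),
        Real.cos_neg, Real.sin_neg, c4, s4]; ring
    have hbn : (pairRot dB Real.pi (pairRot dA (-(Real.pi/4)) x)) n
        = (pairRot dA (-(Real.pi/4)) x) n := by
      rw [pairRot_apply, dB_σ_pos hn, if_pos rfl, dB_ε_pos hn, Real.sin_pi]; ring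
    have hbmn : (pairRot dB Real.pi (pairRot dA (-(Real.pi/4)) x)) (-n)
        = - (pairRot dA (-(Real.pi/4)) x) (-n) := by
      rw [pairRot_apply, if_neg (dB_σ_nfix (by omega)), Real.cos_pi, Real.sin_pi]; ring
    rw [pairRot_apply, dA_σ, if_neg (by omega), dA_ε_pos hn, c4, s4, hbn, hbmn,
      hyn, hymn]
    linear_combination (-(x (-n))/2) * h2

/-- At `θ = π`, the `dA'`-conjugated block rotation is minus the reflection `n ↦ 1 - n`. -/
lemma R2pi (x : H) (n : ℤ) :
    (pairRot dA' (Real.pi/4) (pairRot dB Real.pi (pairRot dA' (-(Real.pi/4)) x))) n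
      = - x (1 - n) := by
  have h2 := sqrt2_sq
  have c4 := Real.cos_pi_div_four
  have s4 := Real.sin_pi_div_four
  rcases le_or_gt n 0 with hn | hn
  · have hyn : (pairRot dA' (-(Real.pi/4)) x) n
        = Real.sqrt 2/2 * x n + Real.sqrt 2/2 * x (1 - n) := by
      rw [pairRot_apply, dA'_σ, if_neg (by omega), dA'_ε_le hn, Real.cos_neg,
        Real.sin_neg, c4, s4]; ring
    have hymn : (pairRot dA' (-(Real.pi/4)) x) (1 - n)
        = Real.sqrt 2/2 * x (1 - n) - Real.sqrt 2/2 * x n := by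
      rw [pairRot_apply, dA'_σ, if_neg (by omega), dA'_ε_ge (by omega),
        Real.cos_neg, Real.sin_neg, c4, s4, show (1 : ℤ) - (1 - n) = n by ring]; ring
    have hbn : (pairRot dB Real.pi (pairRot dA' (-(Real.pi/4)) x)) n
        = - (pairRot dA' (-(Real.pi/4)) x) n := by
      rw [pairRot_apply, if_neg (dB_σ_nfix hn), Real.cos_pi, Real.sin_pi]; ring
    have hbmn : (pairRot dB Real.pi (pairRot dA' (-(Real.pi/4)) x)) (1 - n)
        = (pairRot dA' (-(Real.pi/4)) x) (1 - n) := by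
      rw [pairRot_apply, dB_σ_pos (by omega), if_pos rfl, dB_ε_pos (by omega),
        Real.sin_pi]; ring
    rw [pairRot_apply, dA'_σ, if_neg (by omega), dA'_ε_le hn, c4, s4, hbn, hbmn,
      hyn, hymn]
    linear_combination (-(x (1-n))/2) * h2
  · have hyn : (pairRot dA' (-(Real.pi/4)) x) n
        = Real.sqrt 2/2 * x n - Real.sqrt 2/2 * x (1 - n) := by
      rw [pairRot_apply, dA'_σ, if_neg (by omega), dA'_ε_ge (by omega), Real.cos_neg,
        Real.sin_neg, c4, s4]; ring
    have hymn : (pairRot dA' (-(Real.pi/4)) x) (1 - n)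
        = Real.sqrt 2/2 * x (1 - n) + Real.sqrt 2/2 * x n := by
      rw [pairRot_apply, dA'_σ, if_neg (by omega), dA'_ε_le (by omega),
        Real.cos_neg, Real.sin_neg, c4, s4, show (1 : ℤ) - (1 - n) = n by ring]; ring
    have hbn : (pairRot dB Real.pi (pairRot dA' (-(Real.pi/4)) x)) n
        = (pairRot dA' (-(Real.pi/4)) x) n := by
      rw [pairRot_apply, dB_σ_pos hn, if_pos rfl, dB_ε_pos hn, Real.sin_pi]; ring
    have hbmn : (pairRot dB Real.pi (pairRot dA' (-(Real.pi/4)) x)) (1 - n)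
        = - (pairRot dA' (-(Real.pi/4)) x) (1 - n) := by
      rw [pairRot_apply, if_neg (dB_σ_nfix (by omega)), Real.cos_pi, Real.sin_pi]; ring
    rw [pairRot_apply, dA'_σ, if_neg (by omega), dA'_ε_ge (by omega), c4, s4, hbn, hbmn,
      hyn, hymn]
    linear_combination (-(x (1-n))/2) * h2


def e1 : H := lp.single 2 (1:ℤ) (1:ℝ)

open ContinuousLinearMap in
/-- The path of block-rotation unitaries conjugating to both reflections. -/
def Vop (θ : ℝ) : H →L[ℝ] H :=
  pairRot dA (Real.pi/4) ∘L pairRot dB θ ∘L pairRot dA (-(Real.pi/4)) ∘L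
    pairRot dA' (Real.pi/4) ∘L pairRot dB θ ∘L pairRot dA' (-(Real.pi/4))

def yv (φ : ℝ) : H := Real.cos φ • u + Real.sin φ • e1

lemma yv_coord (φ : ℝ) (n : ℤ) :
    (yv φ) n = (if n = 0 then Real.cos φ else 0) + (if n = 1 then Real.sin φ else 0) := by
  have : (yv φ) n = Real.cos φ * (u n) + Real.sin φ * (e1 n) := by
    rw [yv, lp.coeFn_add, lp.coeFn_smul, lp.coeFn_smul]
    simp
  rw [this, u, e1, lp.single_apply, lp.single_apply]
  split_ifs <;> subst_vars <;> simp_all [Pi.single_apply]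

lemma yv_0 (φ : ℝ) : (yv φ) 0 = Real.cos φ := by rw [yv_coord]; norm_num
lemma yv_1 (φ : ℝ) : (yv φ) 1 = Real.sin φ := by rw [yv_coord]; norm_num
lemma yv_m1 (φ : ℝ) : (yv φ) (-1) = 0 := by rw [yv_coord]; norm_num
lemma yv_2 (φ : ℝ) : (yv φ) 2 = 0 := by rw [yv_coord]; norm_num

lemma v_zero (θ φ : ℝ) (hθ : θ = 2 * φ) :
    (Vop θ (yv φ)) 0
      = (Real.cos φ - Real.sin φ)^2 * (Real.cos φ + Real.sin φ)
          * (1 + Real.cos φ * Real.sin φ)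
        - 2 * Real.sqrt 2 * (Real.cos φ)^2 * (Real.sin φ)^3 := by
  have h2 := sqrt2_sq
  have c4 := Real.cos_pi_div_four
  have s4 := Real.sin_pi_div_four
  set c := Real.cos φ with hc
  set s := Real.sin φ with hs
  have h1 : c^2 + s^2 = 1 := by rw [hc, hs]; rw [add_comm]; exact Real.sin_sq_add_cos_sq φ
  set z2 : H := pairRot dA' (-(Real.pi/4)) (yv φ) with hz2
  set z3 : H := pairRot dB θ z2 with hz3
  set z4 : H := pairRot dA' (Real.pi/4) z3 with hz4
  set z5 : H := pairRot dA (-(Real.pi/4)) z4 with hz5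
  set z6 : H := pairRot dB θ z5 with hz6
  have e20 : z2 0 = Real.sqrt 2/2 * (c + s) := by
    rw [hz2, pairRot_apply, dA'_σ, show (1:ℤ) - 0 = 1 by norm_num,
      if_neg (by norm_num : (1:ℤ) ≠ 0), dA'_ε_le (le_refl (0:ℤ)), Real.cos_neg,
      Real.sin_neg, c4, s4, yv_0, yv_1]
    ring
  have e21 : z2 1 = Real.sqrt 2/2 * (s - c) := by
    rw [hz2, pairRot_apply, dA'_σ, show (1:ℤ) - 1 = 0 by norm_num,
      if_neg (by norm_num : (0:ℤ) ≠ 1), dA'_ε_ge (le_refl (1:ℤ)), Real.cos_neg,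
      Real.sin_neg, c4, s4, yv_0, yv_1]
    ring
  have e2m1 : z2 (-1) = 0 := by
    rw [hz2, pairRot_apply, dA'_σ, show (1:ℤ) - -1 = 2 by norm_num,
      if_neg (by norm_num : (2:ℤ) ≠ -1), dA'_ε_le (by norm_num : (-1:ℤ) ≤ 0),
      Real.cos_neg, Real.sin_neg, c4, s4, yv_m1, yv_2]
    ring
  have e22 : z2 2 = 0 := by
    rw [hz2, pairRot_apply, dA'_σ, show (1:ℤ) - 2 = -1 by norm_num,
      if_neg (by norm_num : (-1:ℤ) ≠ 2), dA'_ε_ge (by norm_num : (1:ℤ) ≤ 2),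
      Real.cos_neg, Real.sin_neg, c4, s4, yv_m1, yv_2]
    ring
  have e30 : z3 0 = Real.cos θ * (Real.sqrt 2/2 * (c + s)) := by
    rw [hz3, pairRot_apply, dB_σ_zero, if_neg (by norm_num : (-1:ℤ) ≠ 0),
      dB_ε_zero, e20, e2m1]
    ring
  have e31 : z3 1 = Real.sqrt 2/2 * (s - c) := by
    rw [hz3, pairRot_apply, dB_σ_pos (by norm_num : (0:ℤ) < 1), if_pos rfl,
      dB_ε_pos (by norm_num : (0:ℤ) < 1), e21]
    ring
  have e3m1 : z3 (-1) = - Real.sin θ * (Real.sqrt 2/2 * (c + s)) := by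
    rw [hz3, pairRot_apply, dB_σ_m1, if_neg (by norm_num : (0:ℤ) ≠ -1),
      dB_ε_m1, e20, e2m1]
    ring
  have e32 : z3 2 = 0 := by
    rw [hz3, pairRot_apply, dB_σ_pos (by norm_num : (0:ℤ) < 2), if_pos rfl,
      dB_ε_pos (by norm_num : (0:ℤ) < 2), e22]
    ring
  have e40 : z4 0 = Real.sqrt 2/2 * (z3 0) - Real.sqrt 2/2 * (z3 1) := by
    rw [hz4, pairRot_apply, dA'_σ, show (1:ℤ) - 0 = 1 by norm_num,
      if_neg (by norm_num : (1:ℤ) ≠ 0), dA'_ε_le (le_refl (0:ℤ)), c4, s4]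
    ring
  have e41 : z4 1 = Real.sqrt 2/2 * (z3 1) + Real.sqrt 2/2 * (z3 0) := by
    rw [hz4, pairRot_apply, dA'_σ, show (1:ℤ) - 1 = 0 by norm_num,
      if_neg (by norm_num : (0:ℤ) ≠ 1), dA'_ε_ge (le_refl (1:ℤ)), c4, s4]
    ring
  have e4m1 : z4 (-1) = Real.sqrt 2/2 * (z3 (-1)) := by
    rw [hz4, pairRot_apply, dA'_σ, show (1:ℤ) - -1 = 2 by norm_num,
      if_neg (by norm_num : (2:ℤ) ≠ -1), dA'_ε_le (by norm_num : (-1:ℤ) ≤ 0),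
      c4, s4, e32]
    ring
  have e50 : z5 0 = z4 0 := by
    rw [hz5, pairRot_apply, dA_σ, neg_zero, if_pos rfl, dA_ε_zero]
    ring
  have e5m1 : z5 (-1) = Real.sqrt 2/2 * (z4 (-1)) + Real.sqrt 2/2 * (z4 1) := by
    rw [hz5, pairRot_apply, dA_σ, show -(-1:ℤ) = 1 by norm_num,
      if_neg (by norm_num : (1:ℤ) ≠ -1), dA_ε_neg (by norm_num : (-1:ℤ) < 0),
      Real.cos_neg, Real.sin_neg, c4, s4]
    ring
  have e60 : z6 0 = Real.cos θ * (z5 0) + Real.sin θ * (z5 (-1)) := by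
    rw [hz6, pairRot_apply, dB_σ_zero, if_neg (by norm_num : (-1:ℤ) ≠ 0), dB_ε_zero]
    ring
  have vfin : (Vop θ (yv φ)) 0 = z6 0 := by
    rw [Vop]
    simp only [ContinuousLinearMap.comp_apply, ← hz2, ← hz3, ← hz4, ← hz5, ← hz6]
    rw [pairRot_apply, dA_σ, neg_zero, if_pos rfl, dA_ε_zero]
    ring
  rw [vfin, e60, e50, e5m1, e40, e41, e4m1, e30, e31, e3m1, hθ,
    Real.cos_two_mul, Real.sin_two_mul]
  set r := Real.sqrt 2
  linear_combination
    (s/2 - 3/2*c^2*s - 1/2*c^2*s*r - 1/2*c^2*s^3*r - 1/2*c^3 + c^4*s + 1/2*c^4*s*r + c^5) * h2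
    + (-s - c*s^2 + c^2*s + c^2*s*r + 2*c^3) * h1

lemma v0_lb (c s r : ℝ) (hc : 0 ≤ c) (hs : 0 ≤ s) (h1 : c^2 + s^2 = 1)
    (hr : r^2 = 2) (hrn : 0 ≤ r) :
    -1 < (c - s)^2 * (c + s) * (1 + c*s) - 2*r*c^2*s^3 := by
  have hcs : c * s ≤ 1/2 := by nlinarith [sq_nonneg (c - s)]
  have hcs0 : 0 ≤ c * s := mul_nonneg hc hs
  have hs1 : s ≤ 1 := by nlinarith [sq_nonneg c]
  have hr32 : r ≤ 3/2 := by nlinarith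
  have t1 : 0 ≤ (c - s)^2 * (c + s) * (1 + c*s) := by
    apply mul_nonneg (mul_nonneg (sq_nonneg _) (by linarith)) (by linarith)
  have h4 : c^2 * s^3 ≤ 1/4 := by
    have : c^2 * s^3 = (c*s)^2 * s := by ring
    rw [this]
    nlinarith [sq_nonneg (c*s), mul_le_mul_of_nonneg_right hcs hcs0]
  nlinarith [mul_le_mul_of_nonneg_left h4 hrn]


open ContinuousLinearMap in
noncomputable def Vop' (θ : ℝ) : H →L[ℝ] H :=
  pairRot dA' (Real.pi/4) ∘L pairRot dB (-θ) ∘L pairRot dA' (-(Real.pi/4)) ∘L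
    pairRot dA (Real.pi/4) ∘L pairRot dB (-θ) ∘L pairRot dA (-(Real.pi/4))

lemma pairRot_inv_apply' (d : PairData) (θ : ℝ) (x : H) :
    pairRot d (-θ) (pairRot d θ x) = x := by
  have := pairRot_inv_apply d (-θ) x
  rwa [neg_neg] at this

lemma Vop_Vop' (θ : ℝ) (x : H) : Vop θ (Vop' θ x) = x := by
  simp only [Vop, Vop', ContinuousLinearMap.comp_apply]
  rw [pairRot_inv_apply' dA', pairRot_inv_apply dB, pairRot_inv_apply dA',
    pairRot_inv_apply' dA, pairRot_inv_apply dB, pairRot_inv_apply dA]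

lemma Vop'_Vop (θ : ℝ) (x : H) : Vop' θ (Vop θ x) = x := by
  simp only [Vop, Vop', ContinuousLinearMap.comp_apply]
  rw [pairRot_inv_apply' dA, pairRot_inv_apply' dB, pairRot_inv_apply dA,
    pairRot_inv_apply' dA', pairRot_inv_apply' dB, pairRot_inv_apply dA']

lemma Vop_norm (θ : ℝ) (x : H) : ‖Vop θ x‖ = ‖x‖ := by
  simp only [Vop, ContinuousLinearMap.comp_apply]
  rw [pairRot_norm, pairRot_norm, pairRot_norm, pairRot_norm, pairRot_norm, pairRot_norm]

lemma Vop_mapsTo_M (θ : ℝ) {x : H} (hx : x ∈ M) : Vop θ x ∈ M := by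
  simp only [Vop, ContinuousLinearMap.comp_apply]
  exact pairRot_mapsTo_M _ _ (pairRot_mapsTo_M _ _ (pairRot_mapsTo_M _ _
    (pairRot_mapsTo_M _ _ (pairRot_mapsTo_M _ _ (pairRot_mapsTo_M _ _ hx)))))

lemma Vop'_mapsTo_M (θ : ℝ) {x : H} (hx : x ∈ M) : Vop' θ x ∈ M := by
  simp only [Vop', ContinuousLinearMap.comp_apply]
  exact pairRot_mapsTo_M _ _ (pairRot_mapsTo_M _ _ (pairRot_mapsTo_M _ _
    (pairRot_mapsTo_M _ _ (pairRot_mapsTo_M _ _ (pairRot_mapsTo_M _ _ hx)))))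

lemma Vpi_apply (x : H) (n : ℤ) : (Vop Real.pi x) n = x (n + 1) := by
  simp only [Vop, ContinuousLinearMap.comp_apply]
  rw [R1pi]
  rw [R2pi]
  rw [show (1:ℤ) - -n = n + 1 by ring, neg_neg]

def θf (τ : ℝ) : ℝ := (2 - τ) * Real.pi
def φf (τ : ℝ) : ℝ := (2 - τ) * (Real.pi/2)

lemma θf_eq (τ : ℝ) : θf τ = 2 * φf τ := by rw [θf, φf]; ring

noncomputable def vv (τ : ℝ) : H := Vop (θf τ) (yv (φf τ))

noncomputable def Uop (τ : ℝ) : H →L[ℝ] H := (Wmap (vv τ)).comp (Vop (θf τ))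
noncomputable def Uop' (τ : ℝ) : H →L[ℝ] H := (Vop' (θf τ)).comp (Wmap' (vv τ))

lemma inner_e1e1 : ⟪e1, e1⟫ = 1 := by
  rw [e1, inner_single_left', lp.single_apply_self]; norm_num

lemma inner_ue1 : ⟪u, e1⟫ = 0 := by
  rw [u, inner_single_left']
  have : (e1 : H) 0 = 0 := by rw [e1, lp.single_apply]; norm_num
  rw [this]; ring

lemma inner_e1u : ⟪e1, u⟫ = 0 := by rw [real_inner_comm]; exact inner_ue1

lemma yv_inner (φ : ℝ) : ⟪yv φ, yv φ⟫ = 1 := by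
  simp only [yv, inner_add_left, inner_add_right, real_inner_smul_left,
    real_inner_smul_right, inner_uu, inner_e1e1, inner_ue1, inner_e1u]
  have := Real.sin_sq_add_cos_sq φ
  nlinarith [this]

lemma vv_inner (τ : ℝ) : ⟪vv τ, vv τ⟫ = 1 := by
  have h1 : ‖vv τ‖ = ‖yv (φf τ)‖ := Vop_norm _ _
  have h2 : ‖yv (φf τ)‖^2 = 1 := by
    rw [← real_inner_self_eq_norm_sq]; exact yv_inner _
  rw [real_inner_self_eq_norm_sq, h1, h2]

lemma phi_mem {τ : ℝ} (hτ : τ ∈ Icc (1:ℝ) 2) : 0 ≤ φf τ ∧ φf τ ≤ Real.pi/2 := by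
  have hπ := Real.pi_pos
  obtain ⟨h1, h2⟩ := hτ
  constructor
  · rw [φf]; nlinarith
  · rw [φf]; nlinarith

lemma cos_phi_nonneg {τ : ℝ} (hτ : τ ∈ Icc (1:ℝ) 2) : 0 ≤ Real.cos (φf τ) := by
  obtain ⟨h1, h2⟩ := phi_mem hτ
  apply Real.cos_nonneg_of_mem_Icc
  constructor <;> [linarith [Real.pi_pos]; linarith]

lemma sin_phi_nonneg {τ : ℝ} (hτ : τ ∈ Icc (1:ℝ) 2) : 0 ≤ Real.sin (φf τ) := by
  obtain ⟨h1, h2⟩ := phi_mem hτ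
  apply Real.sin_nonneg_of_nonneg_of_le_pi h1
  linarith [Real.pi_pos]

lemma t_pos {τ : ℝ} (hτ : τ ∈ Icc (1:ℝ) 2) : 0 < 1 + ⟪u, vv τ⟫ := by
  have h0 : ⟪u, vv τ⟫ = (vv τ) 0 := by
    rw [u, inner_single_left']; ring
  rw [h0, vv, v_zero _ _ (θf_eq τ)]
  have hc := cos_phi_nonneg hτ
  have hs := sin_phi_nonneg hτ
  have h1 : (Real.cos (φf τ))^2 + (Real.sin (φf τ))^2 = 1 := by
    rw [add_comm]; exact Real.sin_sq_add_cos_sq _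
  have := v0_lb (Real.cos (φf τ)) (Real.sin (φf τ)) (Real.sqrt 2) hc hs h1
    (Real.sq_sqrt (by norm_num)) (Real.sqrt_nonneg 2)
  linarith

lemma t_ne {τ : ℝ} (hτ : τ ∈ Icc (1:ℝ) 2) : 1 + ⟪u, vv τ⟫ ≠ 0 := (t_pos hτ).ne'

lemma Uop_Uop' {τ : ℝ} (hτ : τ ∈ Icc (1:ℝ) 2) (x : H) : Uop τ (Uop' τ x) = x := by
  simp only [Uop, Uop', ContinuousLinearMap.comp_apply]
  rw [Vop_Vop', Wmap_Wmap' _ (vv_inner τ) (t_ne hτ)]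

lemma Uop'_Uop {τ : ℝ} (hτ : τ ∈ Icc (1:ℝ) 2) (x : H) : Uop' τ (Uop τ x) = x := by
  simp only [Uop, Uop', ContinuousLinearMap.comp_apply]
  rw [Wmap'_Wmap _ (vv_inner τ) (t_ne hτ), Vop'_Vop]

lemma vv_mem_M (τ : ℝ) : vv τ ∈ M := by
  apply Vop_mapsTo_M
  exact M_add (M_smul _ (M_single 0 1)) (M_smul _ (M_single 1 1))

-- continuity
lemma pairRot_contin (d : PairData) {g : ℝ → ℝ} (hg : Continuous g) :
    Continuous fun τ => pairRot d (g τ) := by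
  simp only [pairRot]
  exact ((continuous_const.add ((Real.continuous_cos.comp hg).smul
    continuous_const))).add ((Real.continuous_sin.comp hg).smul continuous_const)

lemma θf_cont : Continuous θf := by
  have : θf = fun τ => (2 - τ) * Real.pi := rfl
  rw [this]; continuity

lemma φf_cont : Continuous φf := by
  have : φf = fun τ => (2 - τ) * (Real.pi/2) := rfl
  rw [this]; continuity

lemma Vop_cont : Continuous fun τ => Vop (θf τ) := by
  simp only [Vop]
  have h1 := pairRot_contin dA (g := fun _ => Real.pi/4) continuous_const
  have h2 := pairRot_contin dB θf_cont
  have h3 := pairRot_contin dA (g := fun _ => -(Real.pi/4)) continuous_const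
  have h4 := pairRot_contin dA' (g := fun _ => Real.pi/4) continuous_const
  have h5 := pairRot_contin dA' (g := fun _ => -(Real.pi/4)) continuous_const
  exact h1.clm_comp (h2.clm_comp (h3.clm_comp (h4.clm_comp (h2.clm_comp h5))))

lemma vv_cont : Continuous vv := by
  have hy : Continuous fun τ => yv (φf τ) := by
    simp only [yv]
    exact ((Real.continuous_cos.comp φf_cont).smul continuous_const).add
      ((Real.continuous_sin.comp φf_cont).smul continuous_const)
  exact Vop_cont.clm_apply hy

lemma rk_cont {f g : ℝ → H} (hf : Continuous f) (hg : Continuous g) :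
    Continuous fun τ => rk (f τ) (g τ) := by
  simp only [rk]
  exact isBoundedBilinearMap_smulRight.continuous.comp
    (((innerSL ℝ (E := H)).continuous.comp hf).prodMk hg)

lemma Uop_contOn : ContinuousOn Uop (Icc (1:ℝ) 2) := by
  apply ContinuousOn.clm_comp _ Vop_cont.continuousOn
  -- continuity of τ ↦ Wmap (vv τ) on Icc
  simp only [Wmap]
  apply ContinuousOn.add
  apply ContinuousOn.sub continuousOn_const
  · apply ContinuousOn.fun_smul
    · apply ContinuousOn.inv₀
      · exact (continuous_const.add (continuous_const.inner vv_cont)).continuousOn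
      · intro τ hτ; exact t_ne hτ
    · exact (rk_cont (continuous_const.add vv_cont)
        (continuous_const.add vv_cont)).continuousOn
  · exact (continuous_const.fun_smul (rk_cont vv_cont continuous_const)).continuousOn

lemma Uop_norm {τ : ℝ} (hτ : τ ∈ Icc (1:ℝ) 2) (x : H) : ‖Uop τ x‖ = ‖x‖ := by
  simp only [Uop, ContinuousLinearMap.comp_apply]
  rw [Wmap_norm _ (vv_inner τ) (t_ne hτ), Vop_norm]

lemma Uop_isometry {τ : ℝ} (hτ : τ ∈ Icc (1:ℝ) 2) : Isometry (Uop τ) :=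
  AddMonoidHomClass.isometry_of_norm _ (Uop_norm hτ)

lemma Uop_surj {τ : ℝ} (hτ : τ ∈ Icc (1:ℝ) 2) : Function.Surjective (Uop τ) :=
  fun y => ⟨Uop' τ y, Uop_Uop' hτ y⟩

lemma Uop_bijOn {τ : ℝ} (hτ : τ ∈ Icc (1:ℝ) 2) : Set.BijOn (Uop τ) M M := by
  have hmt : Set.MapsTo (Uop τ) M M := by
    intro x hx
    simp only [Uop, ContinuousLinearMap.comp_apply]
    exact Wmap_mem_M (vv_mem_M τ) _ (Vop_mapsTo_M _ hx)
  have hmt' : Set.MapsTo (Uop' τ) M M := by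
    intro x hx
    simp only [Uop', ContinuousLinearMap.comp_apply]
    exact Vop'_mapsTo_M _ (Wmap'_mem_M (vv_mem_M τ) _ hx)
  have hinv : Set.InvOn (Uop' τ) (Uop τ) M M :=
    ⟨fun x _ => Uop'_Uop hτ x, fun x _ => Uop_Uop' hτ x⟩
  exact hinv.bijOn hmt hmt'

-- endpoint τ = 1
lemma θf_one : θf 1 = Real.pi := by rw [θf]; ring
lemma φf_one : φf 1 = Real.pi/2 := by rw [φf]; ring
lemma θf_two : θf 2 = 0 := by rw [θf]; ring
lemma φf_two : φf 2 = 0 := by rw [φf]; ring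

lemma yv_pi_div_two : yv (Real.pi/2) = e1 := by
  apply lp.ext; funext n
  rw [yv_coord]
  have h1 : (e1 : H) n = if n = 1 then (1:ℝ) else 0 := by
    rw [e1, lp.single_apply]
    split_ifs with h <;> simp [h]
  rw [h1, Real.cos_pi_div_two, Real.sin_pi_div_two]
  split_ifs <;> norm_num

lemma yv_zero_eq : yv 0 = u := by
  apply lp.ext; funext n
  rw [yv_coord]
  have h1 : (u : H) n = if n = 0 then (1:ℝ) else 0 := by
    rw [u, lp.single_apply]
    split_ifs with h <;> simp [h]
  rw [h1, Real.cos_zero, Real.sin_zero]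
  split_ifs <;> norm_num

lemma vv_one : vv 1 = u := by
  rw [vv, θf_one, φf_one, yv_pi_div_two]
  apply lp.ext; funext n
  rw [Vpi_apply]
  have h1 : (e1 : H) (n+1) = if n + 1 = 1 then (1:ℝ) else 0 := by
    rw [e1, lp.single_apply]
    split_ifs with h <;> simp [h]
  have h2 : (u : H) n = if n = 0 then (1:ℝ) else 0 := by
    rw [u, lp.single_apply]
    split_ifs with h <;> simp [h]
  rw [h1, h2]
  by_cases h : n = 0
  · rw [if_pos (by omega), if_pos h]
  · rw [if_neg (by omega), if_neg h]

lemma vv_two : vv 2 = u := by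
  rw [vv, θf_two, φf_two, yv_zero_eq]
  simp only [Vop, ContinuousLinearMap.comp_apply]
  rw [pairRot_zero_apply, pairRot_zero_apply]
  rw [pairRot_inv_apply dA, pairRot_inv_apply dA']

lemma Uop_one (n : ℤ) : Uop 1 (lp.single 2 n (1:ℝ)) = lp.single 2 (n-1) (1:ℝ) := by
  simp only [Uop, ContinuousLinearMap.comp_apply]
  rw [vv_one, Wmap_u, θf_one]
  apply lp.ext; funext m
  rw [Vpi_apply]
  rw [single_coord, single_coord]
  by_cases h : m = n - 1
  · rw [if_pos (by omega : m + 1 = n), if_pos h]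
  · rw [if_neg (by omega : ¬(m + 1 = n)), if_neg h]

lemma Uop_two : Uop 2 = ContinuousLinearMap.id ℝ H := by
  apply ContinuousLinearMap.ext
  intro x
  simp only [Uop, ContinuousLinearMap.comp_apply, ContinuousLinearMap.id_apply]
  rw [vv_two, Wmap_u, θf_two]
  simp only [Vop, ContinuousLinearMap.comp_apply]
  rw [pairRot_zero_apply, pairRot_zero_apply, pairRot_inv_apply dA,
    pairRot_inv_apply dA']

lemma cos_phi_pos {τ : ℝ} (hτ : τ ∈ Ioo (1:ℝ) 2) : 0 < Real.cos (φf τ) := by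
  have hπ := Real.pi_pos
  obtain ⟨h1, h2⟩ := hτ
  apply Real.cos_pos_of_mem_Ioo
  constructor
  · rw [φf]; nlinarith
  · rw [φf]; nlinarith

lemma sin_phi_pos {τ : ℝ} (hτ : τ ∈ Ioo (1:ℝ) 2) : 0 < Real.sin (φf τ) := by
  have hπ := Real.pi_pos
  obtain ⟨h1, h2⟩ := hτ
  apply Real.sin_pos_of_pos_of_lt_pi
  · rw [φf]; nlinarith
  · rw [φf]; nlinarith

lemma Uop_interior {τ : ℝ} (hτ : τ ∈ Ioo (1:ℝ) 2) :
    ∃ a b : ℝ, 0 < a ∧ 0 < b ∧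
      Uop τ (a • lp.single 2 (0:ℤ) (1:ℝ) + b • lp.single 2 (1:ℤ) (1:ℝ))
        = lp.single 2 (0:ℤ) (1:ℝ) := by
  have hτ' : τ ∈ Icc (1:ℝ) 2 := ⟨hτ.1.le, hτ.2.le⟩
  refine ⟨Real.cos (φf τ), Real.sin (φf τ), cos_phi_pos hτ, sin_phi_pos hτ, ?_⟩
  have hy : (Real.cos (φf τ)) • lp.single 2 (0:ℤ) (1:ℝ)
      + (Real.sin (φf τ)) • lp.single 2 (1:ℤ) (1:ℝ) = yv (φf τ) := rfl
  rw [hy]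
  simp only [Uop, ContinuousLinearMap.comp_apply]
  have : Vop (θf τ) (yv (φf τ)) = vv τ := rfl
  rw [this, Wmap_v _ (vv_inner τ) (t_ne hτ')]
  rfl


end Stmt15
end

open Set

/-- There is a norm-continuous path `(U_τ)_{τ∈[1,2]}` of unitary
operators of the real Hilbert space `ℓ²(ℤ,ℝ)` preserving `h¹`, with `U₁` the left
shift on the standard basis, `U₂ = id`, and `U_τ⁻¹(e₀)` a positive combination of
`e₀` and `e₁` for `τ ∈ (1,2)`. -/
theorem stmt15 :
    ∃ U : ℝ → (lp (fun _ : ℤ => ℝ) 2 →L[ℝ] lp (fun _ : ℤ => ℝ) 2),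
      ContinuousOn U (Icc (1:ℝ) 2) ∧
      (∀ τ ∈ Icc (1:ℝ) 2, Isometry (U τ) ∧ Function.Surjective (U τ)) ∧
      (∀ τ ∈ Icc (1:ℝ) 2,
        Set.BijOn (U τ)
          {x : lp (fun _ : ℤ => ℝ) 2 | Summable fun n : ℤ => (n : ℝ) ^ 2 * (x n) ^ 2}
          {x : lp (fun _ : ℤ => ℝ) 2 | Summable fun n : ℤ => (n : ℝ) ^ 2 * (x n) ^ 2}) ∧
      (∀ n : ℤ, U 1 (lp.single 2 n (1:ℝ)) = lp.single 2 (n - 1) (1:ℝ)) ∧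
      U 2 = ContinuousLinearMap.id ℝ _ ∧
      (∀ τ ∈ Ioo (1:ℝ) 2, ∃ a b : ℝ, 0 < a ∧ 0 < b ∧
        U τ (a • lp.single 2 (0:ℤ) (1:ℝ) + b • lp.single 2 (1:ℤ) (1:ℝ))
          = lp.single 2 (0:ℤ) (1:ℝ)) := by
  exact ⟨Stmt15.Uop, Stmt15.Uop_contOn,
    fun τ hτ => ⟨Stmt15.Uop_isometry hτ, Stmt15.Uop_surj hτ⟩,
    fun τ hτ => Stmt15.Uop_bijOn hτ, Stmt15.Uop_one, Stmt15.Uop_two,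
    fun τ hτ => Stmt15.Uop_interior hτ⟩
end

section
/- For every integer n ≥ 0 and every m < 1, the elliptic integrals satisfy the recursion (2n+3)·m·I_{n+2}(m) − 2(n+1)(m+1)·I_{n+1}(m) + (2n+1)·I_n(m) = 0. -/
open Set MeasureTheory intervalIntegral

/-- The elliptic integral `I_n(m) = ∫₀¹ ζ^(2n)/√((1−ζ²)(1−mζ²)) dζ`. -/
noncomputable def ellI (n : ℕ) (m : ℝ) : ℝ :=
  ∫ ζ in (0:ℝ)..1, ζ ^ (2 * n) / Real.sqrt ((1 - ζ ^ 2) * (1 - m * ζ ^ 2))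

lemma ellP_pos {m x : ℝ} (hm : m < 1) (hx0 : 0 ≤ x) (hx1 : x < 1) :
    0 < (1 - x ^ 2) * (1 - m * x ^ 2) := by
  have h1 : 0 < 1 - x ^ 2 := by nlinarith
  have h2 : 0 < 1 - m * x ^ 2 := by nlinarith [sq_nonneg x, mul_nonneg hx0 hx0]
  exact mul_pos h1 h2

lemma ell_integrable {m : ℝ} (hm : m < 1) (k : ℕ) :
    IntervalIntegrable (fun x => x ^ k / Real.sqrt ((1 - x ^ 2) * (1 - m * x ^ 2)))
      MeasureTheory.volume 0 1 := by
  set c : ℝ := 1 - max m 0 with hc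
  have hcpos : 0 < c := by simp only [hc, sub_pos, max_lt_iff]; exact ⟨hm, one_pos⟩
  have hg : IntervalIntegrable
      (fun x => (Real.sqrt c)⁻¹ * (1 - x) ^ (-(1/2) : ℝ)) MeasureTheory.volume 0 1 := by
    have h0 : IntervalIntegrable (fun x : ℝ => x ^ (-(1/2) : ℝ)) MeasureTheory.volume 0 1 :=
      intervalIntegrable_rpow' (by norm_num)
    have h1 := (h0.comp_sub_left 1)
    simp only [sub_zero, sub_self] at h1
    exact (h1.symm).const_mul _
  apply hg.mono_fun'
  · apply Measurable.aestronglyMeasurable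
    exact (measurable_id.pow_const k).div ((measurable_const.sub (measurable_id.pow_const 2)).mul
      ((measurable_const.sub (measurable_const.mul (measurable_id.pow_const 2)))) ).sqrt
  · rw [Set.uIoc_of_le (by norm_num : (0:ℝ) ≤ 1)]
    filter_upwards [MeasureTheory.ae_restrict_mem measurableSet_Ioc] with x hx
    obtain ⟨hx0, hx1⟩ := hx
    rcases eq_or_lt_of_le hx1 with rfl | hx1
    · simp [Real.norm_eq_abs]
    · have hP := ellP_pos hm hx0.le hx1
      have h1x : (0:ℝ) < 1 - x := by linarith
      have key : Real.sqrt c * Real.sqrt (1 - x) ≤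
          Real.sqrt ((1 - x ^ 2) * (1 - m * x ^ 2)) := by
        rw [← Real.sqrt_mul hcpos.le]
        apply Real.sqrt_le_sqrt
        have hmx : m * x ^ 2 ≤ max m 0 := by
          rcases le_or_gt m 0 with h | h
          · exact le_trans (mul_nonpos_of_nonpos_of_nonneg h (sq_nonneg x)) (le_max_right m 0)
          · calc m * x ^ 2 ≤ m * 1 := mul_le_mul_of_nonneg_left (by nlinarith) h.le
              _ ≤ max m 0 := by simp
        have h2 : c ≤ 1 - m * x ^ 2 := by simp only [hc]; linarith
        have h3 : 1 - x ≤ 1 - x ^ 2 := by nlinarith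
        calc c * (1 - x) ≤ (1 - m * x ^ 2) * (1 - x ^ 2) := by
              apply mul_le_mul h2 h3 h1x.le; nlinarith
          _ = (1 - x ^ 2) * (1 - m * x ^ 2) := by ring
      have hub : x ^ k / Real.sqrt ((1 - x ^ 2) * (1 - m * x ^ 2)) ≤
          1 / (Real.sqrt c * Real.sqrt (1 - x)) := by
        apply div_le_div₀ (by norm_num) (pow_le_one₀ hx0.le hx1.le)
          (by positivity) key
      rw [Real.norm_eq_abs, abs_of_nonneg (by positivity)]
      calc x ^ k / Real.sqrt ((1 - x ^ 2) * (1 - m * x ^ 2))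
          ≤ 1 / (Real.sqrt c * Real.sqrt (1 - x)) := hub
        _ = (Real.sqrt c)⁻¹ * (1 - x) ^ (-(1/2) : ℝ) := by
            rw [Real.rpow_neg h1x.le, ← Real.sqrt_eq_rpow, one_div, mul_inv]

lemma ell_deriv {m : ℝ} (hm : m < 1) (n : ℕ) {x : ℝ} (hx : x ∈ Ioo (0:ℝ) 1) :
    HasDerivAt (fun x : ℝ => x ^ (2 * n + 1) * Real.sqrt ((1 - x ^ 2) * (1 - m * x ^ 2)))
      (((2 * (n:ℝ) + 3) * m * x ^ (2 * (n + 2)) - 2 * ((n:ℝ) + 1) * (m + 1) * x ^ (2 * (n + 1))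
          + (2 * (n:ℝ) + 1) * x ^ (2 * n)) /
        Real.sqrt ((1 - x ^ 2) * (1 - m * x ^ 2))) x := by
  obtain ⟨hx0, hx1⟩ := hx
  have hP : 0 < (1 - x ^ 2) * (1 - m * x ^ 2) := by
    have : 0 < 1 - x ^ 2 := by nlinarith
    have : 0 < 1 - m * x ^ 2 := by nlinarith [sq_nonneg x]
    positivity
  have h1 : HasDerivAt (fun x : ℝ => 1 - x ^ 2) (-(2 * x ^ 1)) x :=
    (hasDerivAt_pow 2 x).const_sub 1
  have h2 : HasDerivAt (fun x : ℝ => 1 - m * x ^ 2) (-(m * (2 * x ^ 1))) x :=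
    ((hasDerivAt_pow 2 x).const_mul m).const_sub 1
  have hPd := h1.mul h2
  have hsq := (Real.hasDerivAt_sqrt hP.ne').comp x hPd
  have hF := (hasDerivAt_pow (2 * n + 1) x).mul hsq
  simp only [Function.comp_def] at hF
  convert hF using 1
  · rfl
  · rfl
  · rfl
  set s := Real.sqrt ((1 - x ^ 2) * (1 - m * x ^ 2)) with hs
  have hspos : 0 < s := Real.sqrt_pos.mpr hP
  have hs2 : s * s = (1 - x ^ 2) * (1 - m * x ^ 2) := Real.mul_self_sqrt hP.le
  rw [div_eq_iff hspos.ne']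
  push_cast
  field_simp
  linear_combination (-((2 * (n:ℝ) + 1) * x ^ (2 * n))) * hs2

/-- the recursion
`(2n+3)m I_{n+2}(m) − 2(n+1)(m+1) I_{n+1}(m) + (2n+1) I_n(m) = 0`. -/
theorem stmt16 (n : ℕ) (m : ℝ) (hm : m < 1) :
    (2 * (n : ℝ) + 3) * m * ellI (n + 2) m
      - 2 * ((n : ℝ) + 1) * (m + 1) * ellI (n + 1) m
      + (2 * (n : ℝ) + 1) * ellI n m = 0 := by
  set G : ℝ → ℝ := fun x =>
    ((2 * (n:ℝ) + 3) * m * x ^ (2 * (n + 2)) - 2 * ((n:ℝ) + 1) * (m + 1) * x ^ (2 * (n + 1))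
      + (2 * (n:ℝ) + 1) * x ^ (2 * n)) / Real.sqrt ((1 - x ^ 2) * (1 - m * x ^ 2)) with hG
  have hGeq : G = fun x =>
      (2 * (n:ℝ) + 3) * m * (x ^ (2 * (n + 2)) / Real.sqrt ((1 - x ^ 2) * (1 - m * x ^ 2)))
      - 2 * ((n:ℝ) + 1) * (m + 1) *
          (x ^ (2 * (n + 1)) / Real.sqrt ((1 - x ^ 2) * (1 - m * x ^ 2)))
      + (2 * (n:ℝ) + 1) * (x ^ (2 * n) / Real.sqrt ((1 - x ^ 2) * (1 - m * x ^ 2))) := by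
    funext x; rw [hG]; ring
  have hi2 := ell_integrable hm (2 * (n + 2))
  have hi1 := ell_integrable hm (2 * (n + 1))
  have hi0 := ell_integrable hm (2 * n)
  have hGint : IntervalIntegrable G MeasureTheory.volume 0 1 := by
    rw [hGeq]
    exact ((hi2.const_mul _).sub (hi1.const_mul _)).add (hi0.const_mul _)
  have hzero : (∫ x in (0:ℝ)..1, G x) = 0 := by
    rw [intervalIntegral.integral_eq_sub_of_hasDerivAt_of_le (by norm_num)
      (Continuous.continuousOn (by fun_prop))
      (fun x hx => ell_deriv hm n hx) hGint]
    norm_num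
  have hsplit : (∫ x in (0:ℝ)..1, G x)
      = (2 * (n:ℝ) + 3) * m * ellI (n + 2) m
        - 2 * ((n:ℝ) + 1) * (m + 1) * ellI (n + 1) m
        + (2 * (n:ℝ) + 1) * ellI n m := by
    rw [hGeq, ellI, ellI, ellI]
    rw [intervalIntegral.integral_add (((hi2.const_mul _).sub (hi1.const_mul _)))
      (hi0.const_mul _),
      intervalIntegral.integral_sub (hi2.const_mul _) (hi1.const_mul _),
      intervalIntegral.integral_const_mul, intervalIntegral.integral_const_mul,
      intervalIntegral.integral_const_mul]
  linarith [hsplit, hzero]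
end

section
/- For every m < 1 with m ≠ 0, the complete elliptic integrals K and E are differentiable at m with K'(m) = (E(m) − (1−m)·K(m))/(2m(1−m)) and E'(m) = (E(m) − K(m))/(2m). -/
open MeasureTheory intervalIntegral Real Set
open scoped Interval

/-- The complete elliptic integral of the first kind,
`K(m) = ∫₀¹ dζ/√((1−ζ²)(1−mζ²))`. -/
noncomputable def Kell (m : ℝ) : ℝ :=
  ∫ ζ in (0:ℝ)..1, 1 / Real.sqrt ((1 - ζ ^ 2) * (1 - m * ζ ^ 2))

/-- The complete elliptic integral of the second kind,
`E(m) = ∫₀¹ √(1−mζ²)/√(1−ζ²) dζ`. -/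
noncomputable def Eell (m : ℝ) : ℝ :=
  ∫ ζ in (0:ℝ)..1, Real.sqrt (1 - m * ζ ^ 2) / Real.sqrt (1 - ζ ^ 2)

namespace Stmt17Aux

lemma bnd_intble (C : ℝ) :
    IntervalIntegrable (fun t : ℝ => C * (1 - t) ^ (-(1/2) : ℝ)) volume 0 1 := by
  have h := (intervalIntegrable_rpow' (a := 0) (b := 1) (r := -(1/2)) (by norm_num)).comp_sub_left 1
  simpa using (h.symm.const_mul C)

lemma ae_ne_one' : ∀ᵐ t : ℝ ∂volume, t ≠ 1 := by
  refine ae_iff.2 (le_antisymm ?_ zero_le)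
  simp only [ne_eq, not_not, Set.setOf_eq_eq_singleton]
  simp

lemma ae_ne_one : ∀ᵐ t ∂(volume.restrict (Ι (0:ℝ) 1)), t ≠ 1 := by
  refine ae_iff.2 (le_antisymm ?_ zero_le)
  simp only [ne_eq, not_not, Set.setOf_eq_eq_singleton]
  exact (Measure.restrict_apply_le _ _).trans_eq (by simp)

lemma inv_sqrt_le {t : ℝ} (ht0 : 0 ≤ t) (ht1 : t < 1) :
    (Real.sqrt (1 - t^2))⁻¹ ≤ (1 - t) ^ (-(1/2) : ℝ) := by
  have h1 : (0:ℝ) < 1 - t := by linarith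
  rw [Real.rpow_neg h1.le, ← Real.sqrt_eq_rpow]
  exact inv_anti₀ (Real.sqrt_pos.2 h1) (Real.sqrt_le_sqrt (by nlinarith))

lemma intble_of_bound {g : ℝ → ℝ} (hg : AEStronglyMeasurable g (volume.restrict (Ι (0:ℝ) 1)))
    {C : ℝ} (hb : ∀ t ∈ Ioo (0:ℝ) 1, |g t| ≤ C * (1 - t) ^ (-(1/2) : ℝ)) :
    IntervalIntegrable g volume 0 1 := by
  refine (bnd_intble C).mono_fun' hg ?_
  filter_upwards [ae_restrict_mem measurableSet_uIoc, ae_ne_one] with t ht hne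
  rw [Set.uIoc_of_le (by norm_num : (0:ℝ) ≤ 1)] at ht
  exact hb t ⟨ht.1, lt_of_le_of_ne ht.2 hne⟩

lemma hasDeriv_sqrt_aux {t x : ℝ} (hx : 0 < 1 - x * t^2) :
    HasDerivAt (fun x : ℝ => Real.sqrt (1 - x * t^2))
      (-t^2 / (2 * Real.sqrt (1 - x*t^2))) x := by
  have base : HasDerivAt (fun x : ℝ => 1 - x * t^2) (-t^2) x := by
    simpa using ((hasDerivAt_id x).mul_const (t^2)).const_sub 1
  have := (Real.hasDerivAt_sqrt hx.ne').comp x base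
  refine this.congr_deriv (Eq.symm ?_)
  field_simp

lemma hasDeriv_Kint {t : ℝ} (ht0 : 0 ≤ t) (ht1 : t < 1) {x : ℝ} (hx : 0 < 1 - x * t^2) :
    HasDerivAt (fun x : ℝ => 1 / Real.sqrt ((1 - t^2) * (1 - x * t^2)))
      (t^2 / (2 * Real.sqrt (1 - t^2) * Real.sqrt (1 - x*t^2)^3)) x := by
  have hs : (0:ℝ) < 1 - t^2 := by nlinarith
  have hsp := Real.sqrt_pos.2 hs
  have hup := Real.sqrt_pos.2 hx
  have hinv := ((hasDeriv_sqrt_aux hx).inv hup.ne').const_mul ((Real.sqrt (1 - t^2))⁻¹)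
  have hfun : (fun x : ℝ => (Real.sqrt (1 - t^2))⁻¹ * (Real.sqrt (1 - x * t^2))⁻¹)
      = fun x : ℝ => 1 / Real.sqrt ((1 - t^2) * (1 - x * t^2)) := by
    funext y
    rw [Real.sqrt_mul hs.le, one_div, mul_inv]
  simp only [Pi.inv_apply] at hinv
  rw [hfun] at hinv
  refine hinv.congr_deriv (Eq.symm ?_)
  have h3 : Real.sqrt (1 - x*t^2)^3 = (1 - x*t^2) * Real.sqrt (1 - x*t^2) := by
    rw [pow_succ, Real.sq_sqrt hx.le]
  rw [h3, ← Real.sq_sqrt hx.le]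
  field_simp
  ring_nf
  simp
  ring

lemma hasDeriv_Eint {t : ℝ} (ht0 : 0 ≤ t) (ht1 : t < 1) {x : ℝ} (hx : 0 < 1 - x * t^2) :
    HasDerivAt (fun x : ℝ => Real.sqrt (1 - x * t^2) / Real.sqrt (1 - t^2))
      (-t^2 / (2 * Real.sqrt (1 - t^2) * Real.sqrt (1 - x*t^2))) x := by
  have := (hasDeriv_sqrt_aux hx).div_const (Real.sqrt (1 - t^2))
  refine this.congr_deriv (Eq.symm ?_)
  ring

lemma hasDeriv_Phi {m t : ℝ} (hm : m < 1) (ht0 : 0 < t) (ht1 : t < 1) :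
    HasDerivAt (fun t : ℝ => t * Real.sqrt (1 - t^2) * (Real.sqrt (1 - m*t^2))⁻¹)
      (Real.sqrt (1 - t^2) / Real.sqrt (1 - m*t^2)
        - (1 - m) * (t^2 / (Real.sqrt (1 - t^2) * Real.sqrt (1 - m*t^2)^3))) t := by
  have hs : (0:ℝ) < 1 - t^2 := by nlinarith
  have hq : (0:ℝ) < 1 - m*t^2 := by nlinarith
  have hsp := Real.sqrt_pos.2 hs
  have hqp := Real.sqrt_pos.2 hq
  have b1 : HasDerivAt (fun t : ℝ => 1 - t^2) (-(2*t)) t := by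
    simpa using ((hasDerivAt_pow 2 t)).const_sub 1
  have b2 : HasDerivAt (fun t : ℝ => 1 - m*t^2) (-(m*(2*t))) t := by
    simpa using ((hasDerivAt_pow 2 t).const_mul m).const_sub 1
  have h1 : HasDerivAt (fun t : ℝ => Real.sqrt (1 - t^2)) (-t / Real.sqrt (1-t^2)) t := by
    have := (Real.hasDerivAt_sqrt hs.ne').comp t b1
    refine this.congr_deriv (Eq.symm ?_)
    field_simp
  have h3 : HasDerivAt (fun t : ℝ => Real.sqrt (1 - m*t^2)) (-(m*t) / Real.sqrt (1-m*t^2)) t := by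
    have := (Real.hasDerivAt_sqrt hq.ne').comp t b2
    refine this.congr_deriv (Eq.symm ?_)
    field_simp
  have h2 := (hasDerivAt_id t).mul h1
  have h5 := (h2.mul ((h3.inv hqp.ne')))
  refine h5.congr_deriv (Eq.symm ?_)
  simp only [Pi.mul_apply, Pi.inv_apply, id]
  have hs2 : Real.sqrt (1-t^2)^2 = 1-t^2 := Real.sq_sqrt hs.le
  have hq2 : Real.sqrt (1-m*t^2)^2 = 1-m*t^2 := Real.sq_sqrt hq.le
  set s := Real.sqrt (1-t^2)
  set q := Real.sqrt (1-m*t^2)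
  field_simp
  linear_combination t^2 * hq2 - (m*t^2) * hs2

lemma meas1 : Measurable fun t : ℝ => 1 - t^2 :=
  (measurable_id.pow_const 2).const_sub 1
lemma meas2 (x : ℝ) : Measurable fun t : ℝ => 1 - x * t^2 :=
  (measurable_const.mul (measurable_id.pow_const 2)).const_sub 1
lemma measK (x : ℝ) : Measurable fun t : ℝ => 1 / Real.sqrt ((1 - t ^ 2) * (1 - x * t ^ 2)) :=
  measurable_const.div (Real.continuous_sqrt.measurable.comp (meas1.mul (meas2 x)))
lemma measK' (x : ℝ) :
    Measurable fun t : ℝ => t^2/(2*Real.sqrt (1-t^2)*Real.sqrt (1-x*t^2)^3) :=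
  (measurable_id.pow_const 2).div
    ((measurable_const.mul (Real.continuous_sqrt.measurable.comp meas1)).mul
      ((Real.continuous_sqrt.measurable.comp (meas2 x)).pow_const 3))
lemma measE (x : ℝ) : Measurable fun t : ℝ => Real.sqrt (1 - x * t ^ 2) / Real.sqrt (1 - t ^ 2) :=
  (Real.continuous_sqrt.measurable.comp (meas2 x)).div
    (Real.continuous_sqrt.measurable.comp meas1)
lemma measE' (x : ℝ) :
    Measurable fun t : ℝ => -t^2/(2*Real.sqrt (1-t^2)*Real.sqrt (1-x*t^2)) :=
  ((measurable_id.pow_const 2).neg).div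
    ((measurable_const.mul (Real.continuous_sqrt.measurable.comp meas1)).mul
      (Real.continuous_sqrt.measurable.comp (meas2 x)))

end Stmt17Aux

open Stmt17Aux

/-- For `m < 1`, `m ≠ 0`, `K` and `E` are differentiable at `m` with
`K'(m) = (E(m) − (1−m)K(m))/(2m(1−m))` and `E'(m) = (E(m) − K(m))/(2m)`. -/
theorem stmt17 (m : ℝ) (hm : m < 1) (hm0 : m ≠ 0) :
    HasDerivAt Kell ((Eell m - (1 - m) * Kell m) / (2 * m * (1 - m))) m ∧
    HasDerivAt Eell ((Eell m - Kell m) / (2 * m)) m := by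
  have hε : (0:ℝ) < (1 - m)/2 := by linarith
  set δ : ℝ := 1 - max ((1+m)/2) 0 with hδdef
  have hδ : 0 < δ := by
    have : max ((1+m)/2) 0 < 1 := max_lt (by linarith) one_pos
    simp only [hδdef]; linarith
  have key : ∀ x ∈ Metric.ball m ((1-m)/2), ∀ t : ℝ, 0 ≤ t → t ≤ 1 → δ ≤ 1 - x*t^2 := by
    intro x hx t ht0 ht1
    rw [Metric.mem_ball, Real.dist_eq] at hx
    have hx' : x ≤ (1+m)/2 := by
      have := abs_lt.1 hx; linarith [this.2]
    have h1 : x*t^2 ≤ max ((1+m)/2) 0 := by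
      have ht2 : t^2 ≤ 1 := by nlinarith
      rcases le_or_gt x 0 with h | h
      · exact le_trans (by nlinarith) (le_max_right _ 0)
      · refine le_trans ?_ (le_max_left _ _)
        nlinarith [mul_le_mul_of_nonneg_left ht2 h.le]
    simp only [hδdef]; linarith
  have hmem : m ∈ Metric.ball m ((1-m)/2) := Metric.mem_ball_self hε
  have hsδ := Real.sqrt_pos.2 hδ
  -- domination of the K integrand
  have iK : IntervalIntegrable (fun t : ℝ => 1 / Real.sqrt ((1 - t^2) * (1 - m*t^2)))
      volume 0 1 := by
    apply intble_of_bound (measK m).aestronglyMeasurable (C := (Real.sqrt δ)⁻¹)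
    intro t ht
    have hs : (0:ℝ) < 1 - t^2 := by nlinarith [ht.1, ht.2]
    have hq : δ ≤ 1 - m*t^2 := key m hmem t ht.1.le ht.2.le
    have hsp := Real.sqrt_pos.2 hs
    have hqp := Real.sqrt_pos.2 (lt_of_lt_of_le hδ hq)
    rw [Real.sqrt_mul hs.le, abs_of_nonneg (by positivity)]
    calc 1 / (Real.sqrt (1-t^2) * Real.sqrt (1-m*t^2))
        ≤ 1 / (Real.sqrt (1-t^2) * Real.sqrt δ) := by
          gcongr
      _ = (Real.sqrt δ)⁻¹ * (Real.sqrt (1-t^2))⁻¹ := by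
          rw [one_div, mul_inv, mul_comm]
      _ ≤ (Real.sqrt δ)⁻¹ * (1-t) ^ (-(1/2):ℝ) := by
          gcongr
          exact inv_sqrt_le ht.1.le ht.2
  -- derivative of K via domination
  have hbK : ∀ᵐ t : ℝ ∂volume, t ∈ Ι (0:ℝ) 1 → ∀ x ∈ Metric.ball m ((1-m)/2),
      ‖t^2/(2*Real.sqrt (1-t^2)*Real.sqrt (1-x*t^2)^3)‖
        ≤ ((Real.sqrt δ)^3 * 2)⁻¹ * (1-t) ^ (-(1/2):ℝ) := by
    filter_upwards [ae_ne_one'] with t hne ht x hx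
    rw [Set.uIoc_of_le (by norm_num : (0:ℝ) ≤ 1)] at ht
    have ht1 : t < 1 := lt_of_le_of_ne ht.2 hne
    have hs : (0:ℝ) < 1 - t^2 := by nlinarith [ht.1]
    have hq : δ ≤ 1 - x*t^2 := key x hx t ht.1.le ht.2
    have hsp := Real.sqrt_pos.2 hs
    have hqp := Real.sqrt_pos.2 (lt_of_lt_of_le hδ hq)
    rw [Real.norm_eq_abs, abs_of_nonneg (by positivity)]
    calc t^2/(2*Real.sqrt (1-t^2)*Real.sqrt (1-x*t^2)^3)
        ≤ 1/(2*Real.sqrt (1-t^2)*(Real.sqrt δ)^3) := by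
          gcongr
          nlinarith [ht.1, ht.2]
      _ = ((Real.sqrt δ)^3 * 2)⁻¹ * (Real.sqrt (1-t^2))⁻¹ := by
          rw [one_div]; ring
      _ ≤ ((Real.sqrt δ)^3 * 2)⁻¹ * (1-t) ^ (-(1/2):ℝ) := by
          gcongr
          exact inv_sqrt_le ht.1.le ht1
  have hdK : ∀ᵐ t : ℝ ∂volume, t ∈ Ι (0:ℝ) 1 → ∀ x ∈ Metric.ball m ((1-m)/2),
      HasDerivAt (fun x : ℝ => 1 / Real.sqrt ((1 - t^2) * (1 - x*t^2)))
        (t^2/(2*Real.sqrt (1-t^2)*Real.sqrt (1-x*t^2)^3)) x := by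
    filter_upwards [ae_ne_one'] with t hne ht x hx
    rw [Set.uIoc_of_le (by norm_num : (0:ℝ) ≤ 1)] at ht
    have ht1 : t < 1 := lt_of_le_of_ne ht.2 hne
    exact hasDeriv_Kint ht.1.le ht1 (lt_of_lt_of_le hδ (key x hx t ht.1.le ht.2))
  obtain ⟨iG, hK⟩ := intervalIntegral.hasDerivAt_integral_of_dominated_loc_of_deriv_le
    (F := fun (x : ℝ) (t : ℝ) => 1 / Real.sqrt ((1 - t^2) * (1 - x*t^2)))
    (F' := fun (x : ℝ) (t : ℝ) => t^2/(2*Real.sqrt (1-t^2)*Real.sqrt (1-x*t^2)^3))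
    (x₀ := m) (a := 0) (b := 1) (μ := volume)
    (bound := fun t => ((Real.sqrt δ)^3 * 2)⁻¹ * (1-t) ^ (-(1/2):ℝ))
    (Metric.ball_mem_nhds m hε) (Filter.Eventually.of_forall fun x => (measK x).aestronglyMeasurable) iK
    ((measK' m).aestronglyMeasurable) hbK (bnd_intble _) hdK
  -- derivative of E via domination
  have iE : IntervalIntegrable (fun t : ℝ => Real.sqrt (1 - m*t^2) / Real.sqrt (1 - t^2))
      volume 0 1 := by
    apply intble_of_bound (measE m).aestronglyMeasurable (C := Real.sqrt (1 + |m|))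
    intro t ht
    have hs : (0:ℝ) < 1 - t^2 := by nlinarith [ht.1, ht.2]
    have hsp := Real.sqrt_pos.2 hs
    rw [abs_of_nonneg (by positivity), div_eq_mul_inv]
    have h1 : Real.sqrt (1 - m*t^2) ≤ Real.sqrt (1 + |m|) := by
      apply Real.sqrt_le_sqrt
      have ht2 : t^2 ≤ 1 := by nlinarith [ht.1, ht.2]
      have : -(m*t^2) ≤ |m| := by
        calc -(m*t^2) ≤ |m * t^2| := neg_le_abs _
          _ = |m| * t^2 := by rw [abs_mul, abs_of_nonneg (sq_nonneg t)]
          _ ≤ |m| * 1 := mul_le_mul_of_nonneg_left ht2 (abs_nonneg m)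
          _ = |m| := mul_one _
      linarith
    calc Real.sqrt (1-m*t^2) * (Real.sqrt (1-t^2))⁻¹
        ≤ Real.sqrt (1+|m|) * (Real.sqrt (1-t^2))⁻¹ := by gcongr
      _ ≤ Real.sqrt (1+|m|) * (1-t) ^ (-(1/2):ℝ) := by
          gcongr
          exact inv_sqrt_le ht.1.le ht.2
  have hbE : ∀ᵐ t : ℝ ∂volume, t ∈ Ι (0:ℝ) 1 → ∀ x ∈ Metric.ball m ((1-m)/2),
      ‖-t^2/(2*Real.sqrt (1-t^2)*Real.sqrt (1-x*t^2))‖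
        ≤ (Real.sqrt δ * 2)⁻¹ * (1-t) ^ (-(1/2):ℝ) := by
    filter_upwards [ae_ne_one'] with t hne ht x hx
    rw [Set.uIoc_of_le (by norm_num : (0:ℝ) ≤ 1)] at ht
    have ht1 : t < 1 := lt_of_le_of_ne ht.2 hne
    have hs : (0:ℝ) < 1 - t^2 := by nlinarith [ht.1]
    have hq : δ ≤ 1 - x*t^2 := key x hx t ht.1.le ht.2
    have hsp := Real.sqrt_pos.2 hs
    have hqp := Real.sqrt_pos.2 (lt_of_lt_of_le hδ hq)
    rw [Real.norm_eq_abs, abs_div, abs_neg, abs_of_nonneg (sq_nonneg t),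
      abs_of_nonneg (by positivity : (0:ℝ) ≤ 2*Real.sqrt (1-t^2)*Real.sqrt (1-x*t^2))]
    calc t^2/(2*Real.sqrt (1-t^2)*Real.sqrt (1-x*t^2))
        ≤ 1/(2*Real.sqrt (1-t^2)*Real.sqrt δ) := by
          gcongr
          nlinarith [ht.1, ht.2]
      _ = (Real.sqrt δ * 2)⁻¹ * (Real.sqrt (1-t^2))⁻¹ := by
          rw [one_div]; ring
      _ ≤ (Real.sqrt δ * 2)⁻¹ * (1-t) ^ (-(1/2):ℝ) := by
          gcongr
          exact inv_sqrt_le ht.1.le ht1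
  have hdE : ∀ᵐ t : ℝ ∂volume, t ∈ Ι (0:ℝ) 1 → ∀ x ∈ Metric.ball m ((1-m)/2),
      HasDerivAt (fun x : ℝ => Real.sqrt (1 - x*t^2) / Real.sqrt (1 - t^2))
        (-t^2/(2*Real.sqrt (1-t^2)*Real.sqrt (1-x*t^2))) x := by
    filter_upwards [ae_ne_one'] with t hne ht x hx
    rw [Set.uIoc_of_le (by norm_num : (0:ℝ) ≤ 1)] at ht
    have ht1 : t < 1 := lt_of_le_of_ne ht.2 hne
    exact hasDeriv_Eint ht.1.le ht1 (lt_of_lt_of_le hδ (key x hx t ht.1.le ht.2))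
  obtain ⟨iHE, hE⟩ := intervalIntegral.hasDerivAt_integral_of_dominated_loc_of_deriv_le
    (F := fun (x : ℝ) (t : ℝ) => Real.sqrt (1 - x*t^2) / Real.sqrt (1 - t^2))
    (F' := fun (x : ℝ) (t : ℝ) => -t^2/(2*Real.sqrt (1-t^2)*Real.sqrt (1-x*t^2)))
    (x₀ := m) (a := 0) (b := 1) (μ := volume)
    (bound := fun t => (Real.sqrt δ * 2)⁻¹ * (1-t) ^ (-(1/2):ℝ))
    (Metric.ball_mem_nhds m hε) (Filter.Eventually.of_forall fun x => (measE x).aestronglyMeasurable) iE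
    ((measE' m).aestronglyMeasurable) hbE (bnd_intble _) hdE
  -- abbreviations
  set G := ∫ t in (0:ℝ)..1, t^2/(2*Real.sqrt (1-t^2)*Real.sqrt (1-m*t^2)^3) with hGdef
  set HE := ∫ t in (0:ℝ)..1, -t^2/(2*Real.sqrt (1-t^2)*Real.sqrt (1-m*t^2)) with hHEdef
  set D := ∫ t in (0:ℝ)..1, Real.sqrt (1-t^2) / Real.sqrt (1-m*t^2) with hDdef
  -- integrability of D's integrand
  have contq : ∀ t ∈ Set.uIcc (0:ℝ) 1, Real.sqrt (1 - m*t^2) ≠ 0 := by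
    intro t ht
    rw [Set.uIcc_of_le (by norm_num : (0:ℝ) ≤ 1)] at ht
    exact (Real.sqrt_pos.2 (lt_of_lt_of_le hδ (key m hmem t ht.1 ht.2))).ne'
  have iD : IntervalIntegrable (fun t : ℝ => Real.sqrt (1-t^2) / Real.sqrt (1-m*t^2))
      volume 0 1 := by
    apply ContinuousOn.intervalIntegrable
    exact ((Real.continuous_sqrt.comp (continuous_const.sub (continuous_pow 2))).continuousOn).div
      ((Real.continuous_sqrt.comp (continuous_const.sub
        (continuous_const.mul (continuous_pow 2)))).continuousOn) contq
  -- integrability of 2·G integrand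
  have iG2 : IntervalIntegrable (fun t : ℝ => (1-m) * (t^2/(Real.sqrt (1-t^2)*Real.sqrt (1-m*t^2)^3)))
      volume 0 1 := by
    have h := iG.const_mul (2*(1-m))
    have : (fun t : ℝ => (2*(1-m)) * (t^2/(2*Real.sqrt (1-t^2)*Real.sqrt (1-m*t^2)^3)))
        = fun t : ℝ => (1-m) * (t^2/(Real.sqrt (1-t^2)*Real.sqrt (1-m*t^2)^3)) := by
      funext t; ring
    rwa [this] at h
  -- FTC : ∫ (Dint - (1-m)·t²/(s q³)) = 0
  have hcontPhi : ContinuousOn (fun t : ℝ => t * Real.sqrt (1 - t^2) * (Real.sqrt (1 - m*t^2))⁻¹)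
      (Set.Icc (0:ℝ) 1) := by
    apply ContinuousOn.mul
    · exact (continuous_id.mul (Real.continuous_sqrt.comp
        (continuous_const.sub (continuous_pow 2)))).continuousOn
    · apply ContinuousOn.inv₀ ((Real.continuous_sqrt.comp (continuous_const.sub
        (continuous_const.mul (continuous_pow 2)))).continuousOn)
      intro t ht
      exact contq t (by rwa [Set.uIcc_of_le (by norm_num : (0:ℝ) ≤ 1)])
  have hftc : (∫ t in (0:ℝ)..1, (Real.sqrt (1-t^2) / Real.sqrt (1-m*t^2)
      - (1-m) * (t^2/(Real.sqrt (1-t^2)*Real.sqrt (1-m*t^2)^3)))) = 0 := by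
    rw [integral_eq_sub_of_hasDeriv_right_of_le zero_le_one hcontPhi
      (fun t ht => (hasDeriv_Phi hm ht.1 ht.2).hasDerivWithinAt) (iD.sub iG2)]
    norm_num
  have hD2G : D = (1-m) * (2*G) := by
    have h1 := intervalIntegral.integral_sub iD iG2
    rw [hftc] at h1  -- 0 = D - ∫ (1-m)·(..)
    have h2 : (∫ t in (0:ℝ)..1, (1-m) * (t^2/(Real.sqrt (1-t^2)*Real.sqrt (1-m*t^2)^3)))
        = (1-m) * (2*G) := by
      rw [hGdef, ← intervalIntegral.integral_const_mul, ← intervalIntegral.integral_const_mul]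
      apply intervalIntegral.integral_congr
      intro t ht
      ring
    rw [h2] at h1
    linarith [h1]
  -- pointwise identities
  have hmne : (1:ℝ) - m ≠ 0 := by linarith
  have idb : Eell m - (1-m) * Kell m = m * D := by
    have h1 : Eell m = ∫ t in (0:ℝ)..1, Real.sqrt (1 - m*t^2) / Real.sqrt (1 - t^2) := rfl
    have h2 : Kell m = ∫ t in (0:ℝ)..1, 1 / Real.sqrt ((1 - t^2) * (1 - m*t^2)) := rfl
    rw [h1, h2, ← intervalIntegral.integral_const_mul, ← intervalIntegral.integral_const_mul,
      ← intervalIntegral.integral_sub iE (iK.const_mul (1-m))]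
    apply intervalIntegral.integral_congr_ae
    filter_upwards [ae_ne_one'] with t hne ht
    rw [Set.uIoc_of_le (by norm_num : (0:ℝ) ≤ 1)] at ht
    have ht1 : t < 1 := lt_of_le_of_ne ht.2 hne
    have hs : (0:ℝ) < 1 - t^2 := by nlinarith [ht.1]
    have hq : (0:ℝ) < 1 - m*t^2 := lt_of_lt_of_le hδ (key m hmem t ht.1.le ht.2)
    have hsp := Real.sqrt_pos.2 hs
    have hqp := Real.sqrt_pos.2 hq
    have hs2 : Real.sqrt (1-t^2)^2 = 1-t^2 := Real.sq_sqrt hs.le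
    have hq2 : Real.sqrt (1-m*t^2)^2 = 1-m*t^2 := Real.sq_sqrt hq.le
    rw [Real.sqrt_mul hs.le]
    set s := Real.sqrt (1-t^2)
    set q := Real.sqrt (1-m*t^2)
    field_simp
    linear_combination hq2 - m*hs2
  have ida : Eell m - Kell m = (2*m) * HE := by
    have h1 : Eell m = ∫ t in (0:ℝ)..1, Real.sqrt (1 - m*t^2) / Real.sqrt (1 - t^2) := rfl
    have h2 : Kell m = ∫ t in (0:ℝ)..1, 1 / Real.sqrt ((1 - t^2) * (1 - m*t^2)) := rfl
    rw [h1, h2, hHEdef, ← intervalIntegral.integral_const_mul,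
      ← intervalIntegral.integral_sub iE iK]
    apply intervalIntegral.integral_congr_ae
    filter_upwards [ae_ne_one'] with t hne ht
    rw [Set.uIoc_of_le (by norm_num : (0:ℝ) ≤ 1)] at ht
    have ht1 : t < 1 := lt_of_le_of_ne ht.2 hne
    have hs : (0:ℝ) < 1 - t^2 := by nlinarith [ht.1]
    have hq : (0:ℝ) < 1 - m*t^2 := lt_of_lt_of_le hδ (key m hmem t ht.1.le ht.2)
    have hsp := Real.sqrt_pos.2 hs
    have hqp := Real.sqrt_pos.2 hq
    have hs2 : Real.sqrt (1-t^2)^2 = 1-t^2 := Real.sq_sqrt hs.le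
    have hq2 : Real.sqrt (1-m*t^2)^2 = 1-m*t^2 := Real.sq_sqrt hq.le
    rw [Real.sqrt_mul hs.le]
    set s := Real.sqrt (1-t^2)
    set q := Real.sqrt (1-m*t^2)
    field_simp
    linear_combination hq2
  constructor
  · have hval : (Eell m - (1 - m) * Kell m) / (2 * m * (1 - m)) = G := by
      rw [idb, hD2G]
      field_simp
    rw [hval]
    have : Kell = fun x => ∫ t in (0:ℝ)..1, 1 / Real.sqrt ((1 - t^2) * (1 - x*t^2)) := rfl
    rw [this]
    exact hK
  · have hval : (Eell m - Kell m) / (2 * m) = HE := by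
      rw [ida]
      field_simp
    rw [hval]
    have : Eell = fun x => ∫ t in (0:ℝ)..1, Real.sqrt (1 - x*t^2) / Real.sqrt (1 - t^2) := rfl
    rw [this]
    exact hE
end

section
/- For every m < 1 with m ≠ 0, the function m ↦ I₁(m)/I₀(m) is differentiable at m and satisfies the Riccati differential equation (I₁/I₀)'(m) = 1/(2m(1−m)) − (1/(m(1−m)))·(I₁/I₀)(m) + (1/(2(1−m)))·((I₁/I₀)(m))². -/
open Real MeasureTheory Set intervalIntegral



noncomputable def aI (s : ℝ) (k : ℕ) (ζ : ℝ) : ℝ :=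
  ζ ^ (2 * k) / (Real.sqrt (1 - ζ ^ 2) * Real.sqrt (1 - s * ζ ^ 2))

noncomputable def bI (s : ℝ) (k : ℕ) (ζ : ℝ) : ℝ :=
  ζ ^ (2 * k) / (Real.sqrt (1 - ζ ^ 2) * ((1 - s * ζ ^ 2) * Real.sqrt (1 - s * ζ ^ 2)))

lemma min_le_one_sub {s ζ : ℝ} (h0 : 0 ≤ ζ) (h1 : ζ ≤ 1) :
    min (1 - s) 1 ≤ 1 - s * ζ ^ 2 := by
  rcases le_total 0 s with h | h
  · have h2 : s * ζ ^ 2 ≤ s := by nlinarith [mul_nonneg h (sub_nonneg.2 (by nlinarith : ζ ^ 2 ≤ 1))]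
    have := min_le_left (1 - s) 1; linarith
  · have h2 : s * ζ ^ 2 ≤ 0 := mul_nonpos_of_nonpos_of_nonneg h (by positivity)
    have := min_le_right (1 - s) 1; linarith

lemma meas_aI (s : ℝ) (k : ℕ) : Measurable (aI s k) := by
  unfold aI
  exact (measurable_id.pow_const _).div
    ((Real.continuous_sqrt.measurable.comp (by fun_prop)).mul
      (Real.continuous_sqrt.measurable.comp (by fun_prop)))

lemma meas_bI (s : ℝ) (k : ℕ) : Measurable (bI s k) := by
  unfold bI
  exact (measurable_id.pow_const _).div
    ((Real.continuous_sqrt.measurable.comp (by fun_prop)).mul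
      ((by fun_prop : Measurable fun ζ : ℝ => 1 - s * ζ ^ 2).mul
        (Real.continuous_sqrt.measurable.comp (by fun_prop))))

lemma II_rpow_bound (C : ℝ) :
    IntervalIntegrable (fun x : ℝ => C * (1 - x) ^ (-(1 / 2) : ℝ)) volume 0 1 := by
  have h : IntervalIntegrable (fun x : ℝ => x ^ (-(1 / 2) : ℝ)) volume 0 1 :=
    intervalIntegrable_rpow' (by norm_num)
  have h2 := (h.comp_sub_left 1).symm
  simpa using h2.const_mul C

lemma II_of_bound {f : ℝ → ℝ} (hf : Measurable f) {C : ℝ}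
    (hb : ∀ ζ ∈ Ioo (0 : ℝ) 1, |f ζ| ≤ C * (1 / Real.sqrt (1 - ζ))) :
    IntervalIntegrable f volume 0 1 := by
  rw [intervalIntegrable_iff, uIoc_of_le zero_le_one]
  have hg := II_rpow_bound C
  rw [intervalIntegrable_iff, uIoc_of_le zero_le_one] at hg
  refine hg.mono' hf.aestronglyMeasurable.restrict ?_
  have h1 : ∀ᵐ x ∂(volume.restrict (Ioc (0 : ℝ) 1)), x ∈ Ioc (0 : ℝ) 1 :=
    ae_restrict_mem measurableSet_Ioc
  have h2 : ∀ᵐ x ∂(volume.restrict (Ioc (0 : ℝ) 1)), x ≠ 1 := by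
    refine ae_restrict_of_ae ?_
    refine ae_iff.2 ?_
    simp
  filter_upwards [h1, h2] with x hx hx1
  have hx' : x ∈ Ioo (0 : ℝ) 1 := ⟨hx.1, lt_of_le_of_ne hx.2 hx1⟩
  have hlt : (0:ℝ) < 1 - x := by linarith [hx'.2]
  have : C * (1 / Real.sqrt (1 - x)) = C * (1 - x) ^ (-(1/2) : ℝ) := by
    rw [Real.rpow_neg hlt.le, ← Real.sqrt_eq_rpow, one_div]
  rw [Real.norm_eq_abs, ← this]
  exact hb x hx'

lemma aI_nonneg (s : ℝ) (k : ℕ) (ζ : ℝ) : 0 ≤ aI s k ζ := by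
  unfold aI
  exact div_nonneg ((even_two_mul k).pow_nonneg ζ)
    (mul_nonneg (Real.sqrt_nonneg _) (Real.sqrt_nonneg _))

lemma bI_nonneg (s ζ : ℝ) (k : ℕ) (hu : 0 ≤ 1 - s * ζ ^ 2) : 0 ≤ bI s k ζ := by
  unfold bI
  exact div_nonneg ((even_two_mul k).pow_nonneg ζ)
    (mul_nonneg (Real.sqrt_nonneg _) (mul_nonneg hu (Real.sqrt_nonneg _)))

lemma pow_2k_le_one {ζ : ℝ} (h0 : 0 ≤ ζ) (h1 : ζ ≤ 1) (k : ℕ) : ζ ^ (2 * k) ≤ 1 :=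
  pow_le_one₀ h0 h1

lemma sqrt_one_sub_le {ζ : ℝ} (h0 : 0 ≤ ζ) (h1 : ζ ≤ 1) :
    Real.sqrt (1 - ζ) ≤ Real.sqrt (1 - ζ ^ 2) := by
  apply Real.sqrt_le_sqrt
  nlinarith

lemma aI_bound {s ζ c : ℝ} (hc0 : 0 < c) (hcu : c ≤ 1 - s * ζ ^ 2)
    (h0 : 0 < ζ) (h1 : ζ < 1) (k : ℕ) :
    aI s k ζ ≤ (1 / Real.sqrt c) * (1 / Real.sqrt (1 - ζ)) := by
  have hsq : (0:ℝ) < Real.sqrt (1 - ζ) := Real.sqrt_pos.2 (by linarith)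
  have hsc : (0:ℝ) < Real.sqrt c := Real.sqrt_pos.2 hc0
  have hST : Real.sqrt (1 - ζ) * Real.sqrt c ≤
      Real.sqrt (1 - ζ ^ 2) * Real.sqrt (1 - s * ζ ^ 2) :=
    mul_le_mul (sqrt_one_sub_le h0.le h1.le) (Real.sqrt_le_sqrt hcu) hsc.le (Real.sqrt_nonneg _)
  have := div_le_div₀ (c := (1:ℝ)) zero_le_one (pow_2k_le_one h0.le h1.le k)
    (by positivity) hST
  unfold aI
  calc ζ ^ (2 * k) / (Real.sqrt (1 - ζ ^ 2) * Real.sqrt (1 - s * ζ ^ 2))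
      ≤ 1 / (Real.sqrt (1 - ζ) * Real.sqrt c) := this
    _ = (1 / Real.sqrt c) * (1 / Real.sqrt (1 - ζ)) := by ring

lemma bI_bound {s ζ c : ℝ} (hc0 : 0 < c) (hcu : c ≤ 1 - s * ζ ^ 2)
    (h0 : 0 < ζ) (h1 : ζ < 1) (k : ℕ) :
    bI s k ζ ≤ (1 / (c * Real.sqrt c)) * (1 / Real.sqrt (1 - ζ)) := by
  have hsq : (0:ℝ) < Real.sqrt (1 - ζ) := Real.sqrt_pos.2 (by linarith)
  have hsc : (0:ℝ) < Real.sqrt c := Real.sqrt_pos.2 hc0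
  have hu : (0:ℝ) < 1 - s * ζ ^ 2 := lt_of_lt_of_le hc0 hcu
  have hST : Real.sqrt (1 - ζ) * (c * Real.sqrt c) ≤
      Real.sqrt (1 - ζ ^ 2) * ((1 - s * ζ ^ 2) * Real.sqrt (1 - s * ζ ^ 2)) := by
    apply mul_le_mul (sqrt_one_sub_le h0.le h1.le)
      (mul_le_mul hcu (Real.sqrt_le_sqrt hcu) hsc.le hu.le)
      (by positivity) (Real.sqrt_nonneg _)
  have := div_le_div₀ (c := (1:ℝ)) zero_le_one (pow_2k_le_one h0.le h1.le k)
    (by positivity) hST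
  unfold bI
  calc ζ ^ (2 * k) / (Real.sqrt (1 - ζ ^ 2) * ((1 - s * ζ ^ 2) * Real.sqrt (1 - s * ζ ^ 2)))
      ≤ 1 / (Real.sqrt (1 - ζ) * (c * Real.sqrt c)) := this
    _ = (1 / (c * Real.sqrt c)) * (1 / Real.sqrt (1 - ζ)) := by ring

lemma II_aI {s : ℝ} (hs : s < 1) (k : ℕ) : IntervalIntegrable (aI s k) volume 0 1 := by
  set c := min (1 - s) 1 with hc
  have hc0 : 0 < c := lt_min (by linarith) one_pos
  refine II_of_bound (meas_aI s k) (C := 1 / Real.sqrt c) ?_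
  intro ζ hζ
  rw [abs_of_nonneg (aI_nonneg s k ζ)]
  exact aI_bound hc0 (min_le_one_sub hζ.1.le hζ.2.le) hζ.1 hζ.2 k

lemma II_bI {s : ℝ} (hs : s < 1) (k : ℕ) : IntervalIntegrable (bI s k) volume 0 1 := by
  set c := min (1 - s) 1 with hc
  have hc0 : 0 < c := lt_min (by linarith) one_pos
  refine II_of_bound (meas_bI s k) (C := 1 / (c * Real.sqrt c)) ?_
  intro ζ hζ
  have hcu := min_le_one_sub (s := s) hζ.1.le hζ.2.le
  rw [abs_of_nonneg (bI_nonneg s ζ k (by linarith [lt_of_lt_of_le hc0 hcu]))]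
  exact bI_bound hc0 hcu hζ.1 hζ.2 k

lemma hasDerivAt_aI (n : ℕ) {s ζ : ℝ} (hs : s < 1) (h0 : 0 < ζ) (h1 : ζ < 1) :
    HasDerivAt (fun x => aI x n ζ) ((1 / 2) * bI s (n + 1) ζ) s := by
  have hζ2 : (0:ℝ) < 1 - ζ ^ 2 := by nlinarith
  have hu : (0:ℝ) < 1 - s * ζ ^ 2 :=
    lt_of_lt_of_le (lt_min (by linarith) one_pos) (min_le_one_sub h0.le h1.le)
  have hT : Real.sqrt (1 - s * ζ ^ 2) ≠ 0 := (Real.sqrt_pos.2 hu).ne'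
  have hS : Real.sqrt (1 - ζ ^ 2) ≠ 0 := (Real.sqrt_pos.2 hζ2).ne'
  have d1 : HasDerivAt (fun x : ℝ => 1 - x * ζ ^ 2) (-ζ ^ 2) s := by
    simpa using ((hasDerivAt_id s).mul_const (ζ ^ 2)).const_sub 1
  have d2 : HasDerivAt (fun x => Real.sqrt (1 - x * ζ ^ 2))
      (1 / (2 * Real.sqrt (1 - s * ζ ^ 2)) * (-ζ ^ 2)) s :=
    (Real.hasDerivAt_sqrt hu.ne').comp s d1
  have d3 := (d2.inv hT).const_mul (ζ ^ (2 * n) / Real.sqrt (1 - ζ ^ 2))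
  refine (d3.congr_deriv ?_).congr_of_eventuallyEq (Filter.EventuallyEq.of_eq ?_)
  · unfold bI
    rw [Real.sq_sqrt hu.le]
    field_simp
    ring
  · funext x
    unfold aI
    simp only [Pi.inv_apply]
    ring

lemma ellI_eq (n : ℕ) (s : ℝ) : ellI n s = ∫ ζ in (0:ℝ)..1, aI s n ζ := by
  unfold ellI aI
  apply intervalIntegral.integral_congr
  intro ζ hζ
  rw [Set.uIcc_of_le zero_le_one] at hζ
  dsimp only
  rw [Real.sqrt_mul (by nlinarith [hζ.1, hζ.2] : (0:ℝ) ≤ 1 - ζ ^ 2)]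

lemma ae_Ioo {p : ℝ → Prop} (h : ∀ ζ ∈ Ioo (0:ℝ) 1, p ζ) :
    ∀ᵐ ζ ∂(volume : Measure ℝ), ζ ∈ Set.uIoc (0:ℝ) 1 → p ζ := by
  have h2 : ∀ᵐ ζ ∂(volume : Measure ℝ), ζ ≠ 1 := by
    refine ae_iff.2 ?_; simp
  filter_upwards [h2] with ζ hζ1 hζ
  rw [Set.uIoc_of_le zero_le_one] at hζ
  exact h ζ ⟨hζ.1, lt_of_le_of_ne hζ.2 hζ1⟩

lemma hasDerivAt_ellI (n : ℕ) {m : ℝ} (hm : m < 1) :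
    HasDerivAt (ellI n) ((1 / 2) * ∫ ζ in (0:ℝ)..1, bI m (n + 1) ζ) m := by
  set ε := (1 - m) / 2 with hε
  have hε0 : 0 < ε := by simp only [hε]; linarith
  set c := min ε 1 with hc
  have hc0 : 0 < c := lt_min hε0 one_pos
  have hball : ∀ x ∈ Metric.ball m ε, x < 1 ∧ ε ≤ 1 - x := by
    intro x hx
    rw [Metric.mem_ball, Real.dist_eq] at hx
    have := abs_lt.1 hx
    constructor <;> [linarith [this.2]; linarith [this.2]]
  have key := intervalIntegral.hasDerivAt_integral_of_dominated_loc_of_deriv_le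
    (F := fun s ζ => aI s n ζ) (F' := fun s ζ => (1 / 2) * bI s (n + 1) ζ)
    (bound := fun ζ => (1 / (c * Real.sqrt c)) * (1 / Real.sqrt (1 - ζ)))
    (μ := volume) (a := 0) (b := 1) (x₀ := m) (Metric.ball_mem_nhds m hε0)
    (Filter.Eventually.of_forall fun s => (meas_aI s n).aestronglyMeasurable.restrict)
    (II_aI hm n)
    ((meas_bI m (n+1)).aestronglyMeasurable.const_smul ((1:ℝ)/2)).restrict
    ?_ ?_ ?_
  · have h2 := key.2
    have heq : (fun s => ∫ ζ in (0:ℝ)..1, aI s n ζ) = ellI n :=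
      funext fun s => (ellI_eq n s).symm
    rw [heq, intervalIntegral.integral_const_mul] at h2
    exact h2
  · -- bound
    apply ae_Ioo
    intro ζ hζ x hx
    have hx1 := (hball x hx).1
    have hcu : c ≤ 1 - x * ζ ^ 2 := by
      have h1 : c ≤ min (1 - x) 1 := le_min (le_trans (min_le_left _ _) (hball x hx).2)
        (min_le_right _ _)
      exact le_trans h1 (min_le_one_sub hζ.1.le hζ.2.le)
    have hb := bI_bound hc0 hcu hζ.1 hζ.2 (n + 1)
    have hnn := bI_nonneg x ζ (n + 1) (le_trans hc0.le hcu)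
    rw [Real.norm_eq_abs, abs_of_nonneg (by positivity)]
    have hpos : 0 ≤ (1 / (c * Real.sqrt c)) * (1 / Real.sqrt (1 - ζ)) := le_trans hnn hb
    nlinarith [hb, hnn]
  · -- bound integrable
    refine II_of_bound (f := fun ζ => (1 / (c * Real.sqrt c)) * (1 / Real.sqrt (1 - ζ)))
      (C := 1 / (c * Real.sqrt c)) (by fun_prop) ?_
    intro ζ hζ
    have h1 : (0:ℝ) < Real.sqrt (1 - ζ) := Real.sqrt_pos.2 (by linarith [hζ.2])
    have h2 : (0:ℝ) < Real.sqrt c := Real.sqrt_pos.2 hc0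
    rw [abs_of_nonneg (by positivity)]
  · -- differentiability
    apply ae_Ioo
    intro ζ hζ x hx
    exact hasDerivAt_aI n (hball x hx).1 hζ.1 hζ.2

lemma R1 {m : ℝ} (hm : m < 1) :
    (∫ ζ in (0:ℝ)..1, bI m 1 ζ) - m * ∫ ζ in (0:ℝ)..1, bI m 2 ζ
      = ∫ ζ in (0:ℝ)..1, aI m 1 ζ := by
  rw [← intervalIntegral.integral_const_mul,
    ← intervalIntegral.integral_sub (II_bI hm 1) ((II_bI hm 2).const_mul m)]
  apply intervalIntegral.integral_congr
  intro ζ hζ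
  rw [Set.uIcc_of_le zero_le_one] at hζ
  dsimp only
  rcases eq_or_lt_of_le hζ.2 with h1 | h1
  · subst h1
    norm_num [aI, bI]
  · have hζ2 : (0:ℝ) < 1 - ζ ^ 2 := by nlinarith [hζ.1]
    have hu : (0:ℝ) < 1 - m * ζ ^ 2 :=
      lt_of_lt_of_le (lt_min (by linarith) one_pos) (min_le_one_sub hζ.1 h1.le)
    have hS : Real.sqrt (1 - ζ ^ 2) ≠ 0 := (Real.sqrt_pos.2 hζ2).ne'
    have hT : Real.sqrt (1 - m * ζ ^ 2) ≠ 0 := (Real.sqrt_pos.2 hu).ne'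
    unfold aI bI
    calc _ = ζ ^ (2 * 1) * (1 - m * ζ ^ 2) / (Real.sqrt (1 - ζ ^ 2) * ((1 - m * ζ ^ 2) * Real.sqrt (1 - m * ζ ^ 2))) := by ring
      _ = _ := by
        rw [div_eq_div_iff (mul_ne_zero hS (mul_ne_zero hu.ne' hT)) (mul_ne_zero hS hT)]; ring

lemma pos_A0 {m : ℝ} (hm : m < 1) : 0 < ∫ ζ in (0:ℝ)..1, aI m 0 ζ := by
  apply intervalIntegral.intervalIntegral_pos_of_pos_on (II_aI hm 0) _ one_pos
  intro ζ hζ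
  have hζ2 : (0:ℝ) < 1 - ζ ^ 2 := by nlinarith [hζ.1, hζ.2]
  have hu : (0:ℝ) < 1 - m * ζ ^ 2 :=
    lt_of_lt_of_le (lt_min (by linarith) one_pos) (min_le_one_sub hζ.1.le hζ.2.le)
  have hS := Real.sqrt_pos.2 hζ2
  have hT := Real.sqrt_pos.2 hu
  unfold aI
  simp only [Nat.mul_zero, pow_zero]
  positivity

lemma R2 {m : ℝ} (hm : m < 1) :
    (∫ ζ in (0:ℝ)..1, aI m 0 ζ) - 2 * (∫ ζ in (0:ℝ)..1, aI m 1 ζ)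
      + m * ((∫ ζ in (0:ℝ)..1, bI m 1 ζ) - ∫ ζ in (0:ℝ)..1, bI m 2 ζ) = 0 := by
  have hint : IntervalIntegrable
      (fun ζ => aI m 0 ζ - 2 * aI m 1 ζ + m * (bI m 1 ζ - bI m 2 ζ)) volume 0 1 :=
    ((II_aI hm 0).sub ((II_aI hm 1).const_mul 2)).add
      (((II_bI hm 1).sub (II_bI hm 2)).const_mul m)
  have hc1 : ∀ ζ ∈ Icc (0:ℝ) 1, Real.sqrt (1 - m * ζ ^ 2) ≠ 0 := by
    intro ζ hζ
    have hu : (0:ℝ) < 1 - m * ζ ^ 2 :=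
      lt_of_lt_of_le (lt_min (by linarith) one_pos) (min_le_one_sub hζ.1 hζ.2)
    exact (Real.sqrt_pos.2 hu).ne'
  have hFTC := intervalIntegral.integral_eq_sub_of_hasDeriv_right_of_le zero_le_one
    (f := fun ζ => ζ * Real.sqrt (1 - ζ ^ 2) / Real.sqrt (1 - m * ζ ^ 2))
    (f' := fun ζ => aI m 0 ζ - 2 * aI m 1 ζ + m * (bI m 1 ζ - bI m 2 ζ))
    (ContinuousOn.div (by fun_prop) (by fun_prop) hc1) ?_ hint
  · rw [intervalIntegral.integral_add ((II_aI hm 0).sub ((II_aI hm 1).const_mul 2))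
        (((II_bI hm 1).sub (II_bI hm 2)).const_mul m),
      intervalIntegral.integral_sub (II_aI hm 0) ((II_aI hm 1).const_mul 2),
      intervalIntegral.integral_const_mul, intervalIntegral.integral_const_mul,
      intervalIntegral.integral_sub (II_bI hm 1) (II_bI hm 2)] at hFTC
    rw [hFTC]
    norm_num
  · intro ζ hζ
    have hζ2 : (0:ℝ) < 1 - ζ ^ 2 := by nlinarith [hζ.1, hζ.2]
    have hu : (0:ℝ) < 1 - m * ζ ^ 2 :=
      lt_of_lt_of_le (lt_min (by linarith) one_pos) (min_le_one_sub hζ.1.le hζ.2.le)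
    have hS : Real.sqrt (1 - ζ ^ 2) ≠ 0 := (Real.sqrt_pos.2 hζ2).ne'
    have hT : Real.sqrt (1 - m * ζ ^ 2) ≠ 0 := (Real.sqrt_pos.2 hu).ne'
    have d1 : HasDerivAt (fun ζ : ℝ => 1 - ζ ^ 2) (-(2 * ζ)) ζ := by
      simpa using (hasDerivAt_pow 2 ζ).const_sub 1
    have dS : HasDerivAt (fun ζ : ℝ => Real.sqrt (1 - ζ ^ 2))
        (1 / (2 * Real.sqrt (1 - ζ ^ 2)) * (-(2 * ζ))) ζ :=
      (Real.hasDerivAt_sqrt hζ2.ne').comp ζ d1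
    have d2 : HasDerivAt (fun ζ : ℝ => 1 - m * ζ ^ 2) (-(m * (2 * ζ))) ζ := by
      have := ((hasDerivAt_pow 2 ζ).const_mul m).const_sub 1
      simpa [mul_comm] using this
    have dT : HasDerivAt (fun ζ : ℝ => Real.sqrt (1 - m * ζ ^ 2))
        (1 / (2 * Real.sqrt (1 - m * ζ ^ 2)) * (-(m * (2 * ζ)))) ζ :=
      (Real.hasDerivAt_sqrt hu.ne').comp ζ d2
    have dnum : HasDerivAt (fun ζ : ℝ => ζ * Real.sqrt (1 - ζ ^ 2))
        (1 * Real.sqrt (1 - ζ ^ 2) + ζ * (1 / (2 * Real.sqrt (1 - ζ ^ 2)) * (-(2 * ζ)))) ζ :=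
      (hasDerivAt_id ζ).mul dS
    have dF := dnum.div dT hT
    have hval : (1 * Real.sqrt (1 - ζ ^ 2) + ζ * (1 / (2 * Real.sqrt (1 - ζ ^ 2)) * (-(2 * ζ))))
          * Real.sqrt (1 - m * ζ ^ 2)
          - ζ * Real.sqrt (1 - ζ ^ 2) * (1 / (2 * Real.sqrt (1 - m * ζ ^ 2)) * (-(m * (2 * ζ)))) =
        ((aI m 0 ζ - 2 * aI m 1 ζ + m * (bI m 1 ζ - bI m 2 ζ)) * Real.sqrt (1 - m * ζ ^ 2) ^ 2) := by
      have hS2 : Real.sqrt (1 - ζ ^ 2) * Real.sqrt (1 - ζ ^ 2) = 1 - ζ ^ 2 :=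
        Real.mul_self_sqrt hζ2.le
      have hT2 : Real.sqrt (1 - m * ζ ^ 2) * Real.sqrt (1 - m * ζ ^ 2) = 1 - m * ζ ^ 2 :=
        Real.mul_self_sqrt hu.le
      unfold aI bI
      rw [Real.sq_sqrt hu.le]
      field_simp
      ring_nf
      have hu' : (0:ℝ) ≤ 1 - ζ ^ 2 * m := by linarith [mul_comm m (ζ ^ 2)]
      have e1 : Real.sqrt (1 - ζ ^ 2) ^ 2 = 1 - ζ ^ 2 := Real.sq_sqrt hζ2.le
      have e2 : Real.sqrt (1 - ζ ^ 2 * m) ^ 2 = 1 - ζ ^ 2 * m := Real.sq_sqrt hu'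
      have e3 : Real.sqrt (1 - ζ ^ 2) ^ 4 = (1 - ζ ^ 2) ^ 2 := by
        rw [show (4:ℕ) = 2 * 2 from rfl, pow_mul, e1]
      have e4 : Real.sqrt (1 - ζ ^ 2 * m) ^ 4 = (1 - ζ ^ 2 * m) ^ 2 := by
        rw [show (4:ℕ) = 2 * 2 from rfl, pow_mul, e2]
      rw [e1, e2]
      have hU' : (1:ℝ) - ζ ^ 2 * m ≠ 0 := by linarith [mul_comm m (ζ ^ 2)]
      have hT' : Real.sqrt (1 - ζ ^ 2 * m) ≠ 0 := (Real.sqrt_pos.2 (by linarith [mul_comm m (ζ ^ 2)])).ne'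
      field_simp
      ring
    have hD : ((1 * Real.sqrt (1 - ζ ^ 2) + ζ * (1 / (2 * Real.sqrt (1 - ζ ^ 2)) * (-(2 * ζ))))
          * Real.sqrt (1 - m * ζ ^ 2)
          - ζ * Real.sqrt (1 - ζ ^ 2) * (1 / (2 * Real.sqrt (1 - m * ζ ^ 2)) * (-(m * (2 * ζ)))))
          / Real.sqrt (1 - m * ζ ^ 2) ^ 2
        = aI m 0 ζ - 2 * aI m 1 ζ + m * (bI m 1 ζ - bI m 2 ζ) := by
      rw [hval, mul_div_assoc, div_self (pow_ne_zero 2 hT), mul_one]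
    rw [hD] at dF
    exact dF.hasDerivWithinAt

/-- For `m < 1`, `m ≠ 0`, the quotient `I₁/I₀` is differentiable at
`m` and satisfies the Riccati equation
`(I₁/I₀)' = 1/(2m(1−m)) − (1/(m(1−m)))(I₁/I₀) + (1/(2(1−m)))(I₁/I₀)²`. -/
theorem stmt18 (m : ℝ) (hm : m < 1) (hm0 : m ≠ 0) :
    HasDerivAt (fun s => ellI 1 s / ellI 0 s)
      (1 / (2 * m * (1 - m)) - (1 / (m * (1 - m))) * (ellI 1 m / ellI 0 m)
        + (1 / (2 * (1 - m))) * (ellI 1 m / ellI 0 m) ^ 2) m := by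
  have h0 : HasDerivAt (ellI 0) ((1 / 2) * ∫ ζ in (0:ℝ)..1, bI m 1 ζ) m :=
    hasDerivAt_ellI 0 hm
  have h1 : HasDerivAt (ellI 1) ((1 / 2) * ∫ ζ in (0:ℝ)..1, bI m 2 ζ) m :=
    hasDerivAt_ellI 1 hm
  set a := ∫ ζ in (0:ℝ)..1, aI m 0 ζ with ha
  set b := ∫ ζ in (0:ℝ)..1, aI m 1 ζ with hb
  set B1 := ∫ ζ in (0:ℝ)..1, bI m 1 ζ with hB1
  set B2 := ∫ ζ in (0:ℝ)..1, bI m 2 ζ with hB2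
  have ha0 : 0 < a := pos_A0 hm
  have hE0 : ellI 0 m = a := ellI_eq 0 m
  have hE1 : ellI 1 m = b := ellI_eq 1 m
  have hr1 : B1 - m * B2 = b := R1 hm
  have hr2 : a - 2 * b + m * (B1 - B2) = 0 := R2 hm
  have hd := h1.div h0 (by rw [hE0]; exact ha0.ne')
  refine hd.congr_deriv ?_
  rw [hE0, hE1]
  have h1m : (1:ℝ) - m ≠ 0 := by linarith
  field_simp
  linear_combination (m*a - m*b) * hr1 + (m*b - a) * hr2
end

section
/- For every m < 0 one has (2 − m)·I₁(m)/I₀(m) > 1. -/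
open MeasureTheory intervalIntegral Set

/-- Integrability of `q ζ / √((1−ζ²)(1−mζ²))` on `[0,1]` for `m < 0` and continuous `q`. -/
lemma aux_integrable (m : ℝ) (hm : m < 0) (q : ℝ → ℝ) (hq : Continuous q) :
    IntervalIntegrable (fun ζ => q ζ / Real.sqrt ((1 - ζ^2) * (1 - m*ζ^2)))
      MeasureTheory.volume 0 1 := by
  obtain ⟨C, hC⟩ := (isCompact_Icc (a := (0:ℝ)) (b := 1)).exists_bound_of_continuousOn
    hq.continuousOn
  have hC0 : 0 ≤ C := le_trans (norm_nonneg _) (hC 0 (by norm_num))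
  -- dominating function
  have hdom : IntervalIntegrable (fun x : ℝ => C * (1 - x) ^ (-(1/2) : ℝ))
      MeasureTheory.volume 0 1 := by
    have h1 : IntervalIntegrable (fun x : ℝ => x ^ (-(1/2) : ℝ)) MeasureTheory.volume 0 1 :=
      intervalIntegrable_rpow' (by norm_num)
    have h2 := (h1.comp_sub_left 1).symm
    simpa using h2.const_mul C
  refine hdom.mono_fun' ?_ ?_
  · apply Measurable.aestronglyMeasurable
    exact hq.measurable.div ((continuous_const.sub (continuous_pow 2)).mul
      (continuous_const.sub (continuous_const.mul (continuous_pow 2)))).measurable.sqrt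
  · rw [Filter.EventuallyLE, ae_restrict_iff' measurableSet_uIoc]
    filter_upwards with x hx
    rw [uIoc_of_le (by norm_num : (0:ℝ) ≤ 1)] at hx
    obtain ⟨hx0, hx1⟩ := hx
    rcases eq_or_lt_of_le hx1 with h1 | h1
    · subst h1
      norm_num
    · have hxx : (0:ℝ) < 1 - x := by linarith
      have hP : 0 < (1 - x^2) * (1 - m*x^2) := by
        nlinarith [mul_pos hxx (by linarith : (0:ℝ) < 1 + x),
          mul_nonneg (neg_nonneg.2 hm.le) (sq_nonneg x)]
      have hsle : (1 - x) ^ ((1/2) : ℝ) ≤ Real.sqrt ((1 - x^2) * (1 - m*x^2)) := by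
        rw [show ((1:ℝ)-x) ^ ((1/2):ℝ) = Real.sqrt (1-x) from (Real.sqrt_eq_rpow _).symm]
        apply Real.sqrt_le_sqrt
        nlinarith [mul_nonneg (neg_nonneg.2 hm.le) (sq_nonneg x),
          mul_nonneg (mul_nonneg hxx.le hx0.le) (sq_nonneg x)]
      have hspos : 0 < Real.sqrt ((1 - x^2) * (1 - m*x^2)) := Real.sqrt_pos.2 hP
      have h12 : (0:ℝ) < (1 - x) ^ ((1/2) : ℝ) := Real.rpow_pos_of_pos hxx _
      rw [Real.norm_eq_abs, abs_div]
      rw [abs_of_pos hspos]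
      have hq' : |q x| ≤ C := by
        have := hC x ⟨hx0.le, hx1⟩; rwa [Real.norm_eq_abs] at this
      calc |q x| / Real.sqrt ((1 - x^2) * (1 - m*x^2))
          ≤ C / (1 - x) ^ ((1/2) : ℝ) := by
            exact div_le_div₀ hC0 hq' h12 hsle
        _ = C * (1 - x) ^ (-(1/2) : ℝ) := by
            rw [Real.rpow_neg hxx.le, div_eq_mul_inv]

/-- IBP identity: `∫₀¹ (1 − 2(1+m)ζ² + 3mζ⁴)/√P = 0` where `P = (1−ζ²)(1−mζ²)`. -/
lemma aux_ibp (m : ℝ) (hm : m < 0) :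
    ∫ ζ in (0:ℝ)..1,
      (1 - 2*(1+m)*ζ^2 + 3*m*ζ^4) / Real.sqrt ((1 - ζ^2) * (1 - m*ζ^2)) = 0 := by
  have key := intervalIntegral.integral_eq_sub_of_hasDeriv_right_of_le
    (f := fun x : ℝ => x * Real.sqrt ((1 - x^2) * (1 - m*x^2)))
    (f' := fun x : ℝ => (1 - 2*(1+m)*x^2 + 3*m*x^4) / Real.sqrt ((1 - x^2) * (1 - m*x^2)))
    (a := 0) (b := 1) (by norm_num)
    (by fun_prop)
    ?_
    (aux_integrable m hm (fun ζ => 1 - 2*(1+m)*ζ^2 + 3*m*ζ^4) (by continuity))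
  · rw [key]; norm_num
  · intro x hx
    obtain ⟨hx0, hx1⟩ := hx
    have hxx : (0:ℝ) < 1 - x := by linarith
    have hP : 0 < (1 - x^2) * (1 - m*x^2) := by
      nlinarith [mul_pos hxx (by linarith : (0:ℝ) < 1 + x),
        mul_nonneg (neg_nonneg.2 hm.le) (sq_nonneg x)]
    have hs : 0 < Real.sqrt ((1 - x^2) * (1 - m*x^2)) := Real.sqrt_pos.2 hP
    have hPder : HasDerivAt (fun x : ℝ => (1 - x^2) * (1 - m*x^2))
        ((-(2*x)) * (1 - m*x^2) + (1 - x^2) * (-(m*(2*x)))) x := by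
      have h1 : HasDerivAt (fun x : ℝ => 1 - x^2) (-(2*x)) x := by
        simpa using ((hasDerivAt_pow 2 x).const_sub 1)
      have h2 : HasDerivAt (fun x : ℝ => 1 - m*x^2) (-(m*(2*x))) x := by
        simpa [mul_comm] using (((hasDerivAt_pow 2 x).const_mul m).const_sub 1)
      exact h1.mul h2
    have hsder := (Real.hasDerivAt_sqrt hP.ne').comp x hPder
    have hmul := (hasDerivAt_id x).mul hsder
    have heq : (1 - 2*(1+m)*x^2 + 3*m*x^4) / Real.sqrt ((1 - x^2) * (1 - m*x^2))
        = 1 * Real.sqrt ((1 - x^2) * (1 - m*x^2)) + x *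
          (1 / (2 * Real.sqrt ((1 - x^2) * (1 - m*x^2))) *
            ((-(2*x)) * (1 - m*x^2) + (1 - x^2) * (-(m*(2*x))))) := by
      have hss : Real.sqrt ((1 - x^2) * (1 - m*x^2)) * Real.sqrt ((1 - x^2) * (1 - m*x^2))
          = (1 - x^2) * (1 - m*x^2) := Real.mul_self_sqrt hP.le
      rw [one_mul]
      field_simp
      linear_combination (-1 : ℝ) * hss
    simp only [Function.comp_apply, Function.comp, id_eq] at hmul
    rw [← heq] at hmul
    exact hmul.hasDerivWithinAt

set_option maxHeartbeats 1000000 in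
/-- For `m < 0` one has `(2 − m)·I₁(m)/I₀(m) > 1`. -/
theorem stmt19 (m : ℝ) (hm : m < 0) :
    1 < (2 - m) * (ellI 1 m / ellI 0 m) := by
  have hposP : ∀ x ∈ Set.Ioo (0:ℝ) 1, 0 < (1 - x^2) * (1 - m*x^2) := by
    intro x ⟨hx0, hx1⟩
    nlinarith [mul_pos (by linarith : (0:ℝ) < 1 - x) (by linarith : (0:ℝ) < 1 + x),
      mul_nonneg (neg_nonneg.2 hm.le) (sq_nonneg x)]
  have hInt0 : IntervalIntegrable (fun ζ => 1 / Real.sqrt ((1 - ζ^2) * (1 - m*ζ^2)))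
      MeasureTheory.volume 0 1 := aux_integrable m hm (fun _ => (1:ℝ)) continuous_const
  have hInt2 : IntervalIntegrable (fun ζ => ζ^2 / Real.sqrt ((1 - ζ^2) * (1 - m*ζ^2)))
      MeasureTheory.volume 0 1 := aux_integrable m hm (fun ζ => ζ^2) (by continuity)
  have hIntJ : IntervalIntegrable
      (fun ζ => ζ^2*(1-ζ^2) / Real.sqrt ((1 - ζ^2) * (1 - m*ζ^2)))
      MeasureTheory.volume 0 1 := aux_integrable m hm (fun ζ => ζ^2*(1-ζ^2)) (by continuity)
  have hI0 : ellI 0 m = ∫ ζ in (0:ℝ)..1, (1:ℝ) / Real.sqrt ((1 - ζ^2) * (1 - m*ζ^2)) := by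
    unfold ellI; norm_num
  have hI1 : ellI 1 m = ∫ ζ in (0:ℝ)..1, ζ^2 / Real.sqrt ((1 - ζ^2) * (1 - m*ζ^2)) := by
    unfold ellI; norm_num
  set J := ∫ ζ in (0:ℝ)..1, ζ^2*(1-ζ^2) / Real.sqrt ((1 - ζ^2) * (1 - m*ζ^2)) with hJ
  have hJpos : 0 < J := by
    apply intervalIntegral.intervalIntegral_pos_of_pos_on hIntJ _ (by norm_num)
    intro x hx
    obtain ⟨hx0, hx1⟩ := hx
    have hs : 0 < Real.sqrt ((1 - x^2) * (1 - m*x^2)) :=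
      Real.sqrt_pos.2 (hposP x ⟨hx0, hx1⟩)
    apply div_pos _ hs
    have h2 : (0:ℝ) < 1 - x^2 := by nlinarith
    exact mul_pos (pow_pos hx0 2) h2
  have hI0pos : 0 < ellI 0 m := by
    rw [hI0]
    apply intervalIntegral.intervalIntegral_pos_of_pos_on hInt0 _ (by norm_num)
    intro x hx
    have hs : 0 < Real.sqrt ((1 - x^2) * (1 - m*x^2)) := Real.sqrt_pos.2 (hposP x hx)
    positivity
  -- the key identity: I₀ − (2−m)·I₁ − 3m·J = 0
  have hfun : (fun ζ : ℝ => (1 - 2*(1+m)*ζ^2 + 3*m*ζ^4) / Real.sqrt ((1 - ζ^2) * (1 - m*ζ^2)))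
      = fun ζ : ℝ => 1 / Real.sqrt ((1 - ζ^2) * (1 - m*ζ^2))
        - (2-m) * (ζ^2 / Real.sqrt ((1 - ζ^2) * (1 - m*ζ^2)))
        - 3*m * (ζ^2*(1-ζ^2) / Real.sqrt ((1 - ζ^2) * (1 - m*ζ^2))) := by
    funext ζ
    rw [mul_div_assoc', mul_div_assoc', div_sub_div_same, div_sub_div_same]
    congr 1
    ring
  have h0' := aux_ibp m hm
  rw [hfun] at h0'
  rw [intervalIntegral.integral_sub (hInt0.sub (hInt2.const_mul (2-m))) (hIntJ.const_mul (3*m)),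
    intervalIntegral.integral_sub hInt0 (hInt2.const_mul (2-m)),
    intervalIntegral.integral_const_mul, intervalIntegral.integral_const_mul] at h0'
  rw [← hI0, ← hI1, ← hJ] at h0'
  have hlt : ellI 0 m < (2-m) * ellI 1 m := by nlinarith
  rw [← mul_div_assoc, lt_div_iff₀ hI0pos]
  linarith [hlt]
end
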